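/- arXiv:2301.09590 — 11 statements merged into one kernel-verified Lean document; each statement's English description precedes it below -/
import Mathlib

section
/- Let q be a prime power, h ≥ 1, K ≥ 1, and let v_1, …, v_N be nonzero vectors of F_{q^h}^K whose F_{q^h}-span is all of F_{q^h}^K. Let C = {(x·v_1, …, x·v_N) : x ∈ F_{q^h}^K} ⊆ F_{q^h}^N be the code having the v_i as columns of a generator matrix (x·v denotes the standard bilinear form). Then every nonzero codeword of C is q-outer minimal if and only if ⟨v_1⟩_{F_{q^h}} ∪ … ∪ ⟨v_N⟩_{F_{q^h}} is an F_q-vectorial strong blocking set in F_{q^h}^K. -/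
/-!
Fix a nonzero `F_q`-linear functional `T : F_{q^h} → F_q`. Then `x ↦ (u ↦ T (x ⬝ᵥ u))` is an
`F_q`-isomorphism of `F_{q^h}^K` with its dual, so the `F_q`-hyperplanes are the kernels `H_x` of
these functionals, `x ≠ 0`, and `T (y ⬝ᵥ ·)` is an `F_q`-multiple of `T (x ⬝ᵥ ·)` iff `y ∈ F_q x`.
On a line `⟨v_i⟩`, the functional `T (y ⬝ᵥ ·)` vanishes on `⟨v_i⟩ ∩ H_x` iff
`y ⬝ᵥ v_i ∈ F_q (x ⬝ᵥ v_i)`. Hence, by duality, `⋃ ⟨v_i⟩ ∩ H_x` spans `H_x` iff every codeword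
that is coordinatewise an `F_q`-multiple of `(x ⬝ᵥ v_i)_i` is a global `F_q`-multiple of it,
which is the `q`-outer minimality of that codeword.
-/

open Module Matrix LinearMap

section Duality

variable {k V W : Type*} [Field k] [AddCommGroup V] [Module k V] [AddCommGroup W] [Module k W]

theorem Module.Dual.exists_eq_smul_of_ker_le {f g : Dual k V} (h : ker f ≤ ker g) :
    ∃ l : k, g = l • f := by
  have : g ∈ Submodule.span k (Set.range fun _ : Unit => f) :=
    mem_span_of_iInf_ker_le_ker (by simpa using h)
  obtain ⟨l, hl⟩ := Submodule.mem_span_singleton.1 (by simpa using this)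
  exact ⟨l, hl.symm⟩

theorem LinearMap.SeparatingLeft.injective {B : V →ₗ[k] W →ₗ[k] k} (hB : B.SeparatingLeft) :
    Function.Injective B :=
  ker_eq_bot.1 (separatingLeft_iff_ker_eq_bot.1 hB)

theorem LinearMap.SeparatingLeft.ker_le_ker_iff_exists_eq_smul {B : V →ₗ[k] W →ₗ[k] k}
    (hB : B.SeparatingLeft) (x y : V) : ker (B x) ≤ ker (B y) ↔ ∃ l : k, y = l • x := by
  constructor
  · intro h
    obtain ⟨l, hl⟩ := Dual.exists_eq_smul_of_ker_le h
    refine ⟨l, sub_eq_zero.1 (separatingLeft_iff_linear_nontrivial.1 hB _ ?_)⟩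
    rw [map_sub, map_smul, hl, sub_self]
  · rintro ⟨l, rfl⟩ w hw
    simp_all

theorem LinearMap.SeparatingLeft.surjective [FiniteDimensional k V] {B : V →ₗ[k] V →ₗ[k] k}
    (hB : B.SeparatingLeft) : Function.Surjective B :=
  (injective_iff_surjective_of_finrank_eq_finrank Subspace.dual_finrank_eq.symm).1 hB.injective

theorem Submodule.exists_ker_eq_of_finrank_eq_sub_one [FiniteDimensional k V] [Nontrivial V]
    {H : Submodule k V} (hH : finrank k H = finrank k V - 1) :
    ∃ f : Dual k V, f ≠ 0 ∧ ker f = H := by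
  have hpos : 0 < finrank k V := finrank_pos
  obtain ⟨f, hf, hle⟩ := H.exists_le_ker_of_lt_top (lt_top_of_finrank_lt_finrank (by omega))
  refine ⟨f, hf, (eq_of_le_of_finrank_eq hle ?_).symm⟩
  have := Dual.finrank_ker_add_one_of_ne_zero hf
  omega

theorem Submodule.span_eq_iff_forall_le_ker {S : Set V} {U : Submodule k V} (hSU : S ⊆ U) :
    span k S = U ↔ ∀ f : Dual k V, S ⊆ ker f → U ≤ ker f := by
  refine ⟨by rintro rfl f hf; exact span_le.2 hf, fun h => le_antisymm (span_le.2 hSU) ?_⟩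
  intro u hu
  by_contra hnot
  obtain ⟨f, hfu, hle⟩ := exists_le_ker_of_notMem hnot
  exact hfu (h f (subset_span.trans hle) hu)

end Duality

section Pairing

variable {k L ι κ : Type*} [Field k] [Field L] [Algebra k L] {T : Dual k L}

theorem separatingLeft_mul_compr₂ (hT : T ≠ 0) :
    ((LinearMap.mul k L).compr₂ T).SeparatingLeft := by
  intro a ha
  by_contra h0
  apply hT
  ext s
  simpa [mul_inv_cancel_left₀ h0] using ha (a⁻¹ * s)

theorem Module.Dual.forall_apply_mul_eq_zero_imp_iff (hT : T ≠ 0) {a b : L} :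
    (∀ t, T (a * t) = 0 → T (b * t) = 0) ↔ ∃ l : k, b = algebraMap k L l * a := by
  simp_rw [← Algebra.smul_def]
  exact (separatingLeft_mul_compr₂ hT).ker_le_ker_iff_exists_eq_smul a b

variable [Fintype ι]

variable (T) in
def dotForm : (ι → L) →ₗ[k] (ι → L) →ₗ[k] k := (dotProductBilin k k).compr₂ T

@[simp] theorem dotForm_apply (x u : ι → L) : dotForm T x u = T (x ⬝ᵥ u) := rfl

theorem separatingLeft_dotForm (hT : T ≠ 0) : (dotForm T : (ι → L) →ₗ[k] _).SeparatingLeft := by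
  classical
  intro x hx
  ext j
  apply separatingLeft_mul_compr₂ hT
  intro t
  simpa [dotProduct_single] using hx (Pi.single j t)

theorem lines_inter_ker_subset_ker_iff (hT : T ≠ 0) (v : κ → ι → L) (x y : ι → L) :
    (⋃ i, (Submodule.span L {v i} : Set (ι → L))) ∩ ker (dotForm T x) ⊆ ker (dotForm T y) ↔
      ∀ i, ∃ l : k, y ⬝ᵥ v i = algebraMap k L l * x ⬝ᵥ v i := by
  simp only [Set.iUnion_inter, Set.iUnion_subset_iff]
  refine forall_congr' fun i => ?_
  rw [← Module.Dual.forall_apply_mul_eq_zero_imp_iff hT]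
  simp [Set.subset_def, Submodule.mem_span_singleton, dotProduct_smul, mul_comm]

theorem span_lines_inter_ker_eq_iff [FiniteDimensional k L] (hT : T ≠ 0) (v : κ → ι → L)
    (x : ι → L) :
    Submodule.span k ((⋃ i, (Submodule.span L {v i} : Set (ι → L))) ∩ ker (dotForm T x)) =
        ker (dotForm T x) ↔
      ∀ y : ι → L, (∀ i, ∃ l : k, y ⬝ᵥ v i = algebraMap k L l * x ⬝ᵥ v i) →
        ∃ l : k, y = algebraMap k L l • x := by
  rw [Submodule.span_eq_iff_forall_le_ker Set.inter_subset_right,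
    (separatingLeft_dotForm hT).surjective.forall]
  simp_rw [lines_inter_ker_subset_ker_iff hT,
    (separatingLeft_dotForm hT).ker_le_ker_iff_exists_eq_smul, algebraMap_smul]

end Pairing

theorem injective_dotProduct_of_span_eq_top {R ι κ : Type*} [CommRing R] [Fintype ι]
    {v : κ → ι → R}
    (hv : Submodule.span R (Set.range v) = ⊤) :
    Function.Injective fun (x : ι → R) (i : κ) => x ⬝ᵥ v i := by
  intro x y hxy
  rw [← sub_eq_zero]
  refine dotProduct_eq_zero _ fun w => ?_
  have hw : w ∈ ker (dotProductBilin R R (x - y)) := by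
    refine (Submodule.span_le.2 ?_) (hv ▸ Submodule.mem_top)
    rintro _ ⟨i, rfl⟩
    simp [congrFun hxy i]
  exact hw

theorem exists_eq_algebraMap_mul_iff {k L : Type*} [CommSemiring k] [Semiring L] [Algebra k L]
    {a b : L} : (∃ l : k, b = algebraMap k L l * a) ↔
      (b ≠ 0 → a ≠ 0) ∧ (a ≠ 0 → ∃ l : k, b = algebraMap k L l * a) := by
  refine ⟨fun h => ⟨?_, fun _ => h⟩, fun ⟨hba, h⟩ => ?_⟩
  · rintro hb rfl
    obtain ⟨l, rfl⟩ := h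
    simp at hb
  · by_cases ha : a = 0
    · exact ⟨0, by simpa [ha] using not_imp_not.1 hba⟩
    · exact h ha

theorem Module.finrank_eq_of_card_eq_pow {k V : Type*} [Field k] [AddCommGroup V] [Module k V]
    [Fintype k] [Fintype V] {q h : ℕ} (hk : Fintype.card k = q) (hV : Fintype.card V = q ^ h) :
    finrank k V = h := by
  have hcard := card_eq_pow_finrank (K := k) (V := V)
  rw [hk, hV] at hcard
  exact Nat.pow_right_injective (hk ▸ Fintype.one_lt_card) hcard.symm

theorem stmt_1_general (q h K N : ℕ)
    (Fq FL : Type) [Field Fq] [Field FL] [Algebra Fq FL] [Fintype Fq] [Fintype FL]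
    (hcard_q : Fintype.card Fq = q) (hcard_L : Fintype.card FL = q ^ h)
    (v : Fin N → (Fin K → FL))
    (hspan : Submodule.span FL (Set.range v) = ⊤)
    (C : Set (Fin N → FL))
    (hC : C = {c | ∃ x : Fin K → FL, c = fun i => ∑ j, x j * v i j}) :
    (∀ c ∈ C, c ≠ 0 → ∀ c' ∈ C,
        (∀ i, c' i ≠ 0 → c i ≠ 0) →
        (∀ i, c i ≠ 0 → ∃ l : Fq, c' i = algebraMap Fq FL l * c i) →
        ∃ l : Fq, c' = algebraMap Fq FL l • c)
      ↔
    (∀ H : Submodule Fq (Fin K → FL), Module.finrank Fq H = K * h - 1 →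
      Submodule.span Fq ((⋃ i, (Submodule.span FL {v i} : Set (Fin K → FL)))
        ∩ (H : Set (Fin K → FL))) = H) := by
  replace hC : C = {c | ∃ x : Fin K → FL, c = fun i => x ⬝ᵥ v i} := hC
  subst hC
  have hdim : finrank Fq (Fin K → FL) = K * h := by
    simp [finrank_pi_fintype, finrank_eq_of_card_eq_pow hcard_q hcard_L, mul_comm]
  obtain ⟨T, hT⟩ := exists_ne (0 : Dual Fq FL)
  have hcode := injective_dotProduct_of_span_eq_top hspan
  have hcode_ne_zero (x : Fin K → FL) : (fun i => x ⬝ᵥ v i) ≠ 0 ↔ x ≠ 0 :=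
    hcode.ne_iff' (by ext; simp)
  have hform_ne_zero (x : Fin K → FL) : dotForm T x ≠ 0 ↔ x ≠ 0 :=
    map_ne_zero_iff _ (separatingLeft_dotForm hT).injective
  constructor
  · intro hmin H hH
    rcases subsingleton_or_nontrivial (Fin K → FL) with _ | _
    · exact Subsingleton.elim _ _
    obtain ⟨f, hf, rfl⟩ := Submodule.exists_ker_eq_of_finrank_eq_sub_one (hH.trans (by rw [hdim]))
    obtain ⟨x, rfl⟩ := (separatingLeft_dotForm hT).surjective f
    refine (span_lines_inter_ker_eq_iff hT v x).2 fun y hy => ?_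
    obtain ⟨hsupp, hratio⟩ := forall_and.1 fun i => exists_eq_algebraMap_mul_iff.1 (hy i)
    obtain ⟨l, hl⟩ := hmin _ ⟨x, rfl⟩ ((hcode_ne_zero x).2 ((hform_ne_zero x).1 hf)) _ ⟨y, rfl⟩
      hsupp hratio
    exact ⟨l, hcode (hl.trans (by ext; simp only [Pi.smul_apply, smul_dotProduct]))⟩
  · rintro hblock _ ⟨x, rfl⟩ hx _ ⟨y, rfl⟩ hsupp hratio
    have hker :=
      Dual.finrank_ker_add_one_of_ne_zero ((hform_ne_zero x).2 ((hcode_ne_zero x).1 hx))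
    obtain ⟨l, rfl⟩ := (span_lines_inter_ker_eq_iff hT v x).1 (hblock _ (by omega)) y
      fun i => exists_eq_algebraMap_mul_iff.2 ⟨hsupp i, hratio i⟩
    exact ⟨l, by ext; simp only [Pi.smul_apply, smul_dotProduct, smul_eq_mul]⟩

/-- A nondegenerate `[N,K]_{q^h}` code (with generator matrix columns `v i`) has all of its
nonzero codewords `q`-outer minimal if and only if the union of the one-dimensional
`F_{q^h}`-subspaces spanned by the `v i` is an `F_q`-vectorial strong blocking set. -/
theorem stmt_1 (q h K N : ℕ) (hq : IsPrimePow q) (hh : 1 ≤ h) (hK : 1 ≤ K)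
    (Fq FL : Type) [Field Fq] [Field FL] [Algebra Fq FL] [Fintype Fq] [Fintype FL]
    (hcard_q : Fintype.card Fq = q) (hcard_L : Fintype.card FL = q ^ h)
    (v : Fin N → (Fin K → FL)) (hv : ∀ i, v i ≠ 0)
    (hspan : Submodule.span FL (Set.range v) = ⊤)
    (C : Set (Fin N → FL))
    (hC : C = {c | ∃ x : Fin K → FL, c = fun i => ∑ j, x j * v i j}) :
    (∀ c ∈ C, c ≠ 0 → ∀ c' ∈ C,
        (∀ i, c' i ≠ 0 → c i ≠ 0) →
        (∀ i, c i ≠ 0 → ∃ l : Fq, c' i = algebraMap Fq FL l * c i) →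
        ∃ l : Fq, c' = algebraMap Fq FL l • c)
      ↔
    (∀ H : Submodule Fq (Fin K → FL), Module.finrank Fq H = K * h - 1 →
      Submodule.span Fq ((⋃ i, (Submodule.span FL {v i} : Set (Fin K → FL)))
        ∩ (H : Set (Fin K → FL))) = H) :=
  stmt_1_general q h K N Fq FL hcard_q hcard_L v hspan C hC
end

section
/- (Outer AB condition) Let q be a prime power, h ≥ 1, and let C be a nonzero F_{q^h}-linear subspace of F_{q^h}^N. Let D = min{wt(c) : c ∈ C, c ≠ 0} be the minimum distance of C and W = max{wt(c) : c ∈ C} its maximum weight. If W·(q−1) < D·q, then every nonzero codeword of C is q-outer minimal. -/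
/-- Outer AB condition: if `W/D < q/(q-1)` (with `D` the minimum distance and `W` the maximum
weight of a nonzero code `C ⊆ F_{q^h}^N`), then every nonzero codeword of `C` is
`q`-outer minimal. -/
theorem stmt_2 (q h N D W : ℕ) (hq : IsPrimePow q) (hh : 1 ≤ h)
    (Fq FL : Type) [Field Fq] [Field FL] [Algebra Fq FL] [Fintype Fq] [Fintype FL]
    (hcard_q : Fintype.card Fq = q) (hcard_L : Fintype.card FL = q ^ h)
    (C : Submodule FL (Fin N → FL)) (hC : C ≠ ⊥)
    (hD : IsLeast {w : ℕ | ∃ c ∈ C, c ≠ 0 ∧ w = Nat.card {i | c i ≠ 0}} D)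
    (hW : IsGreatest {w : ℕ | ∃ c ∈ C, w = Nat.card {i | c i ≠ 0}} W)
    (hAB : W * (q - 1) < D * q) :
    ∀ c ∈ C, c ≠ 0 → ∀ c' ∈ C,
      (∀ i, c' i ≠ 0 → c i ≠ 0) →
      (∀ i, c i ≠ 0 → ∃ l : Fq, c' i = algebraMap Fq FL l * c i) →
      ∃ l : Fq, c' = algebraMap Fq FL l • c := by
  classical
  intro c hc hc0 c' hc' hsupp hl
  have wt_eq : ∀ v : Fin N → FL, Nat.card {i | v i ≠ 0} =
      (Finset.univ.filter (fun i => v i ≠ 0)).card := by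
    intro v
    simp [Nat.card_eq_fintype_card, Fintype.card_subtype]
  set S := Finset.univ.filter (fun i => c i ≠ 0) with hS
  set lam : Fin N → Fq := fun i => if h : c i ≠ 0 then Classical.choose (hl i h) else 0
    with hlamdef
  have hlam : ∀ i, c i ≠ 0 → c' i = algebraMap Fq FL (lam i) * c i := by
    intro i hi
    simp only [hlamdef, dif_pos hi]
    exact Classical.choose_spec (hl i hi)
  by_contra hno
  push_neg at hno
  have key : ∀ l : Fq, D ≤ (S.filter (fun i => lam i ≠ l)).card := by
    intro l
    have hmem : c' - algebraMap Fq FL l • c ∈ C := C.sub_mem hc' (C.smul_mem _ hc)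
    have hne : c' - algebraMap Fq FL l • c ≠ 0 := by
      intro hz
      exact hno l (by rwa [sub_eq_zero] at hz)
    have hDle := hD.2 ⟨_, hmem, hne, rfl⟩
    rw [wt_eq] at hDle
    refine hDle.trans (le_of_eq ?_)
    congr 1
    ext i
    simp only [Finset.mem_filter, Finset.mem_univ, true_and, hS, Pi.sub_apply, Pi.smul_apply,
      smul_eq_mul]
    by_cases hci : c i = 0
    · have hci' : c' i = 0 := by
        by_contra hx; exact hsupp i hx hci
      simp [hci, hci']
    · have : c' i - algebraMap Fq FL l * c i
          = algebraMap Fq FL (lam i - l) * c i := by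
        rw [hlam i hci, map_sub, sub_mul]
      rw [this]
      constructor
      · intro hx
        refine ⟨hci, fun he => hx ?_⟩
        simp [he]
      · intro ⟨_, hne'⟩
        exact mul_ne_zero ((map_ne_zero _).mpr (sub_ne_zero.mpr hne')) hci
  -- counting
  have hfib : S.card = ∑ l : Fq, (S.filter (fun i => lam i = l)).card :=
    Finset.card_eq_sum_card_fiberwise (fun i _ => Finset.mem_univ (lam i))
  have hsplit : ∀ l : Fq, (S.filter (fun i => lam i = l)).card
      + (S.filter (fun i => lam i ≠ l)).card = S.card := by
    intro l
    exact Finset.card_filter_add_card_filter_not (fun i => lam i = l)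
  have htot : S.card + ∑ l : Fq, (S.filter (fun i => lam i ≠ l)).card = q * S.card := by
    conv_lhs => rw [hfib]
    rw [← Finset.sum_add_distrib]
    simp only [hsplit]
    rw [Finset.sum_const, Finset.card_univ, hcard_q, smul_eq_mul]
  have hDsum : q * D ≤ ∑ l : Fq, (S.filter (fun i => lam i ≠ l)).card := by
    calc q * D = ∑ _l : Fq, D := by
          rw [Finset.sum_const, Finset.card_univ, hcard_q, smul_eq_mul]
      _ ≤ _ := Finset.sum_le_sum (fun l _ => key l)
  have hSW : S.card ≤ W := hW.2 ⟨c, hc, (wt_eq c).symm⟩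
  have hq1 : 1 ≤ q := hq.one_lt.le
  have hqS : (q - 1) * S.card + S.card = q * S.card := by
    rw [Nat.sub_one_mul, Nat.sub_add_cancel (Nat.le_mul_of_pos_left _ (by omega))]
  have hsum_eq : (∑ l : Fq, (S.filter (fun i => lam i ≠ l)).card) = (q - 1) * S.card := by
    rw [← hqS, add_comm ((q - 1) * S.card) S.card] at htot
    exact Nat.add_left_cancel htot
  have h1 : q * D ≤ (q - 1) * S.card := hDsum.trans_eq hsum_eq
  have h2 : (q - 1) * S.card ≤ (q - 1) * W := Nat.mul_le_mul_left _ hSW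
  have : D * q < D * q := by
    calc D * q = q * D := Nat.mul_comm _ _
      _ ≤ (q - 1) * W := h1.trans h2
      _ = W * (q - 1) := Nat.mul_comm _ _
      _ < D * q := hAB
  exact absurd this (lt_irrefl _)
end

section
/- Let q be a prime power, h ≥ 1, K ≥ 1, and let C be a K-dimensional F_{q^h}-linear subspace of F_{q^h}^N that is nondegenerate (for every coordinate i ∈ {1,…,N} there is c ∈ C with c_i ≠ 0) and such that every nonzero codeword of C is q-outer minimal. Then the minimum distance of C satisfies d(C) ≥ ⌈((q−1)(Kh−1)+1) / ((q−1)(h−1)+1)⌉, i.e., every nonzero codeword c ∈ C has wt(c) ≥ ⌈((q−1)(Kh−1)+1) / ((q−1)(h−1)+1)⌉. -/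
/-!
Fix a nonzero codeword `c` with support `S`, a coordinate `i₀ ∈ S`, and view `C` as an
`F_q`-space of dimension `Kh`. If `y ∈ C` satisfies `y i₀ = c i₀` and `y i ∈ F_q^× • c i` for the
other `i ∈ S`, then `c` is an `F_q`-coordinatewise multiple of `y` supported inside its support,
so outer minimality of `y` gives `c = λ • y`, and `λ = 1` at `i₀`. Each of these conditions fails
exactly on a union of few affine `F_q`-hyperplanes of `F_{q^h}`: `h(q-1)` of them for `≠ c i₀`,
`(h-1)(q-1)+1` for `∉ F_q^× • c i`. Pulled back to `C`, they cover `C \ {c}` and miss `c`.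
By Jamison's theorem (Chevalley's lemma applied to the product of the affine forms) such a cover
of an `n`-dimensional space needs at least `n(q-1)` hyperplanes; with `n = Kh` this rearranges to
the bound.
-/

open MvPolynomial Finset Module

section Hyperplanes

variable {F V : Type*} [Field F] [AddCommGroup V] [Module F V]

/-- A pair `(ℓ, a)` stands for the affine hyperplane `{v | ℓ v = a}` (empty if `ℓ = 0`, `a ≠ 0`). -/
def hyperplaneUnion (H : Finset (Dual F V × F)) : Set V := {v | ∃ p ∈ H, p.1 v = p.2}

@[simp]
theorem mem_hyperplaneUnion {H : Finset (Dual F V × F)} {v : V} :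
    v ∈ hyperplaneUnion H ↔ ∃ p ∈ H, p.1 v = p.2 :=
  Iff.rfl

theorem hyperplaneUnion_union [DecidableEq (Dual F V × F)] (H H' : Finset (Dual F V × F)) :
    hyperplaneUnion (H ∪ H') = hyperplaneUnion H ∪ hyperplaneUnion H' := by
  ext v; simp [or_and_right, exists_or]

theorem hyperplaneUnion_biUnion [DecidableEq (Dual F V × F)] {ι : Type*} (s : Finset ι)
    (H : ι → Finset (Dual F V × F)) :
    hyperplaneUnion (s.biUnion H) = ⋃ i ∈ s, hyperplaneUnion (H i) := by
  ext v; simp only [mem_hyperplaneUnion, mem_biUnion, Set.mem_iUnion, exists_prop]; aesop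

theorem hyperplaneUnion_image_dualMap [DecidableEq (Dual F V × F)] {W : Type*} [AddCommGroup W]
    [Module F W] (f : V →ₗ[F] W) (H : Finset (Dual F W × F)) :
    hyperplaneUnion (H.image (Prod.map f.dualMap id)) = f ⁻¹' hyperplaneUnion H := by
  ext v; simp

theorem totalDegree_linearForm_sub_C_le {σ : Type*} [Fintype σ] (a : σ → F) (b : F) :
    (∑ k, C (a k) * X k - C b : MvPolynomial σ F).totalDegree ≤ 1 :=
  (totalDegree_sub_C_le _ _).trans
    (IsHomogeneous.sum _ _ 1 fun k _ => isHomogeneous_C_mul_X (a k) k).totalDegree_le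

theorem finrank_mul_card_sub_one_le_card_of_hyperplaneUnion_eq_compl_singleton [Fintype F]
    [FiniteDimensional F V] (H : Finset (Dual F V × F)) (v₀ : V)
    (hH : hyperplaneUnion H = {v₀}ᶜ) :
    finrank F V * (Fintype.card F - 1) ≤ #H := by
  classical
  let b := Module.finBasis F V
  let P : MvPolynomial (Fin (finrank F V)) F := ∏ p ∈ H, (∑ k, C (p.1 (b k)) * X k - C p.2)
  have heval : ∀ x, eval x P = ∏ p ∈ H, (p.1 (b.equivFun.symm x) - p.2) := by
    intro x
    simp [P, map_prod, b.equivFun_symm_apply, map_sum, mul_comm]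
  have hzero : ∀ v, ∏ p ∈ H, (p.1 v - p.2) = 0 ↔ v ≠ v₀ := by
    intro v
    rw [prod_eq_zero_iff, ← Set.mem_compl_singleton_iff, ← hH]
    simp [sub_eq_zero]
  have hsum : ∑ x, eval x P ≠ 0 := by
    rw [sum_eq_single (b.equivFun v₀)]
    · rw [heval, LinearEquiv.symm_apply_apply, Ne, hzero, not_not]
    · intro x _ hx
      rw [heval, hzero]
      exact fun h => hx (by rw [← h, LinearEquiv.apply_symm_apply])
    · simp
  have hdeg : P.totalDegree ≤ #H :=
    (totalDegree_finsetProd _ _).trans <| by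
      simpa using sum_le_sum fun (p : Dual F V × F) _ =>
        totalDegree_linearForm_sub_C_le (fun k => p.1 (b k)) p.2
  by_contra hlt
  refine hsum (sum_eval_eq_zero P ?_)
  rw [Fintype.card_fin, mul_comm]
  omega

theorem exists_hyperplaneUnion_eq_compl_singleton [Fintype F] [FiniteDimensional F V] (u : V) :
    ∃ H : Finset (Dual F V × F), #H ≤ finrank F V * (Fintype.card F - 1) ∧
      hyperplaneUnion H = {u}ᶜ := by
  classical
  let b := Module.finBasis F V
  refine ⟨(univ.sigma fun j => univ.erase (b.repr u j)).image fun x => (b.coord x.1, x.2), ?_, ?_⟩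
  · refine card_image_le.trans ?_
    simp [card_sigma, card_erase_of_mem]
  · ext v
    simp only [mem_hyperplaneUnion, exists_mem_image, Sigma.exists, mem_sigma, mem_univ,
      mem_erase, true_and, Basis.coord_apply, and_true, exists_eq_right',
      Set.mem_compl_singleton_iff, Ne, b.ext_elem_iff, not_forall]

theorem exists_hyperplaneUnion_eq_compl_units_smul [Fintype F] [FiniteDimensional F V] {u : V}
    (hu : u ≠ 0) :
    ∃ H : Finset (Dual F V × F), #H ≤ (finrank F V - 1) * (Fintype.card F - 1) + 1 ∧
      hyperplaneUnion H = {v | ∃ l : F, l ≠ 0 ∧ l • u = v}ᶜ := by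
  classical
  have hli : LinearIndepOn F id ({u} : Set V) := .singleton hu
  let b := Basis.extend hli
  let j₁ : hli.extend (Set.subset_univ _) := ⟨u, hli.subset_extend _ rfl⟩
  have hb : b j₁ = u := Basis.extend_apply_self hli j₁
  have : Fintype (hli.extend (Set.subset_univ _)) := FiniteDimensional.fintypeBasisIndex b
  -- `v ∈ F^× • u` iff its `u`-coordinate is nonzero and all other coordinates vanish
  refine ⟨insert (b.coord j₁, 0) (((univ.erase j₁) ×ˢ (univ.erase 0)).image
    fun x => (b.coord x.1, x.2)), ?_, ?_⟩
  · refine (card_insert_le _ _).trans ?_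
    rw [add_le_add_iff_right]
    refine card_image_le.trans ?_
    simp [card_erase_of_mem, finrank_eq_card_basis b]
  · ext v
    simp only [mem_hyperplaneUnion, exists_mem_insert, exists_mem_image, Prod.exists,
      mem_product, mem_univ, mem_erase, Basis.coord_apply, Set.mem_compl_iff, Set.mem_ofPred,
      and_true, exists_eq_right']
    rw [← not_iff_not, not_not, not_or, not_exists]
    simp only [not_and, not_not]
    constructor
    · rintro ⟨hj₁, hj⟩
      refine ⟨_, hj₁, b.ext_elem fun j => ?_⟩
      rcases eq_or_ne j j₁ with rfl | hj'
      · simp [← hb]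
      · simp [← hb, hj j hj', hj'.symm]
    · rintro ⟨l, hl, rfl⟩
      simp [← hb, Finsupp.single_apply, hl, eq_comm]

end Hyperplanes

def IsOuterMinimal (Fq : Type*) {FL ι : Type*} [CommSemiring Fq] [Semiring FL] [Algebra Fq FL]
    (C : Submodule FL (ι → FL)) (c : ι → FL) : Prop :=
  ∀ c' ∈ C, (∀ i, c' i ≠ 0 → c i ≠ 0) →
    (∀ i, c i ≠ 0 → ∃ l : Fq, c' i = algebraMap Fq FL l * c i) →
    ∃ l : Fq, c' = algebraMap Fq FL l • c

section OuterMinimal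

variable {Fq FL ι : Type*} [Field Fq] [Field FL] [Algebra Fq FL] {C : Submodule FL (ι → FL)}
  {c y : ι → FL}

theorem IsOuterMinimal.exists_eq_smul (hy : IsOuterMinimal Fq C y) (hc : c ∈ C)
    (h : ∀ i, c i ≠ 0 → ∃ l : Fq, l ≠ 0 ∧ l • c i = y i) :
    ∃ l : Fq, c = algebraMap Fq FL l • y := by
  refine hy c hc (fun i hci => ?_) (fun i _ => ?_)
  · obtain ⟨l, hl, hyi⟩ := h i hci
    exact hyi ▸ smul_ne_zero hl hci
  · by_cases hci : c i = 0
    · exact ⟨0, by simp [hci]⟩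
    · obtain ⟨l, hl, hyi⟩ := h i hci
      refine ⟨l⁻¹, ?_⟩
      rw [← hyi, Algebra.smul_def, ← mul_assoc, ← map_mul, inv_mul_cancel₀ hl, map_one, one_mul]

theorem IsOuterMinimal.eq_of_apply_eq (hy : IsOuterMinimal Fq C y) (hc : c ∈ C) {i₀ : ι}
    (hci₀ : c i₀ ≠ 0) (hyi₀ : y i₀ = c i₀)
    (h : ∀ i, c i ≠ 0 → ∃ l : Fq, l ≠ 0 ∧ l • c i = y i) : y = c := by
  obtain ⟨l, hl⟩ := hy.exists_eq_smul hc h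
  have hl1 : algebraMap Fq FL l = 1 := by
    have := congrFun hl i₀
    rw [Pi.smul_apply, hyi₀, smul_eq_mul] at this
    exact (mul_eq_right₀ hci₀).1 this.symm
  rw [hl, hl1, one_smul]

theorem eq_iff_of_forall_isOuterMinimal (houter : ∀ y ∈ C, y ≠ 0 → IsOuterMinimal Fq C y)
    (hc : c ∈ C) (hy : y ∈ C) {i₀ : ι} (hci₀ : c i₀ ≠ 0) :
    y = c ↔ y i₀ = c i₀ ∧ ∀ i, c i ≠ 0 → i ≠ i₀ → ∃ l : Fq, l ≠ 0 ∧ l • c i = y i := by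
  constructor
  · rintro rfl
    exact ⟨rfl, fun i _ _ => ⟨1, one_ne_zero, one_smul _ _⟩⟩
  · rintro ⟨hyi₀, h⟩
    have hy0 : y ≠ 0 := fun hy0 => hci₀ (by rw [← hyi₀, hy0, Pi.zero_apply])
    refine (houter y hy hy0).eq_of_apply_eq hc hci₀ hyi₀ fun i hci => ?_
    rcases eq_or_ne i i₀ with rfl | hi
    · exact ⟨1, one_ne_zero, by rw [one_smul, hyi₀]⟩
    · exact h i hci hi

end OuterMinimal

theorem finrank_mul_card_sub_one_le_of_isOuterMinimal {Fq FL ι : Type*} [Field Fq] [Fintype Fq]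
    [Field FL] [Algebra Fq FL] [Finite FL] [Fintype ι] [DecidableEq FL]
    {C : Submodule FL (ι → FL)} (houter : ∀ y ∈ C, y ≠ 0 → IsOuterMinimal Fq C y) {c : ι → FL}
    (hc : c ∈ C) (hc0 : c ≠ 0) :
    finrank Fq C * (Fintype.card Fq - 1) ≤
      (#{i | c i ≠ 0} - 1) * ((finrank Fq FL - 1) * (Fintype.card Fq - 1) + 1) +
        finrank Fq FL * (Fintype.card Fq - 1) := by
  classical
  obtain ⟨i₀, hi₀⟩ := Function.ne_iff.mp hc0
  let ρ : ι → C →ₗ[Fq] FL := fun i => LinearMap.proj i ∘ₗ C.subtype.restrictScalars Fq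
  have hρ : ∀ i (y : C), ρ i y = (y : ι → FL) i := fun _ _ => rfl
  choose! Hu hHu_card hHu using
    fun (u : FL) (hu : u ≠ 0) => exists_hyperplaneUnion_eq_compl_units_smul (F := Fq) hu
  obtain ⟨Hp, hHp_card, hHp⟩ := exists_hyperplaneUnion_eq_compl_singleton (F := Fq) (c i₀)
  let S := ({i | c i ≠ 0} : Finset ι).erase i₀
  have hcS : ∀ i ∈ S, c i ≠ 0 := fun i hi => by simpa using (mem_erase.mp hi).2
  let H := (S.biUnion fun i => (Hu (c i)).image (Prod.map (ρ i).dualMap id)) ∪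
    Hp.image (Prod.map (ρ i₀).dualMap id)
  have hH : hyperplaneUnion H = {⟨c, hc⟩}ᶜ := by
    ext y
    simp only [H, hyperplaneUnion_union, hyperplaneUnion_biUnion, hyperplaneUnion_image_dualMap,
      Set.mem_union, Set.mem_iUnion, Set.mem_preimage, hHp, hρ, exists_prop,
      Set.mem_compl_singleton_iff, Ne, Subtype.ext_iff,
      eq_iff_of_forall_isOuterMinimal houter hc y.2 hi₀]
    rw [not_and_or, or_comm]
    refine or_congr_right ?_
    simp only [not_forall, exists_prop]
    refine exists_congr fun i => ?_
    simp only [S, mem_erase, mem_filter, mem_univ, true_and, and_assoc]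
    constructor
    · rintro ⟨hi, hci, hyi⟩
      exact ⟨hci, hi, by rwa [hHu _ hci] at hyi⟩
    · rintro ⟨hci, hi, hyi⟩
      exact ⟨hi, hci, by rwa [hHu _ hci]⟩
  calc finrank Fq C * (Fintype.card Fq - 1) ≤ #H :=
        finrank_mul_card_sub_one_le_card_of_hyperplaneUnion_eq_compl_singleton H _ hH
    _ ≤ ∑ i ∈ S, #(Hu (c i)) + #Hp := by
      refine (card_union_le _ _).trans (add_le_add (card_biUnion_le.trans ?_) card_image_le)
      exact sum_le_sum fun i _ => card_image_le
    _ ≤ _ := by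
      refine add_le_add ?_ hHp_card
      rw [← card_erase_of_mem (by simpa using hi₀), ← smul_eq_mul]
      exact sum_le_card_nsmul _ _ _ fun i hi => hHu_card _ (hcS i hi)

theorem mul_sub_one_add_one_le_mul_of_mul_le (p m d w : ℕ) (hw : 1 ≤ w)
    (h : m * p ≤ (w - 1) * ((d - 1) * p + 1) + d * p) :
    p * (m - 1) + 1 ≤ (p * (d - 1) + 1) * w := by
  obtain ⟨w, rfl⟩ := Nat.exists_eq_add_of_le' hw
  rcases m with _ | m
  · simp only [zero_tsub, mul_zero, zero_add]
    exact Nat.succ_le_of_lt (by positivity)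
  rcases d with _ | d
  · simp only [zero_tsub, zero_mul, zero_add, mul_one, add_tsub_cancel_right] at h ⊢
    nlinarith
  simp only [Nat.add_sub_cancel] at h ⊢
  nlinarith

theorem stmt_3_general (q h K N : ℕ)
    (Fq FL : Type) [Field Fq] [Field FL] [Algebra Fq FL] [Fintype Fq] [Fintype FL]
    (hcard_q : Fintype.card Fq = q) (hcard_L : Fintype.card FL = q ^ h)
    (C : Submodule FL (Fin N → FL)) (hdim : Module.finrank FL C = K)
    (houter : ∀ c ∈ C, c ≠ 0 → ∀ c' ∈ C,
      (∀ i, c' i ≠ 0 → c i ≠ 0) →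
      (∀ i, c i ≠ 0 → ∃ l : Fq, c' i = algebraMap Fq FL l * c i) →
      ∃ l : Fq, c' = algebraMap Fq FL l • c) :
    ∀ c ∈ C, c ≠ 0 →
      ((q - 1) * (K * h - 1) + 1) ⌈/⌉ ((q - 1) * (h - 1) + 1) ≤ Nat.card {i | c i ≠ 0} := by
  classical
  intro c hc hc0
  have hFL : finrank Fq FL = h := by
    refine Nat.pow_right_injective (hcard_q ▸ Fintype.one_lt_card) ?_
    simpa only [hcard_q, hcard_L] using (Module.card_eq_pow_finrank (K := Fq) (V := FL)).symm
  have hC : finrank Fq C = K * h := by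
    rw [← Module.finrank_mul_finrank Fq FL C, hFL, hdim, mul_comm]
  have hbound := finrank_mul_card_sub_one_le_of_isOuterMinimal houter hc hc0
  rw [hC, hFL, hcard_q] at hbound
  have hw : Nat.card {i | c i ≠ 0} = #{i | c i ≠ 0} := by
    rw [Nat.card_eq_fintype_card, Fintype.card_subtype]
    rfl
  have hw1 : 1 ≤ #{i | c i ≠ 0} :=
    card_pos.mpr (by simpa [Finset.Nonempty, Function.ne_iff] using hc0)
  rw [hw, ceilDiv_le_iff_le_mul (by positivity)]
  exact mul_sub_one_add_one_le_mul_of_mul_le _ _ _ _ hw1 hbound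

/-- Lower bound on the minimum distance of an outer minimal code: if `C` is a nondegenerate
`K`-dimensional code over `F_{q^h}` all of whose nonzero codewords are `q`-outer minimal, then
every nonzero codeword has weight at least `⌈((q-1)(Kh-1)+1) / ((q-1)(h-1)+1)⌉`. -/
theorem stmt_3 (q h K N : ℕ) (hq : IsPrimePow q) (hh : 1 ≤ h) (hK : 1 ≤ K)
    (Fq FL : Type) [Field Fq] [Field FL] [Algebra Fq FL] [Fintype Fq] [Fintype FL]
    (hcard_q : Fintype.card Fq = q) (hcard_L : Fintype.card FL = q ^ h)
    (C : Submodule FL (Fin N → FL)) (hdim : Module.finrank FL C = K)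
    (hnondeg : ∀ i : Fin N, ∃ c ∈ C, c i ≠ 0)
    (houter : ∀ c ∈ C, c ≠ 0 → ∀ c' ∈ C,
      (∀ i, c' i ≠ 0 → c i ≠ 0) →
      (∀ i, c i ≠ 0 → ∃ l : Fq, c' i = algebraMap Fq FL l * c i) →
      ∃ l : Fq, c' = algebraMap Fq FL l • c) :
    ∀ c ∈ C, c ≠ 0 →
      ((q - 1) * (K * h - 1) + 1) ⌈/⌉ ((q - 1) * (h - 1) + 1) ≤ Nat.card {i | c i ≠ 0} :=
  stmt_3_general q h K N Fq FL hcard_q hcard_L C hdim houter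
end

section
/- Let q be a prime power, k ≥ 2, 1 ≤ h ≤ k, and let W_1, …, W_N be pairwise distinct h-dimensional F_q-subspaces of F_q^k that do not satisfy the avoidance property, i.e., there exists an F_q-subspace Λ of F_q^k with dim Λ = k−2 such that dim(W_i ∩ Λ) ≥ h−1 for every i ∈ {1,…,N}. If W_1 ∪ … ∪ W_N is a strong blocking set in F_q^k, then N ≥ q+1. -/
open Submodule Module

private lemma aux_finrank_sup_span {F V : Type*} [Field F] [AddCommGroup V] [Module F V]
    [FiniteDimensional F V] (M : Submodule F V) {x : V} (hx : x ∉ M) :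
    Module.finrank F (M ⊔ Submodule.span F {x} : Submodule F V) = Module.finrank F M + 1 := by
  have hx0 : x ≠ 0 := fun h => hx (h ▸ M.zero_mem)
  have hdisj : Disjoint M (Submodule.span F {x}) :=
    (Submodule.disjoint_span_singleton' hx0).mpr hx
  have h := Submodule.finrank_sup_add_finrank_inf_eq M (Submodule.span F {x})
  rw [hdisj.eq_bot, finrank_bot, finrank_span_singleton hx0] at h
  omega

/-- If pairwise distinct `h`-dimensional subspaces of `F_q^k` fail the avoidance property while
their union is a strong blocking set, then there are at least `q+1` of them. -/
theorem stmt_5 (q k h N : ℕ) (hq : IsPrimePow q) (hk : 2 ≤ k) (hh1 : 1 ≤ h) (hhk : h ≤ k)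
    (F : Type) [Field F] [Fintype F] (hcard : Fintype.card F = q)
    (W : Fin N → Submodule F (Fin k → F))
    (hdim : ∀ i, Module.finrank F (W i) = h)
    (hdistinct : Function.Injective W)
    (hnotavoid : ∃ Λ : Submodule F (Fin k → F), Module.finrank F Λ = k - 2 ∧
      ∀ i, h - 1 ≤ Module.finrank F (W i ⊓ Λ : Submodule F (Fin k → F)))
    (hSBS : ∀ H : Submodule F (Fin k → F), Module.finrank F H = k - 1 →
      Submodule.span F ((⋃ i, (W i : Set (Fin k → F))) ∩ (H : Set (Fin k → F))) = H) :
    q + 1 ≤ N := by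
  classical
  obtain ⟨Λ, hΛdim, hΛint⟩ := hnotavoid
  have hktop : Module.finrank F (Fin k → F) = k := by
    simp [Module.finrank_fintype_fun_eq_card]
  -- pick v₁ ∉ Λ
  have hΛne : Λ ≠ ⊤ := by
    intro hT
    rw [hT, finrank_top, hktop] at hΛdim
    omega
  obtain ⟨v₁, hv₁⟩ : ∃ v, v ∉ Λ := by
    by_contra hc
    push_neg at hc
    exact hΛne (Submodule.eq_top_iff'.mpr hc)
  set Λ₁ : Submodule F (Fin k → F) := Λ ⊔ Submodule.span F {v₁} with hΛ₁def
  have hΛ₁dim : Module.finrank F Λ₁ = k - 1 := by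
    rw [hΛ₁def, aux_finrank_sup_span Λ hv₁, hΛdim]; omega
  have hΛ₁ne : Λ₁ ≠ ⊤ := by
    intro hT
    rw [hT, finrank_top, hktop] at hΛ₁dim
    omega
  obtain ⟨v₂, hv₂⟩ : ∃ v, v ∉ Λ₁ := by
    by_contra hc
    push_neg at hc
    exact hΛ₁ne (Submodule.eq_top_iff'.mpr hc)
  have hv₂Λ : v₂ ∉ Λ := fun hmem => hv₂ (Submodule.mem_sup_left hmem)
  -- the q+1 hyperplanes through Λ
  set gen : Option F → (Fin k → F) := fun o => match o with
    | none => v₂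
    | some c => v₁ + c • v₂ with hgendef
  have hgenΛ : ∀ o, gen o ∉ Λ := by
    rintro (_ | c)
    · exact hv₂Λ
    · intro hmem
      by_cases hc : c = 0
      · subst hc; exact hv₁ (by simpa [gen] using hmem)
      · apply hv₂
        have hv₁' : v₁ ∈ Λ₁ := Submodule.mem_sup_right (Submodule.mem_span_singleton_self v₁)
        have : v₁ + c • v₂ ∈ Λ₁ := Submodule.mem_sup_left hmem
        have h2 : c • v₂ ∈ Λ₁ := by
          have := Λ₁.sub_mem this hv₁'
          simpa using this
        have := Λ₁.smul_mem c⁻¹ h2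
        rwa [smul_smul, inv_mul_cancel₀ hc, one_smul] at this
  set Hyp : Option F → Submodule F (Fin k → F) := fun o => Λ ⊔ Submodule.span F {gen o}
    with hHypdef
  have hHypdim : ∀ o, Module.finrank F (Hyp o) = k - 1 := by
    intro o
    rw [hHypdef, aux_finrank_sup_span Λ (hgenΛ o), hΛdim]; omega
  have hΛleHyp : ∀ o, Λ ≤ Hyp o := fun o => le_sup_left
  -- distinct hyperplanes have intersection Λ
  have hHypinf : ∀ o o', o ≠ o' → Hyp o ⊓ Hyp o' ≤ Λ := by
    have key : ∀ o o', o ≠ o' → v₁ ∈ Hyp o ⊔ Hyp o' ∧ v₂ ∈ Hyp o ⊔ Hyp o' := by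
      intro o o' hne
      have hg : ∀ o'', gen o'' ∈ Hyp o ⊔ Hyp o' ∨ True := fun _ => Or.inr trivial
      have hgo : gen o ∈ Hyp o ⊔ Hyp o' :=
        Submodule.mem_sup_left
          (Submodule.mem_sup_right (Submodule.mem_span_singleton_self _))
      have hgo' : gen o' ∈ Hyp o ⊔ Hyp o' :=
        Submodule.mem_sup_right
          (Submodule.mem_sup_right (Submodule.mem_span_singleton_self _))
      match o, o', hne with
      | none, some c, _ =>
        constructor
        · have := (Hyp none ⊔ Hyp (some c)).sub_mem hgo' ((Hyp none ⊔ Hyp (some c)).smul_mem c hgo)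
          simpa [gen] using this
        · exact hgo
      | some c, none, _ =>
        constructor
        · have := (Hyp (some c) ⊔ Hyp none).sub_mem hgo ((Hyp (some c) ⊔ Hyp none).smul_mem c hgo')
          simpa [gen] using this
        · exact hgo'
      | some c, some c', hne =>
        have hcc : c ≠ c' := fun hcc => hne (by rw [hcc])
        have hdiff : (c - c') • v₂ ∈ Hyp (some c) ⊔ Hyp (some c') := by
          have := (Hyp (some c) ⊔ Hyp (some c')).sub_mem hgo hgo'
          simpa [gen, sub_smul, add_sub_add_left_eq_sub] using this
        have hv2 : v₂ ∈ Hyp (some c) ⊔ Hyp (some c') := by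
          have := (Hyp (some c) ⊔ Hyp (some c')).smul_mem (c - c')⁻¹ hdiff
          rwa [smul_smul, inv_mul_cancel₀ (sub_ne_zero.mpr hcc), one_smul] at this
        constructor
        · have := (Hyp (some c) ⊔ Hyp (some c')).sub_mem hgo
            ((Hyp (some c) ⊔ Hyp (some c')).smul_mem c hv2)
          simpa [gen] using this
        · exact hv2
    intro o o' hne
    obtain ⟨hv1m, hv2m⟩ := key o o' hne
    -- Hyp o ⊔ Hyp o' = ⊤
    have hsuptop : Hyp o ⊔ Hyp o' = ⊤ := by
      have hle : Λ₁ ⊔ Submodule.span F {v₂} ≤ Hyp o ⊔ Hyp o' := by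
        apply sup_le
        · apply sup_le
          · exact le_trans (hΛleHyp o) le_sup_left
          · rw [Submodule.span_singleton_le_iff_mem]; exact hv1m
        · rw [Submodule.span_singleton_le_iff_mem]; exact hv2m
      have hdim2 : Module.finrank F (Λ₁ ⊔ Submodule.span F {v₂} : Submodule F (Fin k → F)) = k := by
        rw [aux_finrank_sup_span Λ₁ hv₂, hΛ₁dim]; omega
      have : Λ₁ ⊔ Submodule.span F {v₂} = ⊤ :=
        Submodule.eq_top_of_finrank_eq (by rw [hdim2, hktop])
      exact top_unique (this ▸ hle)
    have hinfdim : Module.finrank F (Hyp o ⊓ Hyp o' : Submodule F (Fin k → F)) = k - 2 := by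
      have := Submodule.finrank_sup_add_finrank_inf_eq (Hyp o) (Hyp o')
      rw [hsuptop, finrank_top, hktop, hHypdim o, hHypdim o'] at this
      omega
    have : Λ = Hyp o ⊓ Hyp o' :=
      Submodule.eq_of_le_of_finrank_le (le_inf (hΛleHyp o) (hΛleHyp o'))
        (by rw [hinfdim, hΛdim])
    exact this ▸ le_refl _
  -- for each hyperplane through Λ there is some W i inside it, not inside Λ
  have hkey : ∀ o, ∃ i, W i ≤ Hyp o ∧ ¬ W i ≤ Λ := by
    intro o
    have hspan := hSBS (Hyp o) (hHypdim o)
    have hex : ∃ x ∈ (⋃ i, (W i : Set (Fin k → F))) ∩ (Hyp o : Set (Fin k → F)), x ∉ Λ := by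
      by_contra hc
      push_neg at hc
      have hsub : (⋃ i, (W i : Set (Fin k → F))) ∩ (Hyp o : Set (Fin k → F)) ⊆ Λ := hc
      have hle : Hyp o ≤ Λ := by
        rw [← hspan]
        exact Submodule.span_le.mpr hsub
      have := Submodule.finrank_mono hle
      rw [hHypdim o, hΛdim] at this
      omega
    obtain ⟨x, ⟨hxU, hxH⟩, hxΛ⟩ := hex
    obtain ⟨_, ⟨i, rfl⟩, hxW⟩ := hxU
    refine ⟨i, ?_, fun hle => hxΛ (hle hxW)⟩
    have hxWΛ : x ∉ (W i ⊓ Λ : Submodule F (Fin k → F)) := fun hm => hxΛ hm.2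
    have hSle : (W i ⊓ Λ) ⊔ Submodule.span F {x} ≤ W i :=
      sup_le inf_le_left (by rw [Submodule.span_singleton_le_iff_mem]; exact hxW)
    have hSdim : h ≤ Module.finrank F ((W i ⊓ Λ) ⊔ Submodule.span F {x} : Submodule F (Fin k → F)) := by
      rw [aux_finrank_sup_span _ hxWΛ]
      have := hΛint i
      omega
    have hEq : (W i ⊓ Λ) ⊔ Submodule.span F {x} = W i :=
      Submodule.eq_of_le_of_finrank_le hSle (by rw [hdim i]; exact hSdim)
    rw [← hEq]
    exact sup_le (le_trans inf_le_right (hΛleHyp o))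
      (by rw [Submodule.span_singleton_le_iff_mem]; exact hxH)
  choose g hg₁ hg₂ using hkey
  have hginj : Function.Injective g := by
    intro o o' heq
    by_contra hne
    apply hg₂ o
    have hle : W (g o) ≤ Hyp o ⊓ Hyp o' := le_inf (hg₁ o) (heq ▸ hg₁ o')
    exact le_trans hle (hHypinf o o' hne)
  have := Fintype.card_le_of_injective g hginj
  simpa [hcard] using this
end

section
/- Let q be a prime power, k ≥ 2, 2 ≤ h ≤ k, and let W_1, …, W_N be pairwise distinct h-dimensional F_q-subspaces of F_q^k such that W_1 ∪ … ∪ W_N is a strong blocking set in F_q^k. Then N ≥ min{ ⌊(k−1)/h⌋ + ⌊(k−2)/(h−1)⌋ + 1, q+1 }. -/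
/-!
Passing to annihilators, the `W i` become subspaces of codimension `h` of the dual space, and a
dimension count (codimensions are subadditive) splits them into at most `⌊(k-1)/h⌋` that share
a nonzero functional `φ₁` and at most `⌊(k-2)/(h-1)⌋` that meet a common plane `L ∋ φ₁`. So each
`W i` lies in one of the `q + 1` hyperplanes `ker ψ`, `0 ≠ ψ ∈ L`, through the codimension-2
subspace `S` annihilated by `L`. If `N ≤ q`, one of these hyperplanes `H` is none of the chosen
ones, and then every `W i ∩ H` lies in `S`, so `H` is not spanned by the union of the `W i`
meeting it.
-/

open Module Submodule

section Codimension

variable {K E ι : Type*} [Field K] [AddCommGroup E] [Module K E] [FiniteDimensional K E]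

lemma finrank_le_finrank_finset_inf_add_card_mul (s : Finset ι)
    (G : ι → Submodule K E) (c : ℕ) (hG : ∀ i ∈ s, finrank K E ≤ finrank K (G i) + c) :
    finrank K E ≤ finrank K ↥(s.inf G) + s.card * c := by
  induction s using Finset.cons_induction with
  | empty => rw [Finset.inf_empty, finrank_top]; simp
  | cons j s hj ih =>
    have ih := ih fun i hi => hG i (Finset.mem_cons_of_mem hi)
    have hGj := hG j (Finset.mem_cons_self j s)
    have hsup := Submodule.finrank_sup_add_finrank_inf_eq (G j) (s.inf G)
    have hle := Submodule.finrank_le (G j ⊔ s.inf G)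
    rw [Finset.inf_cons, Finset.card_cons, add_mul, one_mul]
    omega

lemma exists_mem_finset_inf_notMem (s : Finset ι)
    (G : ι → Submodule K E) (c : ℕ) (hG : ∀ i ∈ s, finrank K E ≤ finrank K (G i) + c)
    (P : Submodule K E) (hP : finrank K ↥P + s.card * c < finrank K E) :
    ∃ x ∈ s.inf G, x ∉ P := by
  have hinf := finrank_le_finrank_finset_inf_add_card_mul s G c hG
  refine SetLike.not_le_iff_exists.mp fun hle => ?_
  have := Submodule.finrank_mono hle
  omega

/-- Take `φ₁ ≠ 0` in the `U i` with `i ∈ s`, then `φ₂ ∉ K ∙ φ₁` in the subspaces `U i ⊔ K ∙ φ₁` of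
codimension `≤ c - 1` for the remaining `i`; the plane is spanned by `φ₁, φ₂`. -/
lemma exists_finrank_eq_two_inf_ne_bot [Fintype ι] [DecidableEq ι] (U : ι → Submodule K E)
    (c : ℕ) (hU : ∀ i, finrank K E ≤ finrank K (U i) + c) (s : Finset ι)
    (hs : s.card * c < finrank K E) (hsc : sᶜ.card * (c - 1) + 2 ≤ finrank K E) :
    ∃ L : Submodule K E, finrank K L = 2 ∧ ∀ i, L ⊓ U i ≠ ⊥ := by
  classical
  obtain ⟨φ₁, hφ₁U, hφ₁0⟩ :=
    exists_mem_finset_inf_notMem s U c (fun i _ => hU i) ⊥ (by simpa using hs)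
  rw [mem_bot] at hφ₁0
  set t := sᶜ.filter fun i => φ₁ ∉ U i
  have hG : ∀ i ∈ t, finrank K E ≤ finrank K ↥(U i ⊔ K ∙ φ₁) + (c - 1) := by
    intro i hi
    have hsup := finrank_sup_span_singleton (Finset.mem_filter.mp hi).2
    have := hU i
    have := Submodule.finrank_le (U i ⊔ K ∙ φ₁)
    omega
  have ht : t.card ≤ sᶜ.card := Finset.card_filter_le _ _
  obtain ⟨φ₂, hφ₂G, hφ₂⟩ := exists_mem_finset_inf_notMem t (fun i => U i ⊔ K ∙ φ₁) (c - 1) hG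
    (K ∙ φ₁) (by rw [finrank_span_singleton hφ₁0]; nlinarith)
  refine ⟨(K ∙ φ₁) ⊔ K ∙ φ₂, by rw [finrank_sup_span_singleton hφ₂, finrank_span_singleton hφ₁0],
    fun i => ?_⟩
  by_cases hφ₁Ui : φ₁ ∈ U i
  · exact (Submodule.ne_bot_iff _).mpr ⟨φ₁, ⟨mem_sup_left (mem_span_singleton_self φ₁), hφ₁Ui⟩, hφ₁0⟩
  have hit : i ∈ t := by
    refine Finset.mem_filter.mpr ⟨Finset.mem_compl.mpr fun his => hφ₁Ui ?_, hφ₁Ui⟩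
    exact Finset.inf_le (f := U) his hφ₁U
  obtain ⟨u, hu, v, hv, huv⟩ := mem_sup.mp (Finset.inf_le (f := fun i => U i ⊔ K ∙ φ₁) hit hφ₂G)
  obtain ⟨a, rfl⟩ := mem_span_singleton.mp hv
  rw [← eq_sub_iff_add_eq] at huv
  refine (Submodule.ne_bot_iff _).mpr ⟨u, ⟨?_, hu⟩, fun hu0 => hφ₂ ?_⟩
  · rw [huv]
    exact sub_mem (mem_sup_right (mem_span_singleton_self φ₂))
      (mem_sup_left (smul_mem _ a (mem_span_singleton_self φ₁)))
  · rw [hu0, eq_comm, sub_eq_zero] at huv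
    exact huv ▸ smul_mem _ a (mem_span_singleton_self φ₁)

end Codimension

lemma Finset.exists_card_le_and_card_compl_le {ι : Type*} [Fintype ι] [DecidableEq ι] (a b : ℕ)
    (h : Fintype.card ι ≤ a + b) : ∃ s : Finset ι, s.card ≤ a ∧ sᶜ.card ≤ b := by
  obtain ⟨s, -, hs⟩ := Finset.exists_subset_card_eq (s := (univ : Finset ι)) (min_le_right a _)
  refine ⟨s, hs ▸ min_le_left _ _, ?_⟩
  rw [card_compl, hs, card_univ]
  omega

def IsStrongBlockingSet (K : Type*) {V : Type*} [Field K] [AddCommGroup V] [Module K V]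
    (B : Set V) : Prop :=
  ∀ H : Submodule K V, finrank K H = finrank K V - 1 → span K (B ∩ H) = H

section Pencil

variable {K V ι : Type*} [Field K] [AddCommGroup V] [Module K V]

lemma exists_mem_ne_zero_inf_ker_le_dualCoannihilator [Finite K] [Finite ι]
    (hι : Nat.card ι ≤ Nat.card K) (W : ι → Submodule K V) {L : Submodule K (Dual K V)}
    (hL : finrank K L = 2) (hW : ∀ i, L ⊓ (W i).dualAnnihilator ≠ ⊥) :
    ∃ ψ ∈ L, ψ ≠ 0 ∧ ∀ i, W i ⊓ LinearMap.ker ψ ≤ L.dualCoannihilator := by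
  choose φ hφ hφ0 using fun i => exists_mem_ne_zero_of_ne_bot (hW i)
  let P : ι → Projectivization K L := fun i => .mk K ⟨φ i, (hφ i).1⟩ (by simpa using hφ0 i)
  obtain ⟨D, hD⟩ : ∃ D, D ∉ Set.range P := by
    by_contra! hP
    have := Nat.card_le_card_of_surjective P fun D => hP D
    rw [Projectivization.card_of_finrank_two K L hL] at this
    omega
  refine ⟨D.rep, D.rep.2, fun h => D.rep_nonzero (Subtype.ext h), ?_⟩
  rintro i x ⟨hxW, hxψ⟩
  obtain ⟨a, ha⟩ := Projectivization.exists_smul_eq_mk_rep K (⟨φ i, (hφ i).1⟩ : L)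
    (by simpa using hφ0 i)
  -- `D ≠ P i`, so `D.rep` and `(P i).rep` span `L`, and a vector they both kill is killed by `L`.
  have hspan : span K (Set.range ![(P i).rep, D.rep]) = ⊤ :=
    (Projectivization.linearIndependent_pair_iff_ne.mpr fun h => hD ⟨i, h⟩)
      |>.span_eq_top_of_card_eq_finrank (by simp [hL])
  let ev : L →ₗ[K] K := (Dual.eval K V x).comp L.subtype
  have hev : span K (Set.range ![(P i).rep, D.rep]) ≤ LinearMap.ker ev := by
    rw [span_le, Set.range_subset_iff, Fin.forall_fin_two]
    refine ⟨?_, hxψ⟩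
    change ((P i).rep : Dual K V) x = 0
    rw [← ha]
    simp [(mem_dualAnnihilator _).mp (hφ i).2 x hxW]
  rw [hspan, top_le_iff, LinearMap.ker_eq_top] at hev
  exact (mem_dualCoannihilator x).mpr fun χ hχ => LinearMap.congr_fun hev ⟨χ, hχ⟩

lemma not_isStrongBlockingSet_iUnion [FiniteDimensional K V] [Finite K] [Finite ι]
    (hι : Nat.card ι ≤ Nat.card K) (W : ι → Submodule K V) {L : Submodule K (Dual K V)}
    (hL : finrank K L = 2) (hW : ∀ i, L ⊓ (W i).dualAnnihilator ≠ ⊥) :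
    ¬ IsStrongBlockingSet K (⋃ i, (W i : Set V)) := by
  intro hB
  obtain ⟨ψ, -, hψ0, hψ⟩ := exists_mem_ne_zero_inf_ker_le_dualCoannihilator hι W hL hW
  have hker := Dual.finrank_ker_add_one_of_ne_zero hψ0
  have hspan := hB (LinearMap.ker ψ) (by omega)
  have hle : span K ((⋃ i, (W i : Set V)) ∩ LinearMap.ker ψ) ≤ L.dualCoannihilator := by
    rw [span_le]
    rintro x ⟨hx, hxψ⟩
    obtain ⟨i, hxi⟩ := Set.mem_iUnion.mp hx
    exact hψ i ⟨hxi, hxψ⟩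
  have hcoann := Subspace.finrank_add_finrank_dualCoannihilator_eq L
  have := Submodule.finrank_mono (hspan ▸ hle)
  omega

end Pencil

theorem stmt_6_general (q k h N : ℕ) (hk : 2 ≤ k)
    (F : Type) [Field F] [Fintype F] (hcard : Fintype.card F = q)
    (W : Fin N → Submodule F (Fin k → F))
    (hdim : ∀ i, Module.finrank F (W i) = h)
    (hSBS : ∀ H : Submodule F (Fin k → F), Module.finrank F H = k - 1 →
      Submodule.span F ((⋃ i, (W i : Set (Fin k → F))) ∩ (H : Set (Fin k → F))) = H) :
    min ((k - 1) / h + (k - 2) / (h - 1) + 1) (q + 1) ≤ N := by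
  by_contra! hN
  rw [lt_min_iff] at hN
  obtain ⟨s, hs, hsc⟩ := Finset.exists_card_le_and_card_compl_le (ι := Fin N)
    ((k - 1) / h) ((k - 2) / (h - 1)) (by rw [Fintype.card_fin]; omega)
  have hdual : finrank F (Dual F (Fin k → F)) = k := by simp
  have ha := Nat.div_mul_le_self (k - 1) h
  have hb := Nat.div_mul_le_self (k - 2) (h - 1)
  obtain ⟨L, hL, hLW⟩ := exists_finrank_eq_two_inf_ne_bot (fun i => (W i).dualAnnihilator) h
    (fun i => by
      have := Subspace.finrank_add_finrank_dualAnnihilator_eq (W i)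
      rw [finrank_fin_fun, hdim i] at this
      omega)
    s (by rw [hdual]; have := Nat.mul_le_mul_right h hs; omega)
    (by rw [hdual]; have := Nat.mul_le_mul_right (h - 1) hsc; omega)
  refine not_isStrongBlockingSet_iUnion (by rw [Nat.card_fin, Nat.card_eq_fintype_card, hcard]; omega) W hL hLW fun H hH => ?_
  exact hSBS H (by simpa using hH)

/-- The number of pairwise distinct `h`-dimensional subspaces of `F_q^k` whose union is a
strong blocking set is at least `min (⌊(k-1)/h⌋ + ⌊(k-2)/(h-1)⌋ + 1) (q+1)`. -/
theorem stmt_6 (q k h N : ℕ) (hq : IsPrimePow q) (hk : 2 ≤ k) (hh1 : 2 ≤ h) (hhk : h ≤ k)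
    (F : Type) [Field F] [Fintype F] (hcard : Fintype.card F = q)
    (W : Fin N → Submodule F (Fin k → F))
    (hdim : ∀ i, Module.finrank F (W i) = h)
    (hdistinct : Function.Injective W)
    (hSBS : ∀ H : Submodule F (Fin k → F), Module.finrank F H = k - 1 →
      Submodule.span F ((⋃ i, (W i : Set (Fin k → F))) ∩ (H : Set (Fin k → F))) = H) :
    min ((k - 1) / h + (k - 2) / (h - 1) + 1) (q + 1) ≤ N :=
  stmt_6_general q k h N hk F hcard W hdim hSBS
end

section
/- Let q be a prime power, h ≥ 2, K ≥ 2, and let ⟨v_1⟩_{F_{q^h}}, …, ⟨v_N⟩_{F_{q^h}} be N pairwise distinct one-dimensional F_{q^h}-subspaces of F_{q^h}^K (v_i nonzero) whose union is an F_q-vectorial strong blocking set. Then N ≥ max{ min{ 2K + ⌊(K−2)/(h−1)⌋, q+1 }, 2K−1 }. -/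
/-!
Fix an `F_q`-linear form `tr ≠ 0` on `F_{q^h}`. For `F_{q^h}`-linear forms `φ ≠ 0, ψ` on `V`,
`tr ∘ φ` is a nonzero `F_q`-linear form, so its kernel is an `F_q`-hyperplane and is spanned by
the points of the blocking set it contains. Hence if `ψ (v i) ∈ F_q • φ (v i)` for every `i`,
then `tr ∘ ψ` vanishes on `ker (tr ∘ φ)`, and `ψ ∈ F_q • φ`.

If the `v i` with `ψ (v i) ≠ 0` did not span `V`, some `φ ∉ F_{q^h} • ψ` would vanish on them,
and this rigidity applied to `ψ` and `ψ + φ` would give `ψ + φ ∈ F_q • ψ`. So every nonzero `ψ`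
is nonzero on at least `K` of the points; taking `ψ` zero on `K - 1` of them gives
`N ≥ 2K - 1`. If moreover the support `S` of `ψ` has fewer than `q` elements, the forms `φ`
with `φ (v i) ∈ F_q • ψ (v i)` for `i ∈ S` make up an `F_q`-space of dimension at least
`Kh - |S|(h - 1)`; when this is `≥ 2`, it is not covered by the `|S| + 1 ≤ q` proper subspaces
`F_q • ψ` and `{φ (v i) = 0}`, and a form outside all of them contradicts the rigidity.
-/

open Module Submodule Finset

section Covering

variable {F P : Type*} [Field F] [Fintype F] [AddCommGroup P] [Module F P] [Finite P]

theorem Submodule.exists_forall_notMem_of_card_le {s : Finset (Submodule F P)}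
    (hs : #s ≤ Fintype.card F) (htop : ⊤ ∉ s) : ∃ x : P, ∀ Z ∈ s, x ∉ Z := by
  classical
  have := Fintype.ofFinite P
  rcases s.eq_empty_or_nonempty with rfl | ⟨Z₀, hZ₀⟩
  · exact ⟨0, by simp⟩
  by_contra! hcover
  set q := Fintype.card F
  set d := finrank F P
  have hq : 1 < q := Fintype.one_lt_card
  have hd : 0 < d :=
    (Nat.zero_le _).trans_lt (Submodule.finrank_lt (ne_of_mem_of_not_mem hZ₀ htop))
  have hcardZ : ∀ Z ∈ s, #({x | x ∈ Z} : Finset P) ≤ q ^ (d - 1) := fun Z hZ => by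
    rw [← Fintype.card_subtype (· ∈ Z), card_eq_pow_finrank (K := F) (V := Z)]
    exact Nat.pow_le_pow_right hq.le
      (Nat.le_sub_one_of_lt (Submodule.finrank_lt (ne_of_mem_of_not_mem hZ htop)))
  have hsub :
      (univ : Finset P).erase 0 ⊆ s.biUnion fun Z => ({x | x ∈ Z} : Finset P).erase 0 := by
    intro x hx
    obtain ⟨Z, hZ, hxZ⟩ := hcover x
    exact mem_biUnion.mpr ⟨Z, hZ, by simp_all⟩
  have hle : q ^ d - 1 ≤ q * (q ^ (d - 1) - 1) :=
    calc q ^ d - 1 = #((univ : Finset P).erase 0) := by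
          rw [card_erase_of_mem (mem_univ 0), card_univ, card_eq_pow_finrank (K := F) (V := P)]
      _ ≤ ∑ Z ∈ s, #(({x | x ∈ Z} : Finset P).erase 0) :=
          (card_le_card hsub).trans card_biUnion_le
      _ ≤ ∑ _Z ∈ s, (q ^ (d - 1) - 1) := sum_le_sum fun Z hZ => by
          rw [card_erase_of_mem (by simp)]
          exact Nat.sub_le_sub_right (hcardZ Z hZ) 1
      _ ≤ q * (q ^ (d - 1) - 1) := by
          rw [sum_const, smul_eq_mul]
          exact Nat.mul_le_mul_right _ hs
  have hpow : q ^ d = q * q ^ (d - 1) := by rw [← pow_succ', Nat.sub_add_cancel hd]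
  have hpos : 1 ≤ q ^ (d - 1) := Nat.one_le_pow _ _ (by omega)
  rw [hpow, Nat.mul_sub_one] at hle
  have : q ≤ q * q ^ (d - 1) := Nat.le_mul_of_pos_right q hpos
  omega

theorem Submodule.exists_mem_forall_notMem_of_card_le {A : Submodule F P}
    {s : Finset (Submodule F P)} (hs : #s ≤ Fintype.card F) (hA : ∀ Z ∈ s, ¬A ≤ Z) :
    ∃ x ∈ A, ∀ Z ∈ s, x ∉ Z := by
  classical
  obtain ⟨x, hx⟩ := Submodule.exists_forall_notMem_of_card_le (s := s.image (comap A.subtype))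
    (card_image_le.trans hs) (by simpa [comap_subtype_eq_top] using hA)
  exact ⟨x, x.2, fun Z hZ hxZ => hx _ (mem_image_of_mem _ hZ) hxZ⟩

end Covering

theorem Submodule.finrank_le_finrank_iInf_comap_add_sum {F P M ι : Type*} [Field F]
    [AddCommGroup P] [Module F P] [FiniteDimensional F P] [AddCommGroup M] [Module F M]
    [FiniteDimensional F M] [Fintype ι] (f : ι → P →ₗ[F] M) (W : ι → Submodule F M) :
    finrank F P ≤ finrank F ↥(⨅ i, (W i).comap (f i)) + ∑ i, finrank F (M ⧸ W i) := by
  let Φ := LinearMap.pi fun i => (W i).mkQ ∘ₗ f i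
  have hker : LinearMap.ker Φ = ⨅ i, (W i).comap (f i) := by
    simp [Φ, LinearMap.ker_pi, LinearMap.ker_comp]
  have hrange : finrank F (LinearMap.range Φ) ≤ ∑ i, finrank F (M ⧸ W i) :=
    (Submodule.finrank_le _).trans (finrank_pi_fintype F).le
  rw [← hker, ← LinearMap.finrank_range_add_finrank_ker Φ]
  omega

section ProportionalForms

variable (F : Type*) {L V ι : Type*} [Field F] [Field L] [Algebra F L] [AddCommGroup V]
  [Module L V]

def proportionalForms (ψ : Dual L V) (v : ι → V) (s : Finset ι) : Submodule F (Dual L V) :=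
  ⨅ i : s, (span F {ψ (v i)}).comap ((Dual.eval L V (v i)).restrictScalars F)

variable {F} {ψ φ : Dual L V} {v : ι → V} {s : Finset ι}

theorem mem_proportionalForms :
    φ ∈ proportionalForms F ψ v s ↔ ∀ i ∈ s, φ (v i) ∈ span F {ψ (v i)} := by
  simp [proportionalForms]

theorem finrank_le_finrank_proportionalForms_add [FiniteDimensional F L] [FiniteDimensional L V]
    (hs : ∀ i ∈ s, ψ (v i) ≠ 0) :
    finrank F L * finrank L V ≤
      finrank F (proportionalForms F ψ v s) + #s * (finrank F L - 1) := by
  have : FiniteDimensional F (Dual L V) := Module.Finite.trans L (Dual L V)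
  have hquot (i : s) : finrank F (L ⧸ span F {ψ (v i)}) = finrank F L - 1 := by
    have := finrank_quotient_add_finrank (span F {ψ (v i)})
    rw [finrank_span_singleton (hs i i.2)] at this
    omega
  have h := finrank_le_finrank_iInf_comap_add_sum
    (fun i : s => (Dual.eval L V (v i)).restrictScalars F) (fun i => span F {ψ (v i)})
  rwa [sum_congr rfl fun i _ => hquot i, sum_const, card_univ, Fintype.card_coe, smul_eq_mul,
    ← finrank_mul_finrank F L (Dual L V), Subspace.dual_finrank_eq] at h

end ProportionalForms

def IsVectorialStrongBlockingSet (F : Type*) {V : Type*} [Field F] [AddCommGroup V]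
    [Module F V] (S : Set V) : Prop :=
  ∀ H : Submodule F V, finrank F H + 1 = finrank F V → span F (S ∩ H) = H

namespace IsVectorialStrongBlockingSet

section

variable {F V : Type*} [Field F] [AddCommGroup V] [Module F V] [FiniteDimensional F V]
  {S : Set V}

theorem exists_eq_smul_of_forall_apply_eq_zero (hS : IsVectorialStrongBlockingSet F S)
    {f g : Dual F V} (hf : f ≠ 0) (hg : ∀ x ∈ S, f x = 0 → g x = 0) :
    ∃ c : F, g = c • f := by
  have hker : LinearMap.ker f ≤ LinearMap.ker g := by
    rw [← hS _ (Dual.finrank_ker_add_one_of_ne_zero hf), span_le]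
    exact fun x ⟨hxS, hx⟩ => hg x hxS hx
  have hspan := mem_span_of_iInf_ker_le_ker (ι := Unit) (L := fun _ => f) (by simpa using hker)
  obtain ⟨c, hc⟩ := mem_span_singleton.mp (by simpa using hspan)
  exact ⟨c, hc.symm⟩

end

variable {F L V ι : Type*} [Field F] [Field L] [Algebra F L] [AddCommGroup V] [Module L V]
  [Module F V] [IsScalarTower F L V] {v : ι → V}

theorem exists_eq_smul_of_forall_apply_eq_smul [FiniteDimensional F V]
    (hS : IsVectorialStrongBlockingSet F (⋃ i, (span L {v i} : Set V)))
    {φ ψ : Dual L V} (hφ : φ ≠ 0) (h : ∀ i, ∃ c : F, ψ (v i) = c • φ (v i)) :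
    ∃ c : F, ψ = c • φ := by
  obtain ⟨tr, htr⟩ := Projective.exists_dual_eq_one F (one_ne_zero : (1 : L) ≠ 0)
  have htr_ne {χ : Dual L V} (hχ : χ ≠ 0) : tr ∘ₗ χ.restrictScalars F ≠ 0 := by
    obtain ⟨x, hx⟩ := LinearMap.surjective hχ 1
    exact DFunLike.ne_iff.mpr ⟨x, by simp [hx, htr]⟩
  obtain ⟨c, hc⟩ := hS.exists_eq_smul_of_forall_apply_eq_zero (htr_ne hφ)
    (g := tr ∘ₗ ψ.restrictScalars F) (by
      rintro _ ⟨_, ⟨i, rfl⟩, hx⟩ hφx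
      obtain ⟨d, rfl⟩ := mem_span_singleton.mp hx
      obtain ⟨c, hc⟩ := h i
      simp_all)
  refine ⟨c, of_not_not fun hne => htr_ne (sub_ne_zero.mpr hne) ?_⟩
  ext x
  simpa [sub_eq_zero] using LinearMap.congr_fun hc x

theorem mem_span_singleton_of_forall_apply_eq_smul [FiniteDimensional F V]
    (hS : IsVectorialStrongBlockingSet F (⋃ i, (span L {v i} : Set V)))
    {φ ψ : Dual L V} (hψ : ψ ≠ 0) (h : ∀ i, ∃ c : F, ψ (v i) = c • φ (v i)) :
    φ ∈ span F {ψ} := by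
  rcases eq_or_ne φ 0 with rfl | hφ
  · exact zero_mem _
  obtain ⟨c, rfl⟩ := hS.exists_eq_smul_of_forall_apply_eq_smul hφ h
  have hc : c ≠ 0 := by rintro rfl; simp at hψ
  exact mem_span_singleton.mpr ⟨c⁻¹, inv_smul_smul₀ hc φ⟩

theorem span_image_support_eq_top [FiniteDimensional F V]
    (hS : IsVectorialStrongBlockingSet F (⋃ i, (span L {v i} : Set V)))
    (hV : 2 ≤ finrank L V) {ψ : Dual L V} (hψ : ψ ≠ 0) :
    span L (v '' {i | ψ (v i) ≠ 0}) = ⊤ := by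
  by_contra hU
  obtain ⟨φ, hφv, hφψ⟩ :
      ∃ φ : Dual L V, (∀ i, ψ (v i) ≠ 0 → φ (v i) = 0) ∧ φ ∉ span L {ψ} := by
    obtain ⟨φ₀, hφ₀, hφ₀U⟩ :=
      exists_dual_map_eq_bot_of_lt_top (lt_top_iff_ne_top.mpr hU) inferInstance
    have hφ₀v (i : ι) (hi : ψ (v i) ≠ 0) : φ₀ (v i) = 0 :=
      (mem_bot L).mp (hφ₀U ▸ mem_map_of_mem (subset_span ⟨i, hi, rfl⟩))
    by_cases hφ₀ψ : φ₀ ∈ span L {ψ}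
    · obtain ⟨a, rfl⟩ := mem_span_singleton.mp hφ₀ψ
      have ha : a ≠ 0 := by rintro rfl; simp at hφ₀
      have hψv (i : ι) : ψ (v i) = 0 := by_contra fun hi => hi (by simpa [ha] using hφ₀v i hi)
      have hψ_ne_top : span L {ψ} ≠ ⊤ := fun htop => by
        have h1 := finrank_span_singleton (K := L) hψ
        rw [htop, finrank_top, Subspace.dual_finrank_eq] at h1
        omega
      obtain ⟨φ, hφ⟩ := SetLike.exists_not_mem_of_ne_top _ hψ_ne_top
      exact ⟨φ, fun i hi => absurd (hψv i) hi, hφ⟩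
    · exact ⟨φ₀, hφ₀v, hφ₀ψ⟩
  have hψφ := hS.mem_span_singleton_of_forall_apply_eq_smul hψ (φ := ψ + φ) fun i => by
    by_cases hi : ψ (v i) = 0
    · exact ⟨0, by simp [hi]⟩
    · exact ⟨1, by simp [hφv i hi]⟩
  apply hφψ
  simpa using sub_mem (span_le_restrictScalars F L {ψ} hψφ) (mem_span_singleton_self ψ)

variable [DecidableEq L] [Fintype ι]

theorem finrank_le_card_support [FiniteDimensional F V]
    (hS : IsVectorialStrongBlockingSet F (⋃ i, (span L {v i} : Set V)))
    (hV : 2 ≤ finrank L V) {ψ : Dual L V} (hψ : ψ ≠ 0) :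
    finrank L V ≤ #{i | ψ (v i) ≠ 0} := by
  have hspan := hS.span_image_support_eq_top hV hψ
  simpa only [Fintype.card_coe] using finrank_le_of_span_eq_top (R := L)
    (v := fun i : ({i | ψ (v i) ≠ 0} : Finset ι) => v i) (by rw [← hspan]; congr 1; ext; simp)

theorem exists_ne_zero_card_support_add_le [FiniteDimensional F V]
    (hS : IsVectorialStrongBlockingSet F (⋃ i, (span L {v i} : Set V)))
    (hV : 2 ≤ finrank L V) :
    ∃ ψ : Dual L V, ψ ≠ 0 ∧
      #{i | ψ (v i) ≠ 0} + (finrank L V - 1) ≤ Fintype.card ι := by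
  classical
  have : Nontrivial (Dual L V) :=
    nontrivial_of_finrank_pos (by rw [Subspace.dual_finrank_eq]; omega)
  obtain ⟨ψ₀, hψ₀⟩ := exists_ne (0 : Dual L V)
  have hN := (hS.finrank_le_card_support hV hψ₀).trans (card_le_univ _)
  obtain ⟨T, -, hT⟩ :=
    exists_subset_card_eq (s := (univ : Finset ι)) (n := finrank L V - 1) (by simp; omega)
  have hTU : span L (T.image v : Set V) < ⊤ := by
    refine span_lt_top_of_card_lt_finrank ?_
    simpa using card_image_le.trans_lt (by omega : #T < finrank L V)
  obtain ⟨ψ, hψ, hψT⟩ := exists_dual_map_eq_bot_of_lt_top hTU inferInstance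
  refine ⟨ψ, hψ, ?_⟩
  have hdisj : Disjoint ({i | ψ (v i) ≠ 0} : Finset ι) T := disjoint_left.mpr fun i hi hiT =>
    (mem_filter.mp hi).2 ((mem_bot L).mp (hψT ▸ mem_map_of_mem
      (subset_span (by simpa using mem_image_of_mem v hiT))))
  rw [← hT, ← card_union_of_disjoint hdisj]
  exact card_le_univ _

theorem card_le_card_support [Fintype F] [FiniteDimensional F L] [FiniteDimensional L V]
    (hS : IsVectorialStrongBlockingSet F (⋃ i, (span L {v i} : Set V)))
    {ψ : Dual L V} (hψ : ψ ≠ 0)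
    (hdim : #{i | ψ (v i) ≠ 0} * (finrank F L - 1) + 2 ≤ finrank F L * finrank L V) :
    Fintype.card F ≤ #{i | ψ (v i) ≠ 0} := by
  classical
  have : FiniteDimensional F V := Module.Finite.trans L V
  have : Finite (Dual L V) := Module.finite_of_finite F
  set s : Finset ι := {i | ψ (v i) ≠ 0}
  set A := proportionalForms F ψ v s
  let vanishing (i : ι) := LinearMap.ker ((Dual.eval L V (v i)).restrictScalars F)
  have hsupp (i : ι) (hi : i ∈ s) : ψ (v i) ≠ 0 := (mem_filter.mp hi).2
  have hA : 2 ≤ finrank F A := by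
    have : finrank F L * finrank L V ≤ finrank F A + #s * (finrank F L - 1) :=
      finrank_le_finrank_proportionalForms_add hsupp
    omega
  have hψA : ψ ∈ A := mem_proportionalForms.mpr fun i _ => mem_span_singleton_self _
  have hnot_le : ∀ Z ∈ insert (span F {ψ}) (s.image vanishing), ¬A ≤ Z := by
    rw [forall_mem_insert, forall_mem_image]
    refine ⟨fun hle => ?_, fun i hi hle => hsupp i hi (by simpa [vanishing] using hle hψA)⟩
    have := finrank_mono hle
    rw [finrank_span_singleton hψ] at this
    omega
  by_contra! hcard
  obtain ⟨φ, hφA, hφ⟩ := exists_mem_forall_notMem_of_card_le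
    ((card_insert_le _ _).trans (Nat.succ_le_of_lt (card_image_le.trans_lt hcard))) hnot_le
  apply hφ _ (mem_insert_self _ _)
  refine hS.mem_span_singleton_of_forall_apply_eq_smul hψ fun i => ?_
  by_cases hi : i ∈ s
  · have hφv : φ (v i) ≠ 0 := fun h0 =>
      hφ _ (mem_insert_of_mem (mem_image_of_mem _ hi)) (by simpa [vanishing] using h0)
    obtain ⟨r, hr⟩ := mem_span_singleton.mp (mem_proportionalForms.mp hφA i hi)
    have hr0 : r ≠ 0 := by rintro rfl; exact hφv (by simpa using hr.symm)
    exact ⟨r⁻¹, by rw [← hr, inv_smul_smul₀ hr0]⟩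
  · exact ⟨0, by simpa [s] using hi⟩

end IsVectorialStrongBlockingSet

theorem stmt_8_general (q h K N : ℕ) (hK : 2 ≤ K)
    (Fq FL : Type) [Field Fq] [Field FL] [Algebra Fq FL] [Fintype Fq] [Fintype FL]
    (hcard_q : Fintype.card Fq = q) (hcard_L : Fintype.card FL = q ^ h)
    (v : Fin N → (Fin K → FL))
    (hSBS : ∀ H : Submodule Fq (Fin K → FL), Module.finrank Fq H = K * h - 1 →
      Submodule.span Fq ((⋃ i, (Submodule.span FL {v i} : Set (Fin K → FL)))
        ∩ (H : Set (Fin K → FL))) = H) :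
    max (min (2 * K + (K - 2) / (h - 1)) (q + 1)) (2 * K - 1) ≤ N := by
  classical
  have hq : 1 < q := hcard_q ▸ Fintype.one_lt_card
  have hL : finrank Fq FL = h := Nat.pow_right_injective hq <| show q ^ _ = q ^ h by
    rw [← hcard_L, ← hcard_q, card_eq_pow_finrank (K := Fq) (V := FL)]
  have hh : 0 < h := hL ▸ finrank_pos
  have hV : finrank FL (Fin K → FL) = K := finrank_fin_fun FL
  have hS : IsVectorialStrongBlockingSet Fq (⋃ i, (span FL {v i} : Set (Fin K → FL))) :=
    fun H hH => hSBS H <| by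
      rw [← finrank_mul_finrank Fq FL (Fin K → FL), hL, hV] at hH
      rw [mul_comm]
      omega
  obtain ⟨ψ, hψ, hN⟩ := hS.exists_ne_zero_card_support_add_le (hK.trans hV.ge)
  have hK_le := hS.finrank_le_card_support (hK.trans hV.ge) hψ
  rw [hV, Fintype.card_fin] at hN
  rw [hV] at hK_le
  refine max_le (not_lt.mp fun hlt => ?_) (by omega)
  obtain ⟨hlt₁, hlt₂⟩ := lt_min_iff.mp hlt
  set m := #{i | ψ (v i) ≠ 0}
  have hdim : m * (h - 1) + 2 ≤ h * K := by
    obtain ⟨h', rfl⟩ := Nat.exists_eq_add_one_of_ne_zero hh.ne'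
    rw [Nat.add_sub_cancel] at hlt₁ ⊢
    calc m * h' + 2 ≤ K * h' + (K - 2) / h' * h' + 2 := by rw [← add_mul]; gcongr; omega
      _ ≤ K * h' + K := by have := Nat.div_mul_le_self (K - 2) h'; omega
      _ = (h' + 1) * K := by ring
  have hq_le := hS.card_le_card_support hψ (by rwa [hL, hV])
  omega

/-- Lower bound on the size of an outer strong blocking set: if the union of `N` pairwise
distinct one-dimensional `F_{q^h}`-subspaces of `F_{q^h}^K` is an `F_q`-vectorial strong
blocking set, then `N ≥ max (min (2K + ⌊(K-2)/(h-1)⌋) (q+1)) (2K-1)`. -/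
theorem stmt_8 (q h K N : ℕ) (hq : IsPrimePow q) (hh : 2 ≤ h) (hK : 2 ≤ K)
    (Fq FL : Type) [Field Fq] [Field FL] [Algebra Fq FL] [Fintype Fq] [Fintype FL]
    (hcard_q : Fintype.card Fq = q) (hcard_L : Fintype.card FL = q ^ h)
    (v : Fin N → (Fin K → FL)) (hv : ∀ i, v i ≠ 0)
    (hdistinct : ∀ i j : Fin N, i ≠ j →
      (Submodule.span FL {v i} : Submodule FL (Fin K → FL)) ≠ Submodule.span FL {v j})
    (hSBS : ∀ H : Submodule Fq (Fin K → FL), Module.finrank Fq H = K * h - 1 →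
      Submodule.span Fq ((⋃ i, (Submodule.span FL {v i} : Set (Fin K → FL)))
        ∩ (H : Set (Fin K → FL))) = H) :
    max (min (2 * K + (K - 2) / (h - 1)) (q + 1)) (2 * K - 1) ≤ N :=
  stmt_8_general q h K N hK Fq FL hcard_q hcard_L v hSBS
end

section
/- Let q be a prime power, h ≥ 1, and 2 ≤ K ≤ N. For integers n ≥ t ≥ 0, let G(n,t) denote the number of t-dimensional F_{q^h}-subspaces of F_{q^h}^n (the Gaussian binomial coefficient binom(n,t)_{q^h}). If G(N−2, K−2) · Σ_{i=1}^{N} C(N,i) (q^h−1)^i (q^i − q) < G(N,K), where C(N,i) denotes the ordinary binomial coefficient, then there exists a K-dimensional F_{q^h}-linear subspace C of F_{q^h}^N all of whose nonzero codewords are q-outer minimal. -/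
/-- The number of `t`-dimensional subspaces of `F^n` (the Gaussian binomial coefficient when
`F = F_{q^h}`). -/
noncomputable def gaussianCount (F : Type) [Field F] (n t : ℕ) : ℕ :=
  Nat.card {V : Submodule F (Fin n → F) // Module.finrank F V = t}

/-! If no `K`-dimensional code works, every one contains a codeword `c` and an
`F_q`-coordinatewise multiple `λ • c` that is not an `F_q`-multiple of `c`. Normalising `λ` to
vanish off the support of `c`, the pair `(c, λ)` is determined by its support `S`, the nonzero
entries of `c` on `S` and a nonconstant `λ : S → F_q`, so there are at most
`Σ_i C(N,i) (q^h-1)^i (q^i-q)` such pairs. Since `c` and `λ • c` are linearly independent, the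
`K`-dimensional codes containing both embed into the `(K-2)`-dimensional subspaces of the
quotient by their span, of which there are `binom(N-2,K-2)_{q^h}`. Double counting incidences
contradicts the hypothesis. -/

open Finset Module Submodule

section Subspaces

variable {F : Type} [Field F] {E : Type*} [AddCommGroup E] [Module F E]

lemma card_finrank_eq_eq_gaussianCount {n : ℕ} (e : E ≃ₗ[F] (Fin n → F)) (t : ℕ) :
    Nat.card {V : Submodule F E // finrank F V = t} = gaussianCount F n t :=
  Nat.card_congr <| (orderIsoMapComap e).toEquiv.subtypeEquiv fun V => by
    rw [← LinearEquiv.finrank_map_eq e V]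
    rfl

lemma finrank_map_mkQ_add_finrank [FiniteDimensional F E] {W V : Submodule F E} (h : W ≤ V) :
    finrank F (V.map W.mkQ) + finrank F W = finrank F V := by
  have hrange : LinearMap.range (W.mkQ ∘ₗ V.subtype) = V.map W.mkQ := by
    rw [LinearMap.range_comp, range_subtype]
  have hker : LinearMap.ker (W.mkQ ∘ₗ V.subtype) = W.comap V.subtype := by
    rw [LinearMap.ker_comp, ker_mkQ]
  rw [← LinearMap.finrank_range_add_finrank_ker (W.mkQ ∘ₗ V.subtype), hrange, hker,
    (comapSubtypeEquivOfLe h).finrank_eq]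

lemma card_finrank_eq_of_le_le_gaussianCount [Finite F] {n : ℕ} (W : Submodule F (Fin n → F))
    (k : ℕ) :
    Nat.card {V : Submodule F (Fin n → F) // finrank F V = k ∧ W ≤ V}
      ≤ gaussianCount F (n - finrank F W) (k - finrank F W) := by
  have hquot : finrank F ((Fin n → F) ⧸ W) = n - finrank F W := by
    have := W.finrank_quotient_add_finrank
    rw [finrank_fin_fun] at this
    omega
  obtain ⟨e⟩ : Nonempty (((Fin n → F) ⧸ W) ≃ₗ[F] (Fin (n - finrank F W) → F)) :=
    FiniteDimensional.nonempty_linearEquiv_of_finrank_eq (by rw [hquot, finrank_fin_fun])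
  rw [← card_finrank_eq_eq_gaussianCount e]
  have : Finite ((Fin n → F) ⧸ W) := Finite.of_surjective _ W.mkQ_surjective
  refine Nat.card_le_card_of_injective
    (fun V => ⟨V.1.map W.mkQ, by have := finrank_map_mkQ_add_finrank V.2.2; omega⟩) ?_
  intro ⟨V₁, _, h₁⟩ ⟨V₂, _, h₂⟩ h
  have := congrArg (comap W.mkQ ∘ Subtype.val) h
  simp only [Function.comp_apply, comap_map_mkQ, sup_of_le_right h₁, sup_of_le_right h₂] at this
  exact Subtype.ext this

lemma finrank_span_pair {c c' : E} (h : LinearIndependent F ![c, c']) :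
    finrank F (span F {c, c'}) = 2 := by
  rw [← Matrix.range_cons_cons_empty c c' ![]]
  simpa using finrank_span_eq_card h

end Subspaces

lemma card_notMem_range_const (α R : Type*) [Finite α] [Finite R] [Nonempty R] :
    Nat.card {g : α → R // g ∉ Set.range (Function.const α)} =
      Nat.card R ^ Nat.card α - Nat.card R := by
  rcases isEmpty_or_nonempty α with hα | hα
  · have : IsEmpty {g : α → R // g ∉ Set.range (Function.const α)} :=
      ⟨fun g => g.2 ⟨Classical.arbitrary R, funext hα.elim⟩⟩
    rw [Nat.card_of_isEmpty, Nat.card_of_isEmpty (α := α), pow_zero]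
    have := Nat.card_pos (α := R)
    omega
  · classical
    have := Fintype.ofFinite α
    have := Fintype.ofFinite R
    simp only [Nat.card_eq_fintype_card]
    rw [Fintype.card_subtype_compl, Fintype.card_fun,
      Set.card_range_of_injective Function.const_injective]

lemma card_le_mul_card_of_forall_exists {α β : Type*} [Finite α] [Finite β] {P : α → Prop}
    {Q : β → Prop} (r : α → β → Prop) {n : ℕ} (hP : ∀ a, P a → ∃ b, Q b ∧ r a b)
    (hQ : ∀ b, Q b → Nat.card {a // P a ∧ r a b} ≤ n) :
    Nat.card {a // P a} ≤ n * Nat.card {b // Q b} := by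
  classical
  have := Fintype.ofFinite α
  have := Fintype.ofFinite β
  simp only [Nat.card_eq_fintype_card, Fintype.card_subtype] at hQ ⊢
  rw [← mul_one #{a | P a}, mul_comm n]
  refine card_mul_le_card_mul r (fun a ha => card_pos.2 ?_) fun b hb => ?_
  · obtain ⟨b, hb, hab⟩ := hP a ((mem_filter_univ a).1 ha)
    exact ⟨b, (mem_bipartiteAbove r).2 ⟨(mem_filter_univ b).2 hb, hab⟩⟩
  · rw [bipartiteBelow, filter_filter]
    exact hQ b ((mem_filter_univ b).1 hb)

section Multiplier

variable {ι M R : Type*}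

/-- Requiring `lam` to vanish off the support of `c` makes it unique given `lam • c`. -/
def IsNonconstantMultiplier [Zero M] [Zero R] (c : ι → M) (lam : ι → R) : Prop :=
  (∀ i, c i = 0 → lam i = 0) ∧ ¬∃ l, ∀ i, c i ≠ 0 → lam i = l

lemma exists_isNonconstantMultiplier [CommSemiring R] [Semiring M] [Algebra R M] {c c' : ι → M}
    (hsupp : ∀ i, c' i ≠ 0 → c i ≠ 0)
    (hmul : ∀ i, c i ≠ 0 → ∃ l : R, c' i = algebraMap R M l * c i)
    (hne : ∀ l : R, c' ≠ algebraMap R M l • c) :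
    ∃ lam : ι → R, IsNonconstantMultiplier c lam ∧ c' = lam • c := by
  classical
  choose! lam hlam using hmul
  have hc' : c' = (fun i => if c i = 0 then 0 else lam i) • c := by
    funext i
    by_cases hi : c i = 0
    · have : c' i = 0 := by_contra fun h => hsupp i h hi
      simp [hi, this]
    · simp [hi, hlam i hi, Algebra.smul_def]
  refine ⟨_, ⟨fun i hi => if_pos hi, fun ⟨l, hl⟩ => hne l ?_⟩, hc'⟩
  rw [hc']
  funext i
  by_cases hi : c i = 0
  · simp [hi]
  · simp [hi, ← hl i hi, Algebra.smul_def]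

lemma IsNonconstantMultiplier.linearIndependent [Field R] [Field M] [Algebra R M] {c : ι → M}
    {lam : ι → R} (h : IsNonconstantMultiplier c lam) : LinearIndependent M ![c, lam • c] := by
  obtain ⟨i₀, hi₀⟩ : ∃ i, c i ≠ 0 := by
    by_contra! hc
    exact h.2 ⟨0, fun i hi => (hi (hc i)).elim⟩
  refine (LinearIndependent.pair_iff' fun hc => hi₀ (congrFun hc i₀)).2 fun a ha =>
    h.2 ⟨lam i₀, fun i hi => ?_⟩
  have key : ∀ j, c j ≠ 0 → algebraMap R M (lam j) = a := fun j hj =>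
    (mul_right_cancel₀ hj (by simpa [Algebra.smul_def] using (congrFun ha j).symm))
  exact (algebraMap R M).injective ((key i hi).trans (key i₀ hi₀).symm)

lemma card_subtype_ne_zero (M : Type*) [Zero M] [Finite M] :
    Nat.card {x : M // x ≠ 0} = Nat.card M - 1 := by
  classical
  have := Fintype.ofFinite M
  simp only [Nat.card_eq_fintype_card]
  exact Set.card_ne_eq 0

lemma card_isNonconstantMultiplier_support_eq_le [Zero M] [Zero R] [Finite M] [Finite R]
    (S : Finset ι) :
    Nat.card {p : (ι → M) × (ι → R) //
        IsNonconstantMultiplier p.1 p.2 ∧ Function.support p.1 = S}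
      ≤ (Nat.card M - 1) ^ #S * (Nat.card R ^ #S - Nat.card R) := by
  set Fiber := {p : (ι → M) × (ι → R) //
    IsNonconstantMultiplier p.1 p.2 ∧ Function.support p.1 = S}
  have hS (p : Fiber) (i : ι) : i ∈ S ↔ p.1.1 i ≠ 0 := (Set.ext_iff.mp p.2.2 i).symm
  let restrict (p : Fiber) :
      (S → {x : M // x ≠ 0}) × {g : S → R // g ∉ Set.range (Function.const S)} :=
    (fun i => ⟨p.1.1 i, (hS p i).1 i.2⟩, ⟨fun i => p.1.2 i, fun ⟨l, hl⟩ =>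
      p.2.1.2 ⟨l, fun i hi => (congrFun hl ⟨i, (hS p i).2 hi⟩).symm⟩⟩)
  have hinj : Function.Injective restrict := by
    intro p p' h
    simp only [restrict, Prod.mk.injEq, funext_iff, Subtype.ext_iff] at h
    have hc : p.1.1 = p'.1.1 := funext fun i => by
      by_cases hi : i ∈ S
      · exact h.1 ⟨i, hi⟩
      · rw [not_not.1 (mt (hS p i).2 hi), not_not.1 (mt (hS p' i).2 hi)]
    refine Subtype.ext (Prod.ext hc (funext fun i => ?_))
    by_cases hi : i ∈ S
    · exact h.2 ⟨i, hi⟩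
    · have hz := not_not.1 (mt (hS p i).2 hi)
      rw [p.2.1.1 i hz, p'.2.1.1 i (hc ▸ hz)]
  refine (Nat.card_le_card_of_injective restrict hinj).trans_eq ?_
  rw [Nat.card_prod, Nat.card_fun, card_subtype_ne_zero, card_notMem_range_const,
    Nat.card_eq_fintype_card (α := S), Fintype.card_coe]

lemma card_isNonconstantMultiplier_le [Fintype ι] [Zero M] [Zero R] [Finite M] [Finite R] :
    Nat.card {p : (ι → M) × (ι → R) // IsNonconstantMultiplier p.1 p.2}
      ≤ ∑ j ∈ Icc 1 (Fintype.card ι),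
          (Fintype.card ι).choose j * (Nat.card M - 1) ^ j * (Nat.card R ^ j - Nat.card R) := by
  classical
  have hsum : Nat.card {p : (ι → M) × (ι → R) // IsNonconstantMultiplier p.1 p.2}
      = ∑ S : Finset ι, Nat.card {p : (ι → M) × (ι → R) //
          IsNonconstantMultiplier p.1 p.2 ∧ Function.support p.1 = S} := by
    rw [← Nat.card_sigma]
    refine Nat.card_congr ((Equiv.sigmaFiberEquiv fun p =>
      (Function.support p.1.1).toFinset).symm.trans (Equiv.sigmaCongrRight fun S => ?_))
    refine (Equiv.subtypeSubtypeEquivSubtypeInter _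
      fun p : (ι → M) × (ι → R) => (Function.support p.1).toFinset = S).trans
      (Equiv.subtypeEquivRight fun p => ?_)
    rw [← Finset.coe_inj, Set.coe_toFinset]
  have hR : 1 ≤ Nat.card R := Nat.card_pos
  calc _ ≤ ∑ S : Finset ι, (Nat.card M - 1) ^ #S * (Nat.card R ^ #S - Nat.card R) :=
        hsum.trans_le (sum_le_sum fun S _ => card_isNonconstantMultiplier_support_eq_le S)
    _ = ∑ j ∈ range (Fintype.card ι + 1),
          (Fintype.card ι).choose j * (Nat.card M - 1) ^ j * (Nat.card R ^ j - Nat.card R) := by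
        rw [← powerset_univ,
          sum_powerset_apply_card fun j => (Nat.card M - 1) ^ j * (Nat.card R ^ j - Nat.card R),
          card_univ]
        simp only [smul_eq_mul, mul_assoc]
    _ = _ := by
        refine (sum_subset (fun j hj => ?_) fun j hj hj' => ?_).symm
        · simp only [mem_Icc, mem_range] at hj ⊢; omega
        · obtain rfl : j = 0 := by simp only [mem_Icc, mem_range] at hj hj'; omega
          simp [Nat.sub_eq_zero_of_le hR]

end Multiplier

theorem stmt_9_general (q h K N : ℕ) (Fq FL : Type) [Field Fq] [Field FL] [Algebra Fq FL] [Fintype Fq] [Fintype FL]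
    (hcard_q : Fintype.card Fq = q) (hcard_L : Fintype.card FL = q ^ h)
    (hcount : gaussianCount FL (N - 2) (K - 2) *
        (∑ i ∈ Finset.Icc 1 N, N.choose i * (q ^ h - 1) ^ i * (q ^ i - q))
      < gaussianCount FL N K) :
    ∃ C : Submodule FL (Fin N → FL), Module.finrank FL C = K ∧
      ∀ c ∈ C, c ≠ 0 → ∀ c' ∈ C,
        (∀ i, c' i ≠ 0 → c i ≠ 0) →
        (∀ i, c i ≠ 0 → ∃ l : Fq, c' i = algebraMap Fq FL l * c i) →
        ∃ l : Fq, c' = algebraMap Fq FL l • c := by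
  by_contra! hbad
  refine hcount.not_ge ?_
  have hbound := card_isNonconstantMultiplier_le (ι := Fin N) (M := FL) (R := Fq)
  rw [Fintype.card_fin, Nat.card_eq_fintype_card (α := FL), Nat.card_eq_fintype_card (α := Fq),
    hcard_q, hcard_L] at hbound
  refine (card_le_mul_card_of_forall_exists
    (fun V (p : (Fin N → FL) × (Fin N → Fq)) => span FL {p.1, p.2 • p.1} ≤ V)
    (fun V hV => ?_) fun p hp => ?_).trans (Nat.mul_le_mul_left _ hbound)
  · obtain ⟨c, hc, -, c', hc', hsupp, hmul, hne⟩ := hbad V hV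
    obtain ⟨lam, hlam, rfl⟩ := exists_isNonconstantMultiplier hsupp hmul hne
    exact ⟨(c, lam), hlam, span_le.2 (Set.pair_subset hc hc')⟩
  · simpa [finrank_span_pair hp.linearIndependent] using
      card_finrank_eq_of_le_le_gaussianCount (span FL {p.1, p.2 • p.1}) K

/-- Existence of outer minimal codes: if
`binom(N-2,K-2)_{q^h} * Σ_{i=1}^N C(N,i) (q^h-1)^i (q^i-q) < binom(N,K)_{q^h}`, then there
exists a `K`-dimensional code in `F_{q^h}^N` all of whose nonzero codewords are
`q`-outer minimal. -/
theorem stmt_9 (q h K N : ℕ) (hq : IsPrimePow q) (hh : 1 ≤ h) (hK : 2 ≤ K) (hKN : K ≤ N)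
    (Fq FL : Type) [Field Fq] [Field FL] [Algebra Fq FL] [Fintype Fq] [Fintype FL]
    (hcard_q : Fintype.card Fq = q) (hcard_L : Fintype.card FL = q ^ h)
    (hcount : gaussianCount FL (N - 2) (K - 2) *
        (∑ i ∈ Finset.Icc 1 N, N.choose i * (q ^ h - 1) ^ i * (q ^ i - q))
      < gaussianCount FL N K) :
    ∃ C : Submodule FL (Fin N → FL), Module.finrank FL C = K ∧
      ∀ c ∈ C, c ≠ 0 → ∀ c' ∈ C,
        (∀ i, c' i ≠ 0 → c i ≠ 0) →
        (∀ i, c i ≠ 0 → ∃ l : Fq, c' i = algebraMap Fq FL l * c i) →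
        ∃ l : Fq, c' = algebraMap Fq FL l • c :=
  stmt_9_general q h K N Fq FL hcard_q hcard_L hcount
end

section
/- Let q be a prime power, h ≥ 1, K ≥ 2, and let N be an integer with N ≥ ⌈ 2K / log_{q^h}( q^{2h} / (q^{h+1} − q + 1) ) ⌉, where log_{q^h} denotes the real logarithm in base q^h. Then there exist nonzero vectors v_1, …, v_N ∈ F_{q^h}^K whose F_{q^h}-span is all of F_{q^h}^K and such that ⟨v_1⟩_{F_{q^h}} ∪ … ∪ ⟨v_N⟩_{F_{q^h}} is an F_q-vectorial strong blocking set; equivalently, there exists a q-outer minimal [N,K]_{q^h} code. -/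
/-!
Fix a nonzero `Fq`-linear form `f` on `FL`. Every `Fq`-linear form on `V = FL^K` is `f ∘ Φ` for
an `FL`-linear form `Φ`, so a vector `w` fails to separate the hyperplane `ker φ` from the
codimension-two subspace `ker φ ∩ ker ψ` exactly when `(Φ w, Ψ w)` lies in a set of at most
`(q^h - 1) q + 1` pairs; when `Φ, Ψ` are `FL`-independent this happens for at most a fraction
`((q^h - 1) q + 1) / q^(2h)` of all `w`. A union bound over the fewer than `q^(2hK)` pairs
`(φ, ψ)` shows that some `N`-tuple separates all of them as soon as
`q^(2hK) ((q^h - 1) q + 1)^N ≤ q^(2hN)`, which is what the bound on `N` says. Separating all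
such pairs is the strong blocking property, and it forces the tuple to span `V`.
-/

open Module Finset

theorem Module.natCard_dual (K V : Type*) [Field K] [AddCommGroup V] [Module K V] [Finite V] :
    Nat.card (Dual K V) = Nat.card V := by
  rw [natCard_eq_pow_finrank (K := K), natCard_eq_pow_finrank (K := K) (V := V),
    Subspace.dual_finrank_eq]

open scoped Classical in
theorem LinearMap.card_filter_mem_mul_le_of_surjective {R M M₂ : Type*} [Ring R]
    [AddCommGroup M] [Module R M] [AddCommGroup M₂] [Module R M₂] [Fintype M] [Fintype M₂]
    (G : M →ₗ[R] M₂) (hG : Function.Surjective G) (D : Finset M₂) :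
    #{w | G w ∈ D} * Fintype.card M₂ ≤ #D * Fintype.card M := by
  set s : Finset M := {w | G w ∈ D}
  have hfiber : ∀ y ∈ s.image G, #{w ∈ s | G w = y} ≤ Nat.card (ker G) := by
    intro y hy
    obtain ⟨w₀, -, rfl⟩ := mem_image.mp hy
    calc #{w ∈ s | G w = G w₀}
        ≤ #((univ : Finset (ker G)).image fun z : ker G => w₀ + (z : M)) :=
          card_le_card fun w hw => by
            refine mem_image.mpr ⟨⟨w - w₀, ?_⟩, mem_univ _, add_sub_cancel _ _⟩
            rw [mem_ker, map_sub, (mem_filter.mp hw).2, sub_self]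
      _ ≤ Nat.card (ker G) := card_image_le.trans_eq (by rw [card_univ, Nat.card_eq_fintype_card])
  have himage : s.image G ⊆ D := fun y hy => by
    obtain ⟨w, hw, rfl⟩ := mem_image.mp hy
    exact (mem_filter.mp hw).2
  have hcard : Nat.card (ker G) * Fintype.card M₂ = Fintype.card M := by
    rw [← Nat.card_eq_fintype_card, ← Nat.card_eq_fintype_card,
      (ker G).card_eq_card_quotient_mul_card, Nat.card_congr (G.quotKerEquivOfSurjective hG).toEquiv]
  calc #s * Fintype.card M₂ ≤ Nat.card (ker G) * #(s.image G) * Fintype.card M₂ := by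
        gcongr
        exact card_le_mul_card_image s _ hfiber
    _ ≤ #D * Fintype.card M := by
        rw [← hcard, mul_comm (Nat.card _), mul_assoc]
        gcongr

theorem Module.Dual.prod_surjective {K V : Type*} [Field K] [AddCommGroup V] [Module K V]
    {Φ Ψ : Dual K V} (hΦ : Φ ≠ 0) (hΨ : ∀ μ : K, Ψ ≠ μ • Φ) :
    Function.Surjective (Φ.prod Ψ) := by
  rw [← LinearMap.range_eq_top]
  by_contra hs
  obtain ⟨χ, hχ, hle⟩ :=
    (LinearMap.range (Φ.prod Ψ)).exists_le_ker_of_lt_top (lt_top_iff_ne_top.mpr hs)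
  have hχ_apply : ∀ p : K × K, χ p = p.1 * χ (1, 0) + p.2 * χ (0, 1) := fun p => by
    rw [← smul_eq_mul, ← smul_eq_mul, ← map_smul, ← map_smul, ← map_add]
    simp
  have key : ∀ w, Φ w * χ (1, 0) + Ψ w * χ (0, 1) = 0 := fun w => by
    have h := LinearMap.mem_ker.mp (hle (LinearMap.mem_range_self _ w))
    rwa [hχ_apply] at h
  by_cases hb : χ (0, 1) = 0
  · have ha : χ (1, 0) ≠ 0 := fun ha => hχ (LinearMap.ext fun p => by simp [hχ_apply p, ha, hb])
    exact hΦ (LinearMap.ext fun w => by simpa [hb, ha] using key w)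
  · refine hΨ (-χ (1, 0) / χ (0, 1)) (LinearMap.ext fun w => ?_)
    simp only [LinearMap.smul_apply, smul_eq_mul]
    field_simp
    linear_combination key w

section Pairing

variable {Fq FL : Type*} [Field Fq] [Field FL] [Algebra Fq FL] {f : Dual Fq FL}

theorem eq_zero_of_forall_map_mul_eq_zero (hf : f ≠ 0) {z : FL} (h : ∀ l, f (l * z) = 0) :
    z = 0 := by
  by_contra hz
  refine hf (LinearMap.ext fun w => ?_)
  simpa [mul_assoc, inv_mul_cancel₀ hz] using h (w * z⁻¹)

theorem exists_eq_smul_of_forall_map_mul_imp (hf : f ≠ 0) {x y : FL}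
    (h : ∀ l, f (l * x) = 0 → f (l * y) = 0) : ∃ c : Fq, y = c • x := by
  obtain ⟨c, hc⟩ :
      ∃ c : Fq, c • (f ∘ₗ LinearMap.mulRight Fq x) = f ∘ₗ LinearMap.mulRight Fq y := by
    have := mem_span_of_iInf_ker_le_ker (ι := Unit) (L := fun _ => f ∘ₗ LinearMap.mulRight Fq x)
      (K := f ∘ₗ LinearMap.mulRight Fq y) (by simpa [SetLike.le_def] using h)
    rwa [Set.range_const, Submodule.mem_span_singleton] at this
  refine ⟨c, sub_eq_zero.mp (eq_zero_of_forall_map_mul_eq_zero hf fun l => ?_)⟩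
  have hl := LinearMap.congr_fun hc l
  simp only [LinearMap.smul_apply, LinearMap.comp_apply, LinearMap.mulRight_apply] at hl
  rw [mul_sub, map_sub, mul_smul_comm, map_smul, hl, sub_self]

open scoped Classical in
theorem card_filter_forall_map_mul_imp_le [Fintype Fq] [Fintype FL] (hf : f ≠ 0) :
    #{p : FL × FL | ∀ l, f (l * p.1) = 0 → f (l * p.2) = 0} ≤
      (Fintype.card FL - 1) * Fintype.card Fq + 1 := by
  have hsub : ({p : FL × FL | ∀ l, f (l * p.1) = 0 → f (l * p.2) = 0} : Finset _) ⊆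
      insert 0 ((((univ : Finset FL).erase 0) ×ˢ (univ : Finset Fq)).image
        fun xc => (xc.1, xc.2 • xc.1)) := by
    intro p hp
    obtain ⟨c, hc⟩ := exists_eq_smul_of_forall_map_mul_imp hf (mem_filter.mp hp).2
    by_cases hp1 : p.1 = 0
    · refine mem_insert.mpr (Or.inl (Prod.ext hp1 ?_))
      simpa [hp1] using hc
    · exact mem_insert_of_mem (mem_image.mpr ⟨(p.1, c), by simp [hp1], Prod.ext rfl hc.symm⟩)
  calc _ ≤ _ := card_le_card hsub
    _ ≤ _ := card_insert_le _ _
    _ ≤ _ := by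
      gcongr
      exact card_image_le.trans_eq (by rw [card_product, card_erase_of_mem (mem_univ _)]; rfl)

theorem Module.Dual.exists_comp_restrictScalars_eq {V : Type*} [AddCommGroup V] [Module FL V]
    [Module Fq V] [IsScalarTower Fq FL V] [Finite Fq] [Finite V] (hf : f ≠ 0)
    (φ : Dual Fq V) : ∃ Φ : Dual FL V, f ∘ₗ Φ.restrictScalars Fq = φ := by
  have hinj : Function.Injective fun Φ : Dual FL V => f ∘ₗ Φ.restrictScalars Fq := by
    intro Φ Φ' h
    ext w
    refine sub_eq_zero.mp (eq_zero_of_forall_map_mul_eq_zero hf fun l => ?_)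
    have hl := LinearMap.congr_fun h (l • w)
    simp only [LinearMap.comp_apply, LinearMap.restrictScalars_apply, map_smul, smul_eq_mul] at hl
    rw [mul_sub, map_sub, hl, sub_self]
  have : Finite (Dual Fq V) := Module.finite_of_finite Fq
  exact (hinj.bijective_of_nat_card_le (by rw [natCard_dual, natCard_dual])).2 φ

open scoped Classical in
theorem card_filter_forall_map_mul_imp_smul_mul_le {V : Type*} [AddCommGroup V] [Module FL V]
    [Fintype FL] [Fintype V] (hf : f ≠ 0) {Φ : Dual FL V} (hΦ : Φ ≠ 0) {μ : FL}
    (hμ : ∀ c : Fq, μ ≠ algebraMap Fq FL c) :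
    #{w | ∀ l, f (l * Φ w) = 0 → f (l * (μ * Φ w)) = 0} * Fintype.card FL ≤ Fintype.card V := by
  have hsub : ({w | ∀ l, f (l * Φ w) = 0 → f (l * (μ * Φ w)) = 0} : Finset V) ⊆
      ({w | Φ w ∈ ({0} : Finset FL)} : Finset V) := by
    intro w hw
    simp only [mem_filter, mem_univ, true_and, mem_singleton] at hw ⊢
    by_contra hΦw
    obtain ⟨c, hc⟩ := exists_eq_smul_of_forall_map_mul_imp hf hw
    rw [Algebra.smul_def] at hc
    exact hμ c (mul_right_cancel₀ hΦw hc)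
  calc _ ≤ #{w | Φ w ∈ ({0} : Finset FL)} * Fintype.card FL := by gcongr
    _ ≤ Fintype.card V := by
      simpa using Φ.card_filter_mem_mul_le_of_surjective (LinearMap.surjective hΦ) {0}

end Pairing

section Separating

variable (Fq FL : Type*) {V ι : Type*} [Field Fq] [Field FL]
  [AddCommGroup V] [Module FL V] [Module Fq V]

/-- Every hyperplane `ker φ` is separated from each of its hyperplanes `ker φ ∩ ker ψ` by a point
of one of the lines `FL • v i`. -/
def IsSeparating (v : ι → V) : Prop :=
  ∀ φ ψ : Dual Fq V, φ ≠ 0 → (∀ c : Fq, ψ ≠ c • φ) →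
    ∃ i, ∃ l : FL, φ (l • v i) = 0 ∧ ψ (l • v i) ≠ 0

variable {Fq FL} [FiniteDimensional Fq V] {v : ι → V}

theorem IsSeparating.span_iUnion_inter_eq (hv : IsSeparating Fq FL v) {H : Submodule Fq V}
    (hH : finrank Fq H + 1 = finrank Fq V) :
    Submodule.span Fq ((⋃ i, (Submodule.span FL {v i} : Set V)) ∩ H) = H := by
  set W := Submodule.span Fq ((⋃ i, (Submodule.span FL {v i} : Set V)) ∩ H)
  have hWH : W ≤ H := Submodule.span_le.mpr Set.inter_subset_right
  refine hWH.antisymm fun x hxH => not_not.mp fun hxW => ?_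
  obtain ⟨ψ, hψx, hWψ⟩ := Submodule.exists_le_ker_of_notMem hxW
  obtain ⟨φ, hφ, hHφ⟩ := H.exists_le_ker_of_lt_top
    (lt_top_iff_ne_top.mpr fun hHtop => by rw [hHtop, finrank_top] at hH; omega)
  have hker : LinearMap.ker φ = H := by
    refine (Submodule.eq_of_le_of_finrank_le hHφ ?_).symm
    have := Dual.finrank_ker_add_one_of_ne_zero hφ
    omega
  have hψφ : ∀ c : Fq, ψ ≠ c • φ := by
    rintro c rfl
    exact hψx (by simp [LinearMap.mem_ker.mp (hHφ hxH)])
  obtain ⟨i, l, hφl, hψl⟩ := hv φ ψ hφ hψφ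
  have hlv : l • v i ∈ W := Submodule.subset_span
    ⟨Set.mem_iUnion.mpr ⟨i, Submodule.smul_mem _ l (Submodule.mem_span_singleton_self _)⟩,
      hker ▸ hφl⟩
  exact hψl (hWψ hlv)

theorem IsSeparating.span_range_eq_top [Algebra Fq FL] [IsScalarTower Fq FL V]
    (hv : IsSeparating Fq FL v) (hV : 2 ≤ finrank Fq V) :
    Submodule.span FL (Set.range v) = ⊤ := by
  refine Submodule.eq_top_iff'.mpr fun x => ?_
  obtain ⟨φ, hφ, hxφ⟩ := (Fq ∙ x).exists_le_ker_of_lt_top <| lt_top_iff_ne_top.mpr fun h => by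
    have := finrank_span_le_card (R := Fq) ({x} : Set V)
    rw [h, finrank_top, Set.toFinset_singleton, card_singleton] at this
    omega
  have hspan := hv.span_iUnion_inter_eq (Dual.finrank_ker_add_one_of_ne_zero hφ)
  have hle : Submodule.span Fq ((⋃ i, (Submodule.span FL {v i} : Set V)) ∩ LinearMap.ker φ) ≤
      (Submodule.span FL (Set.range v)).restrictScalars Fq := by
    refine Submodule.span_le.mpr fun y hy => ?_
    obtain ⟨i, hyi⟩ := Set.mem_iUnion.mp hy.1
    exact Submodule.span_mono (Set.singleton_subset_iff.mpr (Set.mem_range_self i)) hyi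
  exact hle (hspan.symm ▸ hxφ (Submodule.mem_span_singleton_self x))

theorem IsSeparating.exists_forall_ne_zero [Algebra Fq FL] [IsScalarTower Fq FL V]
    (hv : IsSeparating Fq FL v) (hV : 2 ≤ finrank Fq V) :
    ∃ v' : ι → V, (∀ i, v' i ≠ 0) ∧ IsSeparating Fq FL v' := by
  classical
  obtain ⟨j, hj⟩ : ∃ j, v j ≠ 0 := by
    have : Nontrivial V := nontrivial_of_finrank_pos (R := Fq) (by omega)
    obtain ⟨x, hx⟩ := exists_ne (0 : V)
    by_contra! h
    have hbot : Submodule.span FL (Set.range v) = ⊥ :=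
      Submodule.span_eq_bot.mpr (by rintro _ ⟨i, rfl⟩; exact h i)
    have hx' : x ∈ Submodule.span FL (Set.range v) := hv.span_range_eq_top hV ▸ Submodule.mem_top
    exact hx (by simpa [hbot] using hx')
  refine ⟨fun i => if v i = 0 then v j else v i,
    fun i => by dsimp only; split_ifs <;> assumption, fun φ ψ hφ hψ => ?_⟩
  obtain ⟨i, l, hφl, hψl⟩ := hv φ ψ hφ hψ
  have hvi : v i ≠ 0 := by rintro h; simp [h] at hψl
  exact ⟨i, l, by simpa [hvi] using hφl, by simpa [hvi] using hψl⟩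

end Separating

section Counting

variable {Fq FL V : Type*} [Field Fq] [Field FL] [Algebra Fq FL] [AddCommGroup V] [Module FL V]
  [Module Fq V] [IsScalarTower Fq FL V] [Fintype Fq] [Fintype FL] [Fintype V]

open scoped Classical in
theorem card_filter_forall_smul_imp_mul_le {φ ψ : Dual Fq V} (hφ : φ ≠ 0)
    (hψ : ∀ c : Fq, ψ ≠ c • φ) :
    #{w : V | ∀ l : FL, φ (l • w) = 0 → ψ (l • w) = 0} * Fintype.card FL ^ 2 ≤
      ((Fintype.card FL - 1) * Fintype.card Fq + 1) * Fintype.card V := by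
  obtain ⟨f, hf⟩ := exists_ne (0 : Dual Fq FL)
  obtain ⟨Φ, rfl⟩ := Dual.exists_comp_restrictScalars_eq (V := V) hf φ
  obtain ⟨Ψ, rfl⟩ := Dual.exists_comp_restrictScalars_eq (V := V) hf ψ
  have hΦ : Φ ≠ 0 := by
    rintro rfl
    exact hφ (LinearMap.ext fun _ => by simp)
  simp only [LinearMap.comp_apply, LinearMap.restrictScalars_apply, map_smul, smul_eq_mul]
  set s := (Fintype.card FL - 1) * Fintype.card Fq + 1
  -- If `Ψ = μ • Φ` the bad vectors lie in `ker Φ`; otherwise `w ↦ (Φ w, Ψ w)` is onto `FL × FL`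
  -- and they are the preimage of a set of at most `s` pairs.
  by_cases hdep : ∃ μ : FL, Ψ = μ • Φ
  · obtain ⟨μ, rfl⟩ := hdep
    have hμ : ∀ c : Fq, μ ≠ algebraMap Fq FL c := by
      rintro c rfl
      exact hψ c (LinearMap.ext fun x => by simp)
    have hFL : Fintype.card FL ≤ s := by
      have : 0 < Fintype.card FL := Fintype.card_pos
      calc Fintype.card FL = (Fintype.card FL - 1) * 1 + 1 := by omega
        _ ≤ s := Nat.add_le_add_right (Nat.mul_le_mul_left _ Fintype.card_pos) 1
    simp only [LinearMap.smul_apply, smul_eq_mul]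
    calc _ = _ * Fintype.card FL := by rw [sq, ← mul_assoc]
      _ ≤ Fintype.card V * s := by
        gcongr
        exact card_filter_forall_map_mul_imp_smul_mul_le hf hΦ hμ
      _ = s * Fintype.card V := mul_comm _ _
  · push Not at hdep
    set D : Finset (FL × FL) := {p | ∀ l, f (l * p.1) = 0 → f (l * p.2) = 0}
    calc _ = #{w | Φ.prod Ψ w ∈ D} * Fintype.card (FL × FL) := by
          rw [Fintype.card_prod, ← sq]
          congr 2
          ext w
          simp [D]
      _ ≤ #D * Fintype.card V := by
        convert (Φ.prod Ψ).card_filter_mem_mul_le_of_surjective (Dual.prod_surjective hΦ hdep) D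
      _ ≤ s * Fintype.card V := by
        gcongr
        exact card_filter_forall_map_mul_imp_le hf

open scoped Classical in
theorem card_filter_not_isSeparating_mul_lt {N : ℕ} :
    #{v : Fin N → V | ¬IsSeparating Fq FL v} * Fintype.card FL ^ (2 * N) <
      Fintype.card V ^ 2 *
        (((Fintype.card FL - 1) * Fintype.card Fq + 1) * Fintype.card V) ^ N := by
  have : Finite (Dual Fq V) := Module.finite_of_finite Fq
  have := Fintype.ofFinite (Dual Fq V)
  set s := (Fintype.card FL - 1) * Fintype.card Fq + 1
  set P : Finset (Dual Fq V × Dual Fq V) := {p | p.1 ≠ 0 ∧ ∀ c : Fq, p.2 ≠ c • p.1}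
  set bad : Dual Fq V × Dual Fq V → Finset V :=
    fun p => {w | ∀ l : FL, p.1 (l • w) = 0 → p.2 (l • w) = 0}
  have hcover : ({v : Fin N → V | ¬IsSeparating Fq FL v} : Finset _) ⊆
      P.biUnion fun p => Fintype.piFinset fun _ => bad p := by
    intro v hv
    obtain ⟨φ, ψ, hφ, hψ, hv⟩ : ∃ φ ψ : Dual Fq V, φ ≠ 0 ∧ (∀ c : Fq, ψ ≠ c • φ) ∧
        ∀ i, ∀ l : FL, φ (l • v i) = 0 → ψ (l • v i) = 0 := by
      simpa [IsSeparating] using hv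
    exact mem_biUnion.mpr ⟨(φ, ψ), by simp [P, hφ, hψ],
      Fintype.mem_piFinset.mpr fun i => by simpa [bad] using hv i⟩
  have hP : #P < Fintype.card V ^ 2 := by
    calc #P < #(univ : Finset (Dual Fq V × Dual Fq V)) :=
          card_lt_card ⟨subset_univ _, fun h => by simpa [P] using h (mem_univ (0, 0))⟩
      _ = Fintype.card V ^ 2 := by
        rw [card_univ, Fintype.card_prod, ← Nat.card_eq_fintype_card, natCard_dual,
          Nat.card_eq_fintype_card, sq]
  have hbad : ∀ p ∈ P, #(bad p) * Fintype.card FL ^ 2 ≤ s * Fintype.card V := fun p hp => by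
    obtain ⟨hp1, hp2⟩ : p.1 ≠ 0 ∧ ∀ c : Fq, p.2 ≠ c • p.1 := by simpa [P] using hp
    exact card_filter_forall_smul_imp_mul_le hp1 hp2
  have hV : 0 < Fintype.card V := Fintype.card_pos
  calc _ ≤ (∑ p ∈ P, #(Fintype.piFinset fun _ : Fin N => bad p)) * Fintype.card FL ^ (2 * N) := by
        gcongr
        exact (card_le_card hcover).trans card_biUnion_le
    _ = ∑ p ∈ P, (#(bad p) * Fintype.card FL ^ 2) ^ N := by
        rw [sum_mul]
        refine sum_congr rfl fun p _ => ?_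
        rw [Fintype.card_piFinset, prod_const, card_univ, Fintype.card_fin, mul_pow, ← pow_mul]
    _ ≤ ∑ p ∈ P, (s * Fintype.card V) ^ N :=
        sum_le_sum fun p hp => Nat.pow_le_pow_left (hbad p hp) N
    _ = #P * (s * Fintype.card V) ^ N := by rw [sum_const, smul_eq_mul]
    _ < Fintype.card V ^ 2 * (s * Fintype.card V) ^ N :=
        Nat.mul_lt_mul_of_pos_right hP (by positivity)

open scoped Classical in
theorem exists_isSeparating {N : ℕ}
    (hN : Fintype.card V ^ 2 * ((Fintype.card FL - 1) * Fintype.card Fq + 1) ^ N ≤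
      Fintype.card FL ^ (2 * N)) :
    ∃ v : Fin N → V, IsSeparating Fq FL v := by
  by_contra! hno
  have hall : ({v : Fin N → V | ¬IsSeparating Fq FL v} : Finset _) = univ :=
    filter_true_of_mem fun v _ => hno v
  have hlt := card_filter_not_isSeparating_mul_lt (Fq := Fq) (FL := FL) (V := V) (N := N)
  rw [hall, card_univ, Fintype.card_fun, Fintype.card_fin, mul_pow, ← mul_assoc] at hlt
  have := Nat.mul_le_mul_right (Fintype.card V ^ N) hN
  linarith

end Counting

theorem pow_le_pow_of_div_logb_le {a R : ℝ} {M N : ℕ} (ha : 1 < a) (hR : 1 < R)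
    (h : M / Real.logb a R ≤ N) : a ^ M ≤ R ^ N := by
  rw [Real.logb, div_div_eq_mul_div, div_le_iff₀ (Real.log_pos hR)] at h
  rw [← Real.log_le_log_iff (by positivity) (by positivity), Real.log_pow, Real.log_pow]
  linarith

theorem pow_sq_mul_pow_le_of_ceil_le (q h K N : ℕ) (hq : 2 ≤ q) (hh : 1 ≤ h)
    (hN : ⌈(2 * K : ℝ) /
        Real.logb ((q : ℝ) ^ h) ((q : ℝ) ^ (2 * h) / ((q : ℝ) ^ (h + 1) - q + 1))⌉ ≤ (N : ℤ)) :
    ((q ^ h) ^ K) ^ 2 * ((q ^ h - 1) * q + 1) ^ N ≤ (q ^ h) ^ (2 * N) := by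
  have hq1 : (1 : ℝ) < q := by exact_mod_cast hq
  set s : ℝ := (q : ℝ) ^ (h + 1) - q + 1 with hs_def
  have hs : (((q ^ h - 1) * q + 1 : ℕ) : ℝ) = s := by
    push_cast [Nat.cast_sub (Nat.one_le_pow _ _ (by omega : 0 < q)), hs_def]
    ring
  have hqs : (q : ℝ) ≤ q ^ (h + 1) := le_self_pow₀ hq1.le (by omega)
  have hs2h : s < (q : ℝ) ^ (2 * h) := by
    have : (q : ℝ) ^ (h + 1) ≤ q ^ (2 * h) := pow_le_pow_right₀ hq1.le (by omega)
    linarith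
  have key := pow_le_pow_of_div_logb_le (M := 2 * K) (one_lt_pow₀ hq1 (by omega : h ≠ 0))
    ((one_lt_div (by linarith)).mpr hs2h) (by exact_mod_cast Int.ceil_le.mp hN)
  rw [div_pow, le_div_iff₀ (by positivity)] at key
  have hreal : (((q : ℝ) ^ h) ^ K) ^ 2 * s ^ N ≤ ((q : ℝ) ^ h) ^ (2 * N) := by
    calc _ = ((q : ℝ) ^ h) ^ (2 * K) * s ^ N := by rw [← pow_mul, mul_comm K 2]
      _ ≤ ((q : ℝ) ^ (2 * h)) ^ N := key
      _ = _ := by rw [← pow_mul, ← pow_mul]; ring_nf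
  rw [← hs] at hreal
  exact_mod_cast hreal

/-- Existence of outer minimal `[N,K]_{q^h}` codes (equivalently, outer strong blocking sets of
size `N` in `PG(K-1,q^h)`) whenever `N ≥ ⌈2K / log_{q^h}(q^{2h}/(q^{h+1}-q+1))⌉`. -/
theorem stmt_10 (q h K N : ℕ) (hq : IsPrimePow q) (hh : 1 ≤ h) (hK : 2 ≤ K)
    (Fq FL : Type) [Field Fq] [Field FL] [Algebra Fq FL] [Fintype Fq] [Fintype FL]
    (hcard_q : Fintype.card Fq = q) (hcard_L : Fintype.card FL = q ^ h)
    (hN : ⌈(2 * K : ℝ) /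
        Real.logb ((q : ℝ) ^ h) ((q : ℝ) ^ (2 * h) / ((q : ℝ) ^ (h + 1) - q + 1))⌉ ≤ (N : ℤ)) :
    ∃ v : Fin N → (Fin K → FL), (∀ i, v i ≠ 0) ∧
      Submodule.span FL (Set.range v) = ⊤ ∧
      (∀ H : Submodule Fq (Fin K → FL), Module.finrank Fq H = K * h - 1 →
        Submodule.span Fq ((⋃ i, (Submodule.span FL {v i} : Set (Fin K → FL)))
          ∩ (H : Set (Fin K → FL))) = H) := by
  have hq2 : 2 ≤ q := hq.two_le
  have hdimFL : finrank Fq FL = h := by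
    have := Module.card_eq_pow_finrank (K := Fq) (V := FL)
    rw [hcard_q, hcard_L] at this
    exact (Nat.pow_right_injective hq2 this).symm
  have hdim : finrank Fq (Fin K → FL) = K * h := by
    rw [finrank_pi_fintype, sum_const, card_univ, Fintype.card_fin, hdimFL, smul_eq_mul]
  have hV : 2 ≤ finrank Fq (Fin K → FL) := hdim ▸ le_mul_of_le_of_one_le hK hh
  obtain ⟨v, hv⟩ := exists_isSeparating (Fq := Fq) (FL := FL) (V := Fin K → FL) (N := N) (by
    rw [Fintype.card_fun, Fintype.card_fin, hcard_q, hcard_L]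
    exact pow_sq_mul_pow_le_of_ceil_le q h K N hq2 hh hN)
  obtain ⟨v', hv'0, hv'⟩ := hv.exists_forall_ne_zero hV
  exact ⟨v', hv'0, hv'.span_range_eq_top hV, fun H hH => hv'.span_iUnion_inter_eq (by omega)⟩
end

section
/- Let q be a prime power and let k ≥ 2 be an even integer. Then there exists a strong blocking set in F_q^k consisting of at most ⌈ k / log_{q^2}( q^4 / (q^3 − q + 1) ) ⌉ · (q+1) pairwise non-proportional nonzero vectors, where log_{q^2} denotes the real logarithm in base q^2. Equivalently, m(k,q) ≤ ⌈ k / log_{q^2}( q^4/(q^3−q+1) ) ⌉ · (q+1), where m(k,q) is the smallest size of a strong blocking set in PG(k−1,q). -/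
/-!
Take `N` lines `⟨xᵢ, yᵢ⟩` of `F_q^k` at random and let `B` consist of one vector for each of
their points; each line contributes at most `q + 1` of them. `B` is a strong blocking set as soon
as for every nonzero `φ` and every `ψ` not vanishing on `ker φ` some line meets `ker φ` outside
`ker ψ`. A pair `(x, y)` fails this only if `(ψ x, ψ y)` is proportional to `(φ x, φ y)`, which
happens for at most `(q³ - q + 1) q^(2(k-2))` of the `q^(2k)` pairs. A union bound over the fewer
than `q^(2k)` choices of `(φ, ψ)` shows that `N = ⌈k / log_{q²}(q⁴ / (q³ - q + 1))⌉` lines suffice.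
-/

open Finset Module LinearMap Submodule Real
open scoped LinearAlgebra.Projectivization

theorem exists_forall_exists_notMem_of_card_mul_pow_lt {α ι : Type*} [Fintype α] [Fintype ι]
    (bad : ι → Finset α) {b N : ℕ} (hb : ∀ j, #(bad j) ≤ b)
    (h : Fintype.card ι * b ^ N < Fintype.card α ^ N) :
    ∃ t : Fin N → α, ∀ j, ∃ i, t i ∉ bad j := by
  classical
  by_contra! hall
  have hcover : (univ : Finset (Fin N → α)) ⊆
      univ.biUnion fun j => Fintype.piFinset fun _ => bad j := fun t _ =>
    have ⟨j, hj⟩ := hall t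
    mem_biUnion.2 ⟨j, mem_univ _, Fintype.mem_piFinset.2 hj⟩
  have : Fintype.card α ^ N ≤ Fintype.card ι * b ^ N :=
    calc Fintype.card α ^ N = #(univ : Finset (Fin N → α)) := by simp
      _ ≤ ∑ j, #(Fintype.piFinset fun _ : Fin N => bad j) :=
        (card_le_card hcover).trans card_biUnion_le
      _ ≤ ∑ _j : ι, b ^ N := sum_le_sum fun j _ => by
        rw [Fintype.card_piFinset_const]; exact Nat.pow_le_pow_left (hb j) N
      _ = Fintype.card ι * b ^ N := by simp
  omega

theorem card_filter_exists_smul_eq_le {K W : Type*} [Semiring K] [Fintype K] [AddCommMonoid W]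
    [Module K W] [Fintype W] [DecidableEq W] :
    #{p : W × W | ∃ c : K, c • p.1 = p.2} ≤ 1 + (Fintype.card W - 1) * Fintype.card K := by
  have hsub : ({p : W × W | ∃ c : K, c • p.1 = p.2} : Finset (W × W)) ⊆
      insert 0 ((univ.erase (0 : W) ×ˢ (univ : Finset K)).image fun uc => (uc.1, uc.2 • uc.1)) := by
    rintro ⟨u, u'⟩ hp
    obtain ⟨c, rfl⟩ : ∃ c : K, c • u = u' := (mem_filter.1 hp).2
    by_cases hu : u = 0
    · simp [hu]
    · exact mem_insert_of_mem (mem_image.2 ⟨(u, c), by simp [hu], rfl⟩)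
  calc _ ≤ _ := card_le_card hsub
    _ ≤ 1 + #(univ.erase (0 : W) ×ˢ (univ : Finset K)) := by
      rw [add_comm]; exact (card_insert_le _ _).trans (Nat.add_le_add_right card_image_le 1)
    _ = 1 + (Fintype.card W - 1) * Fintype.card K := by
      rw [card_product, card_erase_of_mem (mem_univ _), card_univ, card_univ]

theorem card_filter_apply_eq_le_card_ker {R M N : Type*} [Ring R] [AddCommGroup M] [Module R M]
    [AddCommGroup N] [Module R N] [Fintype M] [DecidableEq N] (f : M →ₗ[R] N) (y : N) :
    #{x | f x = y} ≤ Nat.card (ker f) := by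
  classical
  rcases eq_empty_or_nonempty ({x | f x = y} : Finset M) with he | ⟨x₀, hx₀⟩
  · simp [he]
  have hx₀ : f x₀ = y := (mem_filter.1 hx₀).2
  calc #{x | f x = y} ≤ #{x | f x = 0} :=
        card_le_card_of_injOn (· - x₀) (fun x hx => by simp_all) (fun _ _ _ _ => sub_left_inj.1)
    _ = Nat.card (ker f) := by
      rw [← Fintype.card_subtype, ← Nat.card_eq_fintype_card]; rfl

section VectorSpace

variable {K V : Type*} [Field K] [AddCommGroup V] [Module K V]

theorem finrank_ker_inf_ker_add_two_le [FiniteDimensional K V] {φ ψ : V →ₗ[K] K} (hφ : φ ≠ 0)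
    (hψ : ¬ ker φ ≤ ker ψ) : finrank K ↥(ker φ ⊓ ker ψ) + 2 ≤ finrank K V := by
  have h₁ := Submodule.finrank_lt_finrank_of_lt (inf_lt_left.2 hψ)
  have h₂ := Submodule.finrank_lt (mt LinearMap.ker_eq_top.1 hφ)
  omega

theorem exists_smul_eq_of_span_pair_inf_ker_le {φ ψ : V →ₗ[K] K} {x y : V}
    (h : span K {x, y} ⊓ ker φ ≤ ker ψ) : ∃ c : K, c • (φ x, φ y) = (ψ x, ψ y) := by
  let e : K × K →ₗ[K] V :=
    (LinearMap.toSpanSingleton K V x).coprod (LinearMap.toSpanSingleton K V y)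
  have hker : ⨅ _ : Unit, ker (φ ∘ₗ e) ≤ ker (ψ ∘ₗ e) := by
    rintro ⟨s, t⟩ hst
    simp only [iInf_const, mem_ker] at hst ⊢
    exact h ⟨mem_span_pair.2 ⟨s, t, by simp [e]⟩, hst⟩
  obtain ⟨c, hc⟩ := mem_span_singleton.1 (by simpa using mem_span_of_iInf_ker_le_ker hker)
  refine ⟨c, Prod.ext ?_ ?_⟩
  · simpa [e] using LinearMap.congr_fun hc (1, 0)
  · simpa [e] using LinearMap.congr_fun hc (0, 1)

theorem finrank_span_pair_le_two (x y : V) : finrank K (span K {x, y}) ≤ 2 := by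
  classical
  have := (finrank_span_finset_le_card (R := K) ({x, y} : Finset V)).trans card_le_two
  rwa [Finset.coe_pair] at this

theorem span_inter_eq_of_forall_exists {B : Set V} {H : Submodule K V}
    (h : ∀ ψ : V →ₗ[K] K, ¬ H ≤ ker ψ → ∃ v ∈ B ∩ H, ψ v ≠ 0) : span K (B ∩ H) = H := by
  refine le_antisymm (span_le.2 Set.inter_subset_right) fun w hw => ?_
  by_contra hw'
  obtain ⟨ψ, hψw, hψ⟩ := exists_le_ker_of_notMem hw'
  obtain ⟨v, hv, hψv⟩ := h ψ fun hH => hψw (hH hw)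
  exact hψv (hψ (subset_span hv))

theorem exists_ker_eq_of_finrank_add_one [FiniteDimensional K V] {H : Submodule K V}
    (hH : finrank K H + 1 = finrank K V) : ∃ φ : V →ₗ[K] K, φ ≠ 0 ∧ ker φ = H := by
  obtain ⟨φ, hφ, hHφ⟩ := H.exists_le_ker_of_lt_top (lt_top_of_finrank_lt_finrank (by omega))
  have := Submodule.finrank_lt (mt LinearMap.ker_eq_top.1 hφ)
  exact ⟨φ, hφ, (eq_of_le_of_finrank_le hHφ (by omega)).symm⟩

theorem Projectivization.rep_ne_smul_rep {p p' : ℙ K V} (h : p ≠ p') (c : K) :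
    p.rep ≠ c • p'.rep := by
  intro hc
  apply h
  rw [← p.mk_rep, ← p'.mk_rep, mk_eq_mk_iff']
  exact ⟨c, hc.symm⟩

theorem Projectivization.card_le_of_finrank_le_two [Finite K] [Module.Finite K V]
    (h : finrank K V ≤ 2) : Nat.card (ℙ K V) ≤ Nat.card K + 1 := by
  have hK : 1 < Nat.card K := Finite.one_lt_card
  have h₁ : Nat.card K ^ 2 - 1 = (Nat.card K + 1) * (Nat.card K - 1) := by
    rw [← Nat.sq_sub_sq, one_pow]
  rw [card'', natCard_eq_pow_finrank (K := K)]
  calc (Nat.card K ^ finrank K V - 1) / (Nat.card K - 1)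
      ≤ (Nat.card K ^ 2 - 1) / (Nat.card K - 1) :=
        Nat.div_le_div_right (Nat.sub_le_sub_right (Nat.pow_le_pow_right (by omega) h) 1)
    _ = Nat.card K + 1 := by rw [h₁, Nat.mul_div_cancel _ (by omega)]

variable [Fintype K] [Fintype V]

open scoped Classical in
theorem card_filter_apply_eq_prod_le {φ ψ : V →ₗ[K] K} (hφ : φ ≠ 0) (hψ : ¬ ker φ ≤ ker ψ)
    (a : K × K) : #{x | (φ x, ψ x) = a} ≤ Fintype.card K ^ (finrank K V - 2) := by
  calc #{x | (φ x, ψ x) = a} = #{x | φ.prod ψ x = a} := rfl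
    _ ≤ Nat.card (ker (φ.prod ψ)) := card_filter_apply_eq_le_card_ker _ a
    _ = Fintype.card K ^ finrank K ↥(ker φ ⊓ ker ψ) := by
      rw [ker_prod, Module.natCard_eq_pow_finrank (K := K), Nat.card_eq_fintype_card]
    _ ≤ Fintype.card K ^ (finrank K V - 2) := Nat.pow_le_pow_right Fintype.card_pos
      (by have := finrank_ker_inf_ker_add_two_le hφ hψ; omega)

open scoped Classical in
theorem card_filter_span_pair_inf_ker_le {φ ψ : V →ₗ[K] K} (hφ : φ ≠ 0)
    (hψ : ¬ ker φ ≤ ker ψ) :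
    #{p : V × V | span K {p.1, p.2} ⊓ ker φ ≤ ker ψ} ≤
      (Fintype.card K ^ 3 - Fintype.card K + 1) * (Fintype.card K ^ (finrank K V - 2)) ^ 2 := by
  set q := Fintype.card K
  set s : Finset (V × V) := {p | span K {p.1, p.2} ⊓ ker φ ≤ ker ψ}
  let ev : V × V → (K × K) × (K × K) := fun p => ((φ p.1, φ p.2), (ψ p.1, ψ p.2))
  have hfiber : ∀ m ∈ s.image ev, #{p ∈ s | ev p = m} ≤ (q ^ (finrank K V - 2)) ^ 2 := by
    intro m _
    have hsub : {p ∈ s | ev p = m} ⊆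
        (({x | (φ x, ψ x) = (m.1.1, m.2.1)} : Finset V) ×ˢ
          ({y | (φ y, ψ y) = (m.1.2, m.2.2)} : Finset V)) := by
      intro p hp
      obtain ⟨-, rfl⟩ := mem_filter.1 hp
      simp [ev]
    calc #{p ∈ s | ev p = m} ≤ _ := card_le_card hsub
      _ ≤ q ^ (finrank K V - 2) * q ^ (finrank K V - 2) := by
        rw [card_product]
        exact Nat.mul_le_mul (card_filter_apply_eq_prod_le hφ hψ _)
          (card_filter_apply_eq_prod_le hφ hψ _)
      _ = _ := (sq _).symm
  have himage : s.image ev ⊆ ({m : (K × K) × (K × K) | ∃ c : K, c • m.1 = m.2} : Finset _) := by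
    intro m hm
    obtain ⟨p, hp, rfl⟩ := mem_image.1 hm
    exact mem_filter.2 ⟨mem_univ _, exists_smul_eq_of_span_pair_inf_ker_le (mem_filter.1 hp).2⟩
  have hcount : 1 + (Fintype.card (K × K) - 1) * q = q ^ 3 - q + 1 := by
    have h₁ : q ≤ q ^ 3 := Nat.le_self_pow (by norm_num) q
    have h₂ : (q * q - 1) * q = q ^ 3 - q := by rw [Nat.sub_mul, one_mul, ← sq, ← pow_succ]
    rw [Fintype.card_prod, h₂]
    omega
  calc #s ≤ (q ^ (finrank K V - 2)) ^ 2 * #(s.image ev) := card_le_mul_card_image s _ hfiber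
    _ ≤ (q ^ (finrank K V - 2)) ^ 2 * (q ^ 3 - q + 1) := by
      rw [← hcount]
      exact Nat.mul_le_mul_left _ ((card_le_card himage).trans card_filter_exists_smul_eq_le)
    _ = _ := mul_comm _ _

theorem exists_pairs_forall_not_span_pair_inf_ker_le {N : ℕ}
    (hN : Fintype.card K ^ (2 * finrank K V) *
        ((Fintype.card K ^ 3 - Fintype.card K + 1) * (Fintype.card K ^ (finrank K V - 2)) ^ 2) ^ N ≤
      Fintype.card K ^ (2 * finrank K V * N)) :
    ∃ t : Fin N → V × V, ∀ φ ψ : V →ₗ[K] K, φ ≠ 0 → ¬ ker φ ≤ ker ψ →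
      ∃ i, ¬ span K {(t i).1, (t i).2} ⊓ ker φ ≤ ker ψ := by
  classical
  have : Finite (V →ₗ[K] K) := Module.finite_of_finite K
  let _ := Fintype.ofFinite (V →ₗ[K] K)
  set q := Fintype.card K
  set b := (q ^ 3 - q + 1) * (q ^ (finrank K V - 2)) ^ 2
  let ι := {f : (V →ₗ[K] K) × (V →ₗ[K] K) // f.1 ≠ 0 ∧ ¬ ker f.1 ≤ ker f.2}
  have hι : Fintype.card ι < q ^ (2 * finrank K V) :=
    calc Fintype.card ι < Fintype.card ((V →ₗ[K] K) × (V →ₗ[K] K)) :=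
          Fintype.card_subtype_lt (x := 0) (by simp)
      _ = q ^ (2 * finrank K V) := by
        rw [Fintype.card_prod, Module.card_eq_pow_finrank (K := K), Subspace.dual_finrank_eq]
        ring
  obtain ⟨t, ht⟩ := exists_forall_exists_notMem_of_card_mul_pow_lt (α := V × V) (b := b) (N := N)
    (fun f : ι => {p : V × V | span K {p.1, p.2} ⊓ ker f.1.1 ≤ ker f.1.2})
    (fun f => card_filter_span_pair_inf_ker_le f.2.1 f.2.2) <|
    calc Fintype.card ι * b ^ N < q ^ (2 * finrank K V) * b ^ N :=
          Nat.mul_lt_mul_of_pos_right hι (by positivity)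
      _ ≤ q ^ (2 * finrank K V * N) := hN
      _ = Fintype.card (V × V) ^ N := by
        rw [Fintype.card_prod, card_eq_pow_finrank (K := K)]; ring
  exact ⟨t, fun φ ψ hφ hψ => by simpa using ht ⟨(φ, ψ), hφ, hψ⟩⟩

open Projectivization in
theorem exists_strongBlocking_of_forall_not_inf_ker_le {N : ℕ} (W : Fin N → Submodule K V)
    (hW : ∀ i, finrank K (W i) ≤ 2)
    (hcover : ∀ φ ψ : V →ₗ[K] K, φ ≠ 0 → ¬ ker φ ≤ ker ψ → ∃ i, ¬ W i ⊓ ker φ ≤ ker ψ) :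
    ∃ B : Finset V, #B ≤ N * (Fintype.card K + 1) ∧ (∀ u ∈ B, u ≠ 0) ∧
      (∀ u ∈ B, ∀ w ∈ B, u ≠ w → ∀ c : K, u ≠ c • w) ∧
      ∀ H : Submodule K V, finrank K H = finrank K V - 1 → span K ((B : Set V) ∩ H) = H := by
  classical
  let _ : ∀ i, Fintype (ℙ K (W i)) := fun i => Fintype.ofFinite _
  let lines : Fin N → Finset (ℙ K V) := fun i =>
    univ.image (map (W i).subtype (W i).injective_subtype)
  let P := univ.biUnion lines
  refine ⟨P.image Projectivization.rep, ?_, ?_, ?_,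
    fun H hH => span_inter_eq_of_forall_exists fun ψ hψ => ?_⟩
  · calc #(P.image Projectivization.rep) ≤ ∑ i, #(lines i) :=
          card_image_le.trans card_biUnion_le
      _ ≤ ∑ _i : Fin N, (Fintype.card K + 1) := sum_le_sum fun i _ => by
        rw [← Nat.card_eq_fintype_card]
        exact card_image_le.trans ((Nat.card_eq_fintype_card (α := ℙ K (W i))).symm.le.trans
          (card_le_of_finrank_le_two (hW i)))
      _ = N * (Fintype.card K + 1) := by simp
  · intro u hu
    obtain ⟨p, -, rfl⟩ := mem_image.1 hu
    exact p.rep_nonzero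
  · intro u hu w hw huw c
    obtain ⟨p, -, rfl⟩ := mem_image.1 hu
    obtain ⟨p', -, rfl⟩ := mem_image.1 hw
    exact rep_ne_smul_rep (fun h => huw (congrArg Projectivization.rep h)) c
  obtain ⟨w, hwH, hψw⟩ := SetLike.not_le_iff_exists.1 hψ
  have hHtop : H ≠ ⊤ := by
    rintro rfl
    have : Subsingleton V := finrank_zero_iff (R := K).1 (by rw [finrank_top] at hH; omega)
    exact hψw (by simp [Subsingleton.elim w 0])
  obtain ⟨φ, hφ, rfl⟩ := exists_ker_eq_of_finrank_add_one (H := H)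
    (by have := Submodule.finrank_lt hHtop; omega)
  obtain ⟨i, hi⟩ := hcover φ ψ hφ hψ
  obtain ⟨v, ⟨hvW, hvφ⟩, hψv⟩ := SetLike.not_le_iff_exists.1 hi
  have hv : v ≠ 0 := by rintro rfl; simp at hψv
  have hvP : mk K v hv ∈ P := mem_biUnion.2 ⟨i, mem_univ _,
    mem_image.2 ⟨mk K ⟨v, hvW⟩ (by simpa using hv), mem_univ _, map_mk _ _ _ _⟩⟩
  obtain ⟨a, ha⟩ := exists_smul_eq_mk_rep K v hv
  refine ⟨(mk K v hv).rep, ⟨mem_image_of_mem _ hvP, ?_⟩, ?_⟩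
  · rw [← ha]; exact (ker φ).smul_mem _ hvφ
  · rw [← ha, Units.smul_def, map_smul, smul_eq_mul]
    exact mul_ne_zero a.ne_zero (by simpa using hψv)

end VectorSpace

theorem pow_le_pow_of_div_logb_le_s13 {b a : ℝ} (hb : 1 < b) (ha : 1 < a) {k N : ℕ}
    (h : k / logb b a ≤ N) : b ^ k ≤ a ^ N := by
  have h' := (div_le_iff₀ (logb_pos hb ha)).1 h
  rw [logb, ← mul_div_assoc, le_div_iff₀ (log_pos hb)] at h'
  rw [← log_le_log_iff (by positivity) (by positivity), log_pow, log_pow]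
  linarith

theorem pow_mul_pow_le_of_le_div_pow {q k N : ℕ} (hk : 2 ≤ k)
    (h : ((q : ℝ) ^ 2) ^ k ≤ ((q : ℝ) ^ 4 / ((q : ℝ) ^ 3 - q + 1)) ^ N) :
    q ^ (2 * k) * ((q ^ 3 - q + 1) * (q ^ (k - 2)) ^ 2) ^ N ≤ q ^ (2 * k * N) := by
  have hq₃ : q ≤ q ^ 3 := Nat.le_self_pow (by norm_num) q
  have hc : (0 : ℝ) < (q : ℝ) ^ 3 - q + 1 := by
    have : (q : ℝ) ≤ (q : ℝ) ^ 3 := by exact_mod_cast hq₃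
    linarith
  have hℕ : (q ^ 2) ^ k * (q ^ 3 - q + 1) ^ N ≤ (q ^ 4) ^ N := by
    rw [div_pow, le_div_iff₀ (pow_pos hc N)] at h
    exact_mod_cast (by push_cast [Nat.cast_sub hq₃]; exact h :
      (((q ^ 2) ^ k * (q ^ 3 - q + 1) ^ N : ℕ) : ℝ) ≤ (((q ^ 4) ^ N : ℕ) : ℝ))
  obtain ⟨m, rfl⟩ := Nat.exists_eq_add_of_le' hk
  generalize q ^ 3 - q + 1 = c at hℕ ⊢
  calc q ^ (2 * (m + 2)) * (c * (q ^ (m + 2 - 2)) ^ 2) ^ N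
      = (q ^ 2) ^ (m + 2) * c ^ N * (q ^ (2 * m)) ^ N := by
        rw [Nat.add_sub_cancel, ← pow_mul, ← pow_mul]; ring
    _ ≤ (q ^ 4) ^ N * (q ^ (2 * m)) ^ N := Nat.mul_le_mul_right _ hℕ
    _ = q ^ (2 * (m + 2) * N) := by rw [← pow_mul, ← pow_mul, ← pow_add]; ring_nf

theorem stmt_13_general (q k : ℕ) (hk : 2 ≤ k)
    (F : Type) [Field F] [Fintype F] (hcard : Fintype.card F = q) :
    ∃ B : Finset (Fin k → F),
      (B.card : ℤ) ≤ ⌈(k : ℝ) /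
          Real.logb ((q : ℝ) ^ 2) ((q : ℝ) ^ 4 / ((q : ℝ) ^ 3 - q + 1))⌉ * (q + 1) ∧
      (∀ u ∈ B, u ≠ 0) ∧
      (∀ u ∈ B, ∀ w ∈ B, u ≠ w → ∀ c : F, u ≠ c • w) ∧
      (∀ H : Submodule F (Fin k → F), Module.finrank F H = k - 1 →
        Submodule.span F ((B : Set (Fin k → F)) ∩ (H : Set (Fin k → F))) = H) := by
  subst hcard
  set q := Fintype.card F
  have hq : (2 : ℝ) ≤ q := by exact_mod_cast (Fintype.one_lt_card : 1 < q)
  have hb : (1 : ℝ) < (q : ℝ) ^ 2 := by nlinarith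
  have ha : (1 : ℝ) < (q : ℝ) ^ 4 / ((q : ℝ) ^ 3 - q + 1) := by
    have : 0 < ((q : ℝ) - 1) * ((q : ℝ) ^ 3 + 1) := by apply mul_pos <;> nlinarith
    rw [one_lt_div (by nlinarith)]; nlinarith
  set x := (k : ℝ) / logb ((q : ℝ) ^ 2) ((q : ℝ) ^ 4 / ((q : ℝ) ^ 3 - q + 1))
  have hN : ((⌈x⌉.toNat : ℕ) : ℤ) = ⌈x⌉ :=
    Int.toNat_of_nonneg (Int.ceil_nonneg (div_nonneg k.cast_nonneg (logb_pos hb ha).le))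
  have hxN : x ≤ ⌈x⌉.toNat := by exact_mod_cast hN ▸ Int.le_ceil x
  obtain ⟨t, ht⟩ := exists_pairs_forall_not_span_pair_inf_ker_le (K := F) (V := Fin k → F)
    (by rw [finrank_fin_fun]
        exact pow_mul_pow_le_of_le_div_pow hk (pow_le_pow_of_div_logb_le_s13 hb ha hxN))
  obtain ⟨B, hBcard, hB0, hBprop, hBspan⟩ := exists_strongBlocking_of_forall_not_inf_ker_le
    (fun i => span F {(t i).1, (t i).2}) (fun i => finrank_span_pair_le_two _ _) ht
  refine ⟨B, ?_, hB0, hBprop, by simpa using hBspan⟩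
  rw [← hN]
  exact_mod_cast hBcard

/-- For even `k`, there is a strong blocking set in `F_q^k` of at most
`⌈k / log_{q^2}(q^4/(q^3-q+1))⌉ · (q+1)` pairwise non-proportional nonzero vectors,
i.e. `m(k,q) ≤ ⌈k / log_{q^2}(q^4/(q^3-q+1))⌉ · (q+1)`. -/
theorem stmt_13 (q k : ℕ) (hq : IsPrimePow q) (hk : 2 ≤ k) (hkeven : Even k)
    (F : Type) [Field F] [Fintype F] (hcard : Fintype.card F = q) :
    ∃ B : Finset (Fin k → F),
      (B.card : ℤ) ≤ ⌈(k : ℝ) /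
          Real.logb ((q : ℝ) ^ 2) ((q : ℝ) ^ 4 / ((q : ℝ) ^ 3 - q + 1))⌉ * (q + 1) ∧
      (∀ u ∈ B, u ≠ 0) ∧
      (∀ u ∈ B, ∀ w ∈ B, u ≠ w → ∀ c : F, u ≠ c • w) ∧
      (∀ H : Submodule F (Fin k → F), Module.finrank F H = k - 1 →
        Submodule.span F ((B : Set (Fin k → F)) ∩ (H : Set (Fin k → F))) = H) :=
  stmt_13_general q k hk F hcard
end

section
/- Let q be a prime power, K ≥ 2, and let v_1, …, v_{3K−3} be any nonzero vectors of F_{q^2}^K. Then there exists a nonzero Hermitian matrix H ∈ F_{q^2}^{K×K} (i.e., H = σ(H)^T, where σ is the entrywise q-th power map) with rank H ≤ 2 such that v_i H σ(v_i)^T = 0 for every i ∈ {1,…,3K−3}. That is, every set of 3K−3 points in PG(K−1,q^2) is contained in a degenerate Hermitian variety of rank r with 1 ≤ r ≤ 2. -/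
/-!
Choose `a ≠ 0` with `v i ⬝ᵥ σ(a) = 0` for `K - 1` of the points and look for `H` of the form
`σ(a)ᵀ b + σ(b)ᵀ a`, which is Hermitian of rank at most `2`. Its form at `x` is
`α σ(β) + β σ(α)` with `α = x ⬝ᵥ σ(a)`, `β = x ⬝ᵥ σ(b)`: it vanishes at the chosen `K - 1`
points, and at each of the remaining `2K - 2` points it is an additive function of `b` with
values in the fixed field `F_q`. Hence at least `q^(2K) / q^(2K-2) = q^2` vectors `b` satisfy
all conditions, while `H = 0` only for the at most `q` multiples `b = μ a` with `σ μ = -μ`.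
-/

open Matrix Polynomial Finset

lemma AddMonoidHom.card_eq_card_range_mul_card_ker {G M : Type*} [AddCommGroup G]
    [AddCommGroup M] (f : G →+ M) : Nat.card G = Nat.card f.range * Nat.card f.ker := by
  rw [AddSubgroup.card_eq_card_quotient_mul_card_addSubgroup f.ker,
    Nat.card_congr (QuotientAddGroup.quotientKerEquivRange f).toEquiv]

lemma card_pow_eq_mul_le {L : Type*} [Field L] [Fintype L] {q : ℕ} (hq : 2 ≤ q) (c : L) :
    Nat.card {x : L // x ^ q = c * x} ≤ q := by
  classical
  have hdeg : (X ^ q - C c * X : L[X]).natDegree = q := by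
    rw [natDegree_sub_eq_left_of_natDegree_lt, natDegree_X_pow]
    exact (natDegree_C_mul_le c X).trans_lt (by rw [natDegree_X, natDegree_X_pow]; omega)
  have hne : (X ^ q - C c * X : L[X]) ≠ 0 := by
    intro h
    rw [h, natDegree_zero] at hdeg
    omega
  rw [Nat.card_eq_fintype_card, Fintype.card_subtype]
  refine (card_le_degree_of_subset_roots fun x hx => ?_).trans hdeg.le
  rw [Finset.mem_val, Finset.mem_filter] at hx
  simp [mem_roots hne, hx.2]

lemma FiniteField.exists_ringHom_apply_eq_pow {L : Type*} [Field L] [Fintype L] {q : ℕ}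
    (hq : q ∣ Fintype.card L) : ∃ σ : L →+* L, ∀ x, σ x = x ^ q := by
  obtain ⟨n, hp, hcard⟩ := FiniteField.card L (ringChar L)
  obtain ⟨k, -, rfl⟩ := (Nat.dvd_prime_pow hp).mp (hcard ▸ hq)
  have : Fact (ringChar L).Prime := ⟨hp⟩
  exact ⟨iterateFrobenius L (ringChar L) k, iterateFrobenius_def _ _⟩

section HermOuter

variable {L n : Type*} [Field L] {σ : L →+* L}

variable (σ) in
def hermOuter (a b : n → L) : Matrix n n L := vecMulVec (σ ∘ a) b + vecMulVec (σ ∘ b) a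

lemma hermOuter_add_right (a b b' : n → L) :
    hermOuter σ a (b + b') = hermOuter σ a b + hermOuter σ a b' := by
  ext j k
  simp only [hermOuter, Matrix.add_apply, vecMulVec_apply, Function.comp_apply, Pi.add_apply,
    map_add]
  ring

lemma map_hermOuter_transpose (hσ : Function.Involutive σ) (a b : n → L) :
    ((hermOuter σ a b).map σ)ᵀ = hermOuter σ a b := by
  ext j k
  simp only [hermOuter, transpose_apply, map_apply, Matrix.add_apply, vecMulVec_apply,
    Function.comp_apply, map_add, map_mul, hσ _]
  ring

lemma exists_eq_smul_of_hermOuter_eq_zero {a b : n → L} (ha : a ≠ 0)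
    (h : hermOuter σ a b = 0) : ∃ μ, σ μ = -μ ∧ b = μ • a := by
  obtain ⟨j, hj⟩ := Function.ne_iff.mp ha
  have hσj : σ (a j) ≠ 0 := (map_ne_zero σ).mpr hj
  have hentry : ∀ k, σ (a j) * b k + σ (b j) * a k = 0 := fun k => by
    simpa [hermOuter, vecMulVec_apply] using congrFun (congrFun h j) k
  set μ := -σ (b j) / σ (a j)
  have hb : b = μ • a := funext fun k => by
    rw [Pi.smul_apply, smul_eq_mul, div_mul_eq_mul_div, eq_div_iff hσj]
    linear_combination hentry k
  refine ⟨μ, ?_, hb⟩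
  have hdiag := hentry j
  rw [hb, Pi.smul_apply, smul_eq_mul, map_mul] at hdiag
  have : (σ μ + μ) * (σ (a j) * a j) = 0 := by linear_combination hdiag
  linear_combination (mul_eq_zero.mp this).resolve_right (mul_ne_zero hσj hj)

variable [Fintype n]

lemma rank_hermOuter_le (a b : n → L) : (hermOuter σ a b).rank ≤ 2 := by
  have hfac : hermOuter σ a b = (of ![σ ∘ a, σ ∘ b])ᵀ * of ![b, a] := by
    ext j k
    simp [hermOuter, mul_apply, Fin.sum_univ_two, vecMulVec_apply]
  rw [hfac]
  exact (rank_mul_le_left _ _).trans ((rank_le_card_width _).trans_eq (Fintype.card_fin 2))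

lemma dotProduct_comp_eq_apply_dotProduct (hσ : Function.Involutive σ) (x y : n → L) :
    y ⬝ᵥ σ ∘ x = σ (x ⬝ᵥ σ ∘ y) := by
  rw [RingHom.map_dotProduct, dotProduct_comm, ← Function.comp_assoc, hσ.comp_self,
    Function.id_comp]

lemma vecMul_hermOuter_dotProduct (hσ : Function.Involutive σ) (a b x : n → L) :
    x ᵥ* hermOuter σ a b ⬝ᵥ σ ∘ x
      = (x ⬝ᵥ σ ∘ a) * σ (x ⬝ᵥ σ ∘ b) + (x ⬝ᵥ σ ∘ b) * σ (x ⬝ᵥ σ ∘ a) := by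
  rw [hermOuter, vecMul_add, vecMul_vecMulVec, vecMul_vecMulVec, add_dotProduct,
    smul_dotProduct, smul_dotProduct, dotProduct_comp_eq_apply_dotProduct hσ x b,
    dotProduct_comp_eq_apply_dotProduct hσ x a, smul_eq_mul, smul_eq_mul]

variable (σ) in
def hermOuterFormHom {κ : Type*} (a : n → L) (w : κ → n → L) : (n → L) →+ (κ → L) :=
  AddMonoidHom.mk' (fun b k => w k ᵥ* hermOuter σ a b ⬝ᵥ σ ∘ w k) fun b b' => by
    ext k
    simp only [hermOuter_add_right, vecMul_add, add_dotProduct, Pi.add_apply]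

lemma exists_ne_zero_forall_dotProduct_comp_eq_zero {ι : Type*} [Fintype ι]
    (hσ : Function.Involutive σ) (w : ι → n → L) (hι : Fintype.card ι < Fintype.card n) :
    ∃ a ≠ 0, ∀ i, w i ⬝ᵥ σ ∘ a = 0 := by
  have hker : LinearMap.ker (of w).mulVecLin ≠ ⊥ :=
    LinearMap.ker_ne_bot_of_finrank_lt (by simpa using hι)
  obtain ⟨c, hc, hc0⟩ := Submodule.exists_mem_ne_zero_of_ne_bot hker
  have hσc : σ ∘ (σ ∘ c) = c := by rw [← Function.comp_assoc, hσ.comp_self, Function.id_comp]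
  refine ⟨σ ∘ c, fun h => hc0 (by rw [← hσc, h]; ext; simp), fun i => ?_⟩
  rw [hσc]
  exact congrFun hc i

end HermOuter

section Counting

variable {L n : Type*} [Field L] [Finite L] {σ : L →+* L} {q : ℕ}

lemma card_le_pow_mul_card_ker {G κ : Type*} [AddCommGroup G] [Fintype κ] (f : G →+ (κ → L))
    (hf : ∀ g k, σ (f g k) = f g k) (hfix : Nat.card {x // σ x = x} ≤ q) :
    Nat.card G ≤ q ^ Fintype.card κ * Nat.card f.ker := by
  rw [f.card_eq_card_range_mul_card_ker]
  refine Nat.mul_le_mul_right _ ?_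
  have hrange : ∀ g : f.range, ∀ k, σ (g.1 k) = g.1 k := by
    rintro ⟨_, b, rfl⟩ k
    exact hf b k
  calc Nat.card f.range ≤ Nat.card (κ → {x // σ x = x}) :=
        Nat.card_le_card_of_injective (fun g k => ⟨g.1 k, hrange g k⟩)
          fun g g' h => Subtype.ext (funext fun k => congrArg Subtype.val (congrFun h k))
    _ = Nat.card {x // σ x = x} ^ Fintype.card κ := by
        rw [Nat.card_fun, Nat.card_eq_fintype_card (α := κ)]
    _ ≤ q ^ Fintype.card κ := Nat.pow_le_pow_left hfix _

lemma sq_le_card_ker_hermOuterFormHom [Fintype n] {κ : Type*} [Fintype κ]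
    (hσ : Function.Involutive σ) (hL : Nat.card L = q ^ 2)
    (hfix : Nat.card {x // σ x = x} ≤ q) (a : n → L) (w : κ → n → L)
    (hκ : Fintype.card κ + 2 ≤ 2 * Fintype.card n) :
    q ^ 2 ≤ Nat.card (hermOuterFormHom σ a w).ker := by
  have hfixed : ∀ b k, σ (hermOuterFormHom σ a w b k) = hermOuterFormHom σ a w b k := by
    intro b k
    simp only [hermOuterFormHom, AddMonoidHom.mk'_apply, vecMul_hermOuter_dotProduct hσ,
      map_add, map_mul, hσ _]
    ring
  have hq : 0 < q := Nat.pos_of_ne_zero (by rintro rfl; exact Nat.card_pos.ne' hL)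
  obtain ⟨r, hr⟩ : ∃ r, 2 * Fintype.card n = Fintype.card κ + 2 + r :=
    ⟨_, (Nat.add_sub_of_le hκ).symm⟩
  have hcard := card_le_pow_mul_card_ker _ hfixed hfix
  rw [Nat.card_fun, hL, Nat.card_eq_fintype_card (α := n), ← pow_mul, hr, pow_add, pow_add,
    mul_assoc] at hcard
  calc q ^ 2 ≤ q ^ 2 * q ^ r := Nat.le_mul_of_pos_right _ (pow_pos hq r)
    _ ≤ _ := Nat.le_of_mul_le_mul_left hcard (pow_pos hq _)

lemma card_hermOuter_eq_zero_le (hanti : Nat.card {x // σ x = -x} ≤ q) {a : n → L}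
    (ha : a ≠ 0) : Nat.card {b : n → L | hermOuter σ a b = 0} ≤ q := by
  have hsub : {b : n → L | hermOuter σ a b = 0} ⊆ (· • a) '' {μ | σ μ = -μ} := by
    intro b hb
    obtain ⟨μ, hμ, rfl⟩ := exists_eq_smul_of_hermOuter_eq_zero ha hb
    exact ⟨μ, hμ, rfl⟩
  calc Nat.card {b : n → L | hermOuter σ a b = 0}
      ≤ Nat.card ((· • a) '' {μ : L | σ μ = -μ}) := Nat.card_mono (Set.toFinite _) hsub
    _ ≤ Nat.card {μ : L | σ μ = -μ} := Nat.card_image_le (Set.toFinite _)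
    _ ≤ q := hanti

theorem exists_hermOuter_ne_zero_forall_form_eq_zero [Fintype n] {ι : Type*} [Fintype ι]
    [DecidableEq ι] (hσ : Function.Involutive σ) (hL : Nat.card L = q ^ 2)
    (hfix : Nat.card {x // σ x = x} ≤ q) (hanti : Nat.card {x // σ x = -x} ≤ q)
    (v : ι → n → L) (s : Finset ι) (hs : #s < Fintype.card n)
    (hsc : #sᶜ + 2 ≤ 2 * Fintype.card n) :
    ∃ a b : n → L, hermOuter σ a b ≠ 0 ∧ ∀ i, v i ᵥ* hermOuter σ a b ⬝ᵥ σ ∘ v i = 0 := by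
  obtain ⟨a, ha, has⟩ := exists_ne_zero_forall_dotProduct_comp_eq_zero hσ (fun i : s => v i)
    (by rwa [Fintype.card_coe])
  set T := hermOuterFormHom σ a (fun i : ↥sᶜ => v i)
  have hker : q ^ 2 ≤ Nat.card T.ker :=
    sq_le_card_ker_hermOuterFormHom hσ hL hfix a _ (by rwa [Fintype.card_coe])
  have hq : q < q ^ 2 := by
    have : 1 < q ^ 2 := hL ▸ Finite.one_lt_card
    nlinarith
  obtain ⟨b, hbT, hb⟩ : ∃ b ∈ T.ker, hermOuter σ a b ≠ 0 := by
    by_contra! h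
    have hle := Nat.card_mono (Set.toFinite {b | hermOuter σ a b = 0}) h
    have hbad := card_hermOuter_eq_zero_le hanti ha
    change Nat.card T.ker ≤ _ at hle
    omega
  refine ⟨a, b, hb, fun i => ?_⟩
  by_cases hi : i ∈ s
  · rw [vecMul_hermOuter_dotProduct hσ, has ⟨i, hi⟩, map_zero, zero_mul, mul_zero, add_zero]
  · exact congrFun hbT ⟨i, Finset.mem_compl.mpr hi⟩

end Counting

theorem stmt_17_general (q K : ℕ) (hK : 2 ≤ K)
    (FL : Type) [Field FL] [Fintype FL] (hcard_L : Fintype.card FL = q ^ 2)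
    (v : Fin (3 * K - 3) → (Fin K → FL)) :
    ∃ H : Matrix (Fin K) (Fin K) FL,
      H ≠ 0 ∧ H = (H.map (fun a => a ^ q)).transpose ∧ H.rank ≤ 2 ∧
      ∀ i, dotProduct (Matrix.vecMul (v i) H) (fun j => v i j ^ q) = 0 := by
  have hq : 2 ≤ q := by
    have : 1 < q ^ 2 := hcard_L ▸ Fintype.one_lt_card (α := FL)
    nlinarith
  obtain ⟨σ, hσ⟩ := FiniteField.exists_ringHom_apply_eq_pow (L := FL) (q := q)
    (by rw [hcard_L]; exact dvd_pow_self q two_ne_zero)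
  have hinv : Function.Involutive σ := fun x => by
    rw [hσ, hσ, ← pow_mul, ← sq, ← hcard_L, FiniteField.pow_card]
  obtain ⟨s, -, hs⟩ :=
    Finset.exists_subset_card_eq (s := (univ : Finset (Fin (3 * K - 3)))) (n := K - 1)
      (by rw [card_univ, Fintype.card_fin]; omega)
  obtain ⟨a, b, hne, hform⟩ := exists_hermOuter_ne_zero_forall_form_eq_zero hinv
    (by rw [Nat.card_eq_fintype_card, hcard_L])
    (by simpa [hσ] using card_pow_eq_mul_le hq (1 : FL))
    (by simpa [hσ] using card_pow_eq_mul_le hq (-1 : FL)) v s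
    (by rw [hs, Fintype.card_fin]; omega)
    (by rw [card_compl, Fintype.card_fin, Fintype.card_fin]; omega)
  refine ⟨hermOuter σ a b, hne, ?_, rank_hermOuter_le a b, fun i => ?_⟩
  · rw [show (fun x : FL => x ^ q) = σ from funext fun x => (hσ x).symm,
      map_hermOuter_transpose hinv]
  · simp only [← hσ]
    exact hform i

/-- Every set of `3K-3` points in `PG(K-1,q^2)` is contained in a degenerate Hermitian variety
of rank at most `2`: for any nonzero vectors `v_1, …, v_{3K-3}` of `F_{q^2}^K` there is a
nonzero Hermitian matrix `H` of rank at most `2` with `v_i H σ(v_i)^T = 0` for all `i`. -/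
theorem stmt_17 (q K : ℕ) (hq : IsPrimePow q) (hK : 2 ≤ K)
    (FL : Type) [Field FL] [Fintype FL] (hcard_L : Fintype.card FL = q ^ 2)
    (v : Fin (3 * K - 3) → (Fin K → FL)) (hv : ∀ i, v i ≠ 0) :
    ∃ H : Matrix (Fin K) (Fin K) FL,
      H ≠ 0 ∧ H = (H.map (fun a => a ^ q)).transpose ∧ H.rank ≤ 2 ∧
      ∀ i, dotProduct (Matrix.vecMul (v i) H) (fun j => v i j ^ q) = 0 :=
  stmt_17_general q K hK FL hcard_L v
end

section
/- Let h ≥ 1 and let v_1, v_2, v_3 be pairwise non-proportional nonzero vectors of F_{2^h}^2 (three distinct points of the projective line PG(1,2^h)). Then ⟨v_1⟩_{F_{2^h}} ∪ ⟨v_2⟩_{F_{2^h}} ∪ ⟨v_3⟩_{F_{2^h}} is an F_2-vectorial strong blocking set in F_{2^h}^2; that is, any three distinct points of PG(1,2^h) form a 2-outer strong blocking set. -/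
open Module Submodule LinearMap

section Aux

variable {F2 FL : Type} [Field F2] [Field FL] [Algebra F2 FL] [Fintype F2] [Fintype FL]

/-- In a field of two elements, every element is 0 or 1. -/
lemma aux_zero_or_one (hcard_2 : Fintype.card F2 = 2) (x : F2) : x = 0 ∨ x = 1 := by
  classical
  by_contra hx
  push_neg at hx
  have h3 : ({0, 1, x} : Finset F2).card = 3 := by
    rw [Finset.card_insert_of_notMem (by simp [(zero_ne_one (α := F2)), Ne.symm hx.1]),
      Finset.card_insert_of_notMem (by simp [Ne.symm hx.2]), Finset.card_singleton]
  have := Finset.card_le_univ ({0, 1, x} : Finset F2)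
  rw [h3, hcard_2] at this
  omega

lemma aux_char2 (hcard_2 : Fintype.card F2 = 2) : (1 : F2) + 1 = 0 := by
  rcases aux_zero_or_one hcard_2 ((1 : F2) + 1) with h | h
  · exact h
  · exact absurd (add_eq_right.mp h) one_ne_zero

end Aux

set_option maxHeartbeats 1000000 in
/-- Any three pairwise non-proportional nonzero vectors of `F_{2^h}^2` (three distinct points
of `PG(1,2^h)`) span lines whose union is an `F_2`-vectorial strong blocking set, i.e. any three
distinct points of the projective line over `F_{2^h}` form a `2`-outer strong blocking set. -/
theorem stmt_18 (h : ℕ) (hh : 1 ≤ h)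
    (F2 FL : Type) [Field F2] [Field FL] [Algebra F2 FL] [Fintype F2] [Fintype FL]
    (hcard_2 : Fintype.card F2 = 2) (hcard_L : Fintype.card FL = 2 ^ h)
    (v : Fin 3 → (Fin 2 → FL)) (hv : ∀ i, v i ≠ 0)
    (hnonprop : ∀ i j : Fin 3, i ≠ j → ∀ c : FL, v i ≠ c • v j) :
    ∀ H : Submodule F2 (Fin 2 → FL), Module.finrank F2 H = 2 * h - 1 →
      Submodule.span F2 ((⋃ i, (Submodule.span FL {v i} : Set (Fin 2 → FL)))
        ∩ (H : Set (Fin 2 → FL))) = H := by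
  intro H hH
  have hone := aux_zero_or_one hcard_2
  have h2 : (1 : F2) + 1 = 0 := aux_char2 hcard_2
  -- finrank computations
  have hfrFL : finrank F2 FL = h := by
    have hc := card_eq_pow_finrank (K := F2) (V := FL)
    rw [hcard_2, hcard_L] at hc
    exact (Nat.pow_right_injective le_rfl hc.symm)
  have hfr2 : finrank FL (Fin 2 → FL) = 2 := by
    rw [Module.finrank_pi]; simp
  have hfrV : finrank F2 (Fin 2 → FL) = 2 * h := by
    rw [← Module.finrank_mul_finrank F2 FL (Fin 2 → FL), hfrFL, hfr2]; ring
  -- linear independence of v 0, v 1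
  have hind : ∀ s t : FL, s • v 0 + t • v 1 = 0 → s = 0 ∧ t = 0 := by
    intro s t hst
    by_cases hs : s = 0
    · subst hs
      rw [zero_smul, zero_add] at hst
      rcases smul_eq_zero.mp hst with ht | hv1
      · exact ⟨rfl, ht⟩
      · exact absurd hv1 (hv 1)
    · exfalso
      apply hnonprop 0 1 (by decide) (-(s⁻¹ * t))
      have : s • v 0 = -(t • v 1) := by
        rw [eq_neg_iff_add_eq_zero]; exact hst
      calc v 0 = (s⁻¹ * s) • v 0 := by rw [inv_mul_cancel₀ hs, one_smul]
        _ = s⁻¹ • (s • v 0) := by rw [mul_smul]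
        _ = s⁻¹ • (-(t • v 1)) := by rw [this]
        _ = -(s⁻¹ * t) • v 1 := by rw [smul_neg, ← mul_smul, neg_smul]
  have hli : LinearIndependent FL ![v 0, v 1] :=
    LinearIndependent.pair_iff.mpr (fun s t hst => hind s t hst)
  let B : Basis (Fin 2) FL (Fin 2 → FL) :=
    basisOfLinearIndependentOfCardEqFinrank hli (by rw [hfr2]; simp)
  have hB : ∀ i, B i = ![v 0, v 1] i := fun i => by
    simp [B, coe_basisOfLinearIndependentOfCardEqFinrank]
  -- coordinates of v 2
  obtain ⟨a, b, hab⟩ : ∃ a b : FL, v 2 = a • v 0 + b • v 1 := by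
    refine ⟨B.repr (v 2) 0, B.repr (v 2) 1, ?_⟩
    have := B.sum_repr (v 2)
    rw [Fin.sum_univ_two, hB 0, hB 1] at this
    simpa using this.symm
  have ha : a ≠ 0 := by
    intro h0
    exact hnonprop 2 1 (by decide) b (by rw [hab, h0, zero_smul, zero_add])
  have hb : b ≠ 0 := by
    intro h0
    exact hnonprop 2 0 (by decide) a (by rw [hab, h0, zero_smul, add_zero])
  set w1 : Fin 2 → FL := a • v 0 with hw1def
  set w2 : Fin 2 → FL := b • v 1 with hw2def
  have hw3 : v 2 = w1 + w2 := hab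
  have hw : ∀ s t : FL, s • w1 + t • w2 = 0 → s = 0 ∧ t = 0 := by
    intro s t hst
    rw [hw1def, hw2def, ← mul_smul, ← mul_smul] at hst
    obtain ⟨h1, h2'⟩ := hind _ _ hst
    exact ⟨by rcases mul_eq_zero.mp h1 with h | h; exact h; exact absurd h ha,
      by rcases mul_eq_zero.mp h2' with h | h; exact h; exact absurd h hb⟩
  have hw1 : w1 ≠ 0 := by
    rw [hw1def]; intro h0
    rcases smul_eq_zero.mp h0 with h | h
    · exact ha h
    · exact hv 0 h
  have hw2 : w2 ≠ 0 := by
    rw [hw2def]; intro h0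
    rcases smul_eq_zero.mp h0 with h | h
    · exact hb h
    · exact hv 1 h
  -- the quotient and the functional
  set φ : (Fin 2 → FL) →ₗ[F2] ((Fin 2 → FL) ⧸ H) := H.mkQ with hφdef
  have hmem : ∀ x : Fin 2 → FL, x ∈ H ↔ φ x = 0 := fun x => by
    rw [hφdef, Submodule.mkQ_apply, Submodule.Quotient.mk_eq_zero]
  have hQ1 : finrank F2 ((Fin 2 → FL) ⧸ H) = 1 := by
    have := Submodule.finrank_quotient_add_finrank H
    rw [hH, hfrV] at this
    omega
  have hq2 : ∀ x y : (Fin 2 → FL) ⧸ H, x ≠ 0 → y ≠ 0 → x = y := by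
    obtain ⟨q, hq0, hq⟩ := finrank_eq_one_iff'.mp hQ1
    intro x y hx hy
    obtain ⟨cx, hcx⟩ := hq x
    obtain ⟨cy, hcy⟩ := hq y
    rcases hone cx with h | h
    · exact absurd (by rw [← hcx, h, zero_smul]) hx
    · rcases hone cy with h' | h'
      · exact absurd (by rw [← hcy, h', zero_smul]) hy
      · rw [← hcx, ← hcy, h, h']
  -- the three parametrizations
  set m1 : FL →ₗ[F2] (Fin 2 → FL) :=
    (LinearMap.toSpanSingleton FL (Fin 2 → FL) w1).restrictScalars F2 with hm1def
  set m2 : FL →ₗ[F2] (Fin 2 → FL) :=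
    (LinearMap.toSpanSingleton FL (Fin 2 → FL) w2).restrictScalars F2 with hm2def
  set m3 : FL →ₗ[F2] (Fin 2 → FL) :=
    (LinearMap.toSpanSingleton FL (Fin 2 → FL) (v 2)).restrictScalars F2 with hm3def
  have hm1 : ∀ c : FL, m1 c = c • w1 := fun c => rfl
  have hm2 : ∀ c : FL, m2 c = c • w2 := fun c => rfl
  have hm3 : ∀ c : FL, m3 c = c • v 2 := fun c => rfl
  set g1 : FL →ₗ[F2] ((Fin 2 → FL) ⧸ H) := φ ∘ₗ m1 with hg1def
  set g2 : FL →ₗ[F2] ((Fin 2 → FL) ⧸ H) := φ ∘ₗ m2 with hg2def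
  set g3 : FL →ₗ[F2] ((Fin 2 → FL) ⧸ H) := φ ∘ₗ m3 with hg3def
  have hgadd : ∀ c : FL, g3 c = g1 c + g2 c := by
    intro c
    show φ (m3 c) = φ (m1 c) + φ (m2 c)
    rw [hm1, hm2, hm3, hw3, smul_add, map_add]
  -- injectivity
  have hinj : ∀ (u : Fin 2 → FL), u ≠ 0 → Function.Injective
      ((LinearMap.toSpanSingleton FL (Fin 2 → FL) u).restrictScalars F2) := by
    intro u hu c d hcd
    have : c • u = d • u := hcd
    have : (c - d) • u = 0 := by rw [sub_smul, this, sub_self]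
    rcases smul_eq_zero.mp this with h | h
    · exact sub_eq_zero.mp h
    · exact absurd h hu
  have hinj1 : Function.Injective m1 := hinj w1 hw1
  have hinj2 : Function.Injective m2 := hinj w2 hw2
  have hinj3 : Function.Injective m3 := hinj (v 2) (hv 2)
  -- the target span
  set S := Submodule.span F2 ((⋃ i, (Submodule.span FL {v i} : Set (Fin 2 → FL)))
        ∩ (H : Set (Fin 2 → FL))) with hSdef
  have hSH : S ≤ H := Submodule.span_le.mpr Set.inter_subset_right
  -- membership criteria into S
  have hU : ∀ (i : Fin 3) (x : Fin 2 → FL), (∃ c : FL, c • v i = x) → x ∈ H → x ∈ S := by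
    intro i x ⟨c, hc⟩ hxH
    apply Submodule.subset_span
    refine ⟨Set.mem_iUnion.mpr ⟨i, ?_⟩, hxH⟩
    exact (Submodule.mem_span_singleton (R := FL)).mpr ⟨c, hc⟩
  have hm1S : ∀ c : FL, m1 c ∈ H → m1 c ∈ S := by
    intro c hcH
    exact hU 0 (m1 c) ⟨c * a, by rw [hm1, hw1def, mul_smul]⟩ hcH
  have hm2S : ∀ c : FL, m2 c ∈ H → m2 c ∈ S := by
    intro c hcH
    exact hU 1 (m2 c) ⟨c * b, by rw [hm2, hw2def, mul_smul]⟩ hcH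
  have hm3S : ∀ c : FL, m3 c ∈ H → m3 c ∈ S := by
    intro c hcH
    exact hU 2 (m3 c) ⟨c, by rw [hm3]⟩ hcH
  -- key submodules
  set A : Submodule F2 (Fin 2 → FL) := (LinearMap.ker g1).map m1 with hAdef
  set Bs : Submodule F2 (Fin 2 → FL) := (LinearMap.ker g2).map m2 with hBdef
  set A3 : Submodule F2 (Fin 2 → FL) := (LinearMap.ker g3).map m3 with hA3def
  have hA_le : A ≤ S := by
    rintro x ⟨c, hc, rfl⟩
    exact hm1S c ((hmem _).mpr (LinearMap.mem_ker.mp hc))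
  have hB_le : Bs ≤ S := by
    rintro x ⟨c, hc, rfl⟩
    exact hm2S c ((hmem _).mpr (LinearMap.mem_ker.mp hc))
  have hA3_le : A3 ≤ S := by
    rintro x ⟨c, hc, rfl⟩
    exact hm3S c ((hmem _).mpr (LinearMap.mem_ker.mp hc))
  -- finranks of mapped submodules
  have hfrmap : ∀ (u : Fin 2 → FL) (hu : u ≠ 0) (p : Submodule F2 FL),
      finrank F2 (p.map ((LinearMap.toSpanSingleton FL (Fin 2 → FL) u).restrictScalars F2))
        = finrank F2 p := by
    intro u hu p
    exact (LinearEquiv.finrank_eq (Submodule.equivMapOfInjective _ (hinj u hu) p)).symm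
  -- finrank of kernels
  have hker : ∀ g : FL →ₗ[F2] ((Fin 2 → FL) ⧸ H), g ≠ 0 → finrank F2 (LinearMap.ker g) = h - 1 := by
    intro g hg
    have hrn := LinearMap.finrank_range_add_finrank_ker g
    rw [hfrFL] at hrn
    have hr1 : finrank F2 (LinearMap.range g) = 1 := by
      have hle : finrank F2 (LinearMap.range g) ≤ 1 := by
        rw [← hQ1]; exact Submodule.finrank_le _
      have hne : LinearMap.range g ≠ ⊥ := by
        intro hbot
        exact hg (LinearMap.range_eq_bot.mp hbot)
      have : finrank F2 (LinearMap.range g) ≠ 0 := by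
        intro h0
        exact hne (Submodule.finrank_eq_zero.mp h0)
      omega
    omega
  -- disjointness
  have hd12 : ∀ x : Fin 2 → FL, x ∈ A → x ∈ Bs → x = 0 := by
    rintro x ⟨c, _, rfl⟩ ⟨d, _, hdc⟩
    have : c • w1 + (-d) • w2 = 0 := by
      rw [neg_smul, ← hm1 c, ← hm2 d, ← hdc]; abel
    rw [hm1, (hw c (-d) this).1, zero_smul]
  -- main dimension bound
  suffices hdim : 2 * h - 1 ≤ finrank F2 S by
    refine Submodule.eq_of_le_of_finrank_le hSH ?_
    rw [hH]; exact hdim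
  by_cases hg1 : g1 = 0
  · by_cases hg2 : g2 = 0
    · -- impossible: H = ⊤
      exfalso
      have hHtop : ∀ x : Fin 2 → FL, x ∈ H := by
        intro x
        have hx := B.sum_repr x
        rw [Fin.sum_univ_two, hB 0, hB 1] at hx
        have hx' : x = (B.repr x 0 * a⁻¹) • w1 + (B.repr x 1 * b⁻¹) • w2 := by
          rw [hw1def, hw2def, ← mul_smul, ← mul_smul, mul_assoc, inv_mul_cancel₀ ha,
            mul_one, mul_assoc, inv_mul_cancel₀ hb, mul_one]
          simpa using hx.symm
        rw [hx']
        apply H.add_mem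
        · exact (hmem _).mpr (by show g1 (B.repr x 0 * a⁻¹) = 0; simp [hg1])
        · exact (hmem _).mpr (by show g2 (B.repr x 1 * b⁻¹) = 0; simp [hg2])
      have : H = ⊤ := by
        rw [eq_top_iff]; intro x _; exact hHtop x
      rw [this, finrank_top, hfrV] at hH
      omega
    · -- W = range m1 ⊔ Bs
      have hR1_le : LinearMap.range m1 ≤ S := by
        rintro x ⟨c, rfl⟩
        apply hm1S
        exact (hmem _).mpr (by show g1 c = 0; simp [hg1])
      have hWle : LinearMap.range m1 ⊔ Bs ≤ S := sup_le hR1_le hB_le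
      have hinf : LinearMap.range m1 ⊓ Bs = ⊥ := by
        rw [eq_bot_iff]
        rintro x ⟨⟨c, rfl⟩, hxB⟩
        have : m1 c ∈ A := ⟨c, by simp [LinearMap.mem_ker, hg1], rfl⟩
        exact (Submodule.mem_bot F2).mpr (hd12 _ this hxB)
      have hsum := Submodule.finrank_sup_add_finrank_inf_eq (LinearMap.range m1) Bs
      rw [hinf, finrank_bot, add_zero] at hsum
      have hr1 : finrank F2 (LinearMap.range m1) = h := by
        rw [LinearMap.range_eq_map, hm1def, hfrmap w1 hw1, finrank_top, hfrFL]
      have hrB : finrank F2 Bs = h - 1 := by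
        rw [hBdef, hm2def, hfrmap w2 hw2]; exact hker g2 hg2
      have hmono := Submodule.finrank_mono hWle
      omega
  · by_cases hg2 : g2 = 0
    · -- W = A ⊔ range m2
      have hR2_le : LinearMap.range m2 ≤ S := by
        rintro x ⟨c, rfl⟩
        apply hm2S
        exact (hmem _).mpr (by show g2 c = 0; simp [hg2])
      have hWle : A ⊔ LinearMap.range m2 ≤ S := sup_le hA_le hR2_le
      have hinf : A ⊓ LinearMap.range m2 = ⊥ := by
        rw [eq_bot_iff]
        rintro x ⟨hxA, ⟨c, rfl⟩⟩
        have : m2 c ∈ Bs := ⟨c, by simp [LinearMap.mem_ker, hg2], rfl⟩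
        exact (Submodule.mem_bot F2).mpr (hd12 _ hxA this)
      have hsum := Submodule.finrank_sup_add_finrank_inf_eq A (LinearMap.range m2)
      rw [hinf, finrank_bot, add_zero] at hsum
      have hr2 : finrank F2 (LinearMap.range m2) = h := by
        rw [LinearMap.range_eq_map, hm2def, hfrmap w2 hw2, finrank_top, hfrFL]
      have hrA : finrank F2 A = h - 1 := by
        rw [hAdef, hm1def, hfrmap w1 hw1]; exact hker g1 hg1
      have hmono := Submodule.finrank_mono hWle
      omega
    · by_cases hg3 : g3 = 0
      · -- W = A ⊔ range m3
        have hR3_le : LinearMap.range m3 ≤ S := by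
          rintro x ⟨c, rfl⟩
          apply hm3S
          exact (hmem _).mpr (by show g3 c = 0; simp [hg3])
        have hWle : A ⊔ LinearMap.range m3 ≤ S := sup_le hA_le hR3_le
        have hinf : A ⊓ LinearMap.range m3 = ⊥ := by
          rw [eq_bot_iff]
          rintro x ⟨⟨c, _, rfl⟩, ⟨d, hd⟩⟩
          have hx : m1 c = d • v 2 := by rw [← hm3]; exact hd.symm
          have : (c - d) • w1 + (-d) • w2 = 0 := by
            have h1 : c • w1 = d • w1 + d • w2 := by
              rw [← hm1]; rw [hx, hw3, smul_add]
            rw [sub_smul, neg_smul]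
            rw [h1]; abel
          obtain ⟨hcd, hd0⟩ := hw _ _ this
          have hd0' : d = 0 := neg_eq_zero.mp hd0
          have hc0 : c = 0 := by
            have h' := sub_eq_zero.mp hcd
            rw [h', hd0']
          simp [hm1, hc0]
        have hsum := Submodule.finrank_sup_add_finrank_inf_eq A (LinearMap.range m3)
        rw [hinf, finrank_bot, add_zero] at hsum
        have hr3 : finrank F2 (LinearMap.range m3) = h := by
          rw [LinearMap.range_eq_map, hm3def, hfrmap (v 2) (hv 2), finrank_top, hfrFL]
        have hrA : finrank F2 A = h - 1 := by
          rw [hAdef, hm1def, hfrmap w1 hw1]; exact hker g1 hg1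
        have hmono := Submodule.finrank_mono hWle
        omega
      · -- all nonzero: find c0 with g3 c0 = 0, g1 c0 ≠ 0
        obtain ⟨c0, hc03, hc01⟩ : ∃ c : FL, g3 c = 0 ∧ g1 c ≠ 0 := by
          by_contra hcon
          push_neg at hcon
          have hg13 : ∀ c : FL, g1 c = g3 c := by
            intro c
            rcases eq_or_ne (g3 c) 0 with h3 | h3
            · rw [h3]; exact hcon c h3
            · refine hq2 _ _ ?_ h3
              intro h1
              obtain ⟨y, hy⟩ := DFunLike.ne_iff.mp hg1
              rw [LinearMap.zero_apply] at hy
              have hy3 : g3 y ≠ 0 := fun hz => hy (hcon y hz)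
              have hcy : g3 (c + y) = 0 := by
                rw [map_add, hq2 (g3 c) (g3 y) h3 hy3]
                calc g3 y + g3 y = ((1 : F2) + 1) • g3 y := by
                      rw [add_smul, one_smul]
                  _ = 0 := by rw [h2, zero_smul]
              have := hcon (c + y) hcy
              rw [map_add, h1, zero_add] at this
              exact hy this
          apply hg2
          ext c
          have := hgadd c
          rw [← hg13 c] at this
          rw [LinearMap.zero_apply]
          exact (left_eq_add.mp this)
        have hc0ne : c0 ≠ 0 := by
          intro h0
          exact hc01 (by rw [h0, map_zero])
        set z : Fin 2 → FL := c0 • v 2 with hzdef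
        have hz : z ≠ 0 := by
          rw [hzdef]; intro h0
          rcases smul_eq_zero.mp h0 with hc | hv2
          · exact hc0ne hc
          · exact hv 2 hv2
        set C : Submodule F2 (Fin 2 → FL) := Submodule.span F2 {z} with hCdef
        have hC_le : C ≤ S := by
          rw [hCdef, Submodule.span_le, Set.singleton_subset_iff]
          apply hU 2 z ⟨c0, rfl⟩
          refine (hmem _).mpr ?_
          have : φ z = g3 c0 := rfl
          rw [this, hc03]
        have hWle : (A ⊔ Bs) ⊔ C ≤ S := sup_le (sup_le hA_le hB_le) hC_le
        have hinfAB : A ⊓ Bs = ⊥ := by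
          rw [eq_bot_iff]
          rintro x ⟨hxA, hxB⟩
          exact (Submodule.mem_bot F2).mpr (hd12 x hxA hxB)
        have hinfC : (A ⊔ Bs) ⊓ C = ⊥ := by
          rw [eq_bot_iff]
          rintro x ⟨hxAB, hxC⟩
          obtain ⟨ε, hε⟩ := (Submodule.mem_span_singleton (R := F2)).mp hxC
          rcases hone ε with h0 | h1
          · rw [← hε, h0, zero_smul]; exact (Submodule.mem_bot F2).mpr rfl
          · exfalso
            rw [h1, one_smul] at hε
            subst hε
            obtain ⟨p, hp, q, hq, hpq⟩ := Submodule.mem_sup.mp hxAB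
            obtain ⟨c, hc, rfl⟩ := hp
            obtain ⟨d, hd, rfl⟩ := hq
            have hz2 : z = c0 • w1 + c0 • w2 := by rw [hzdef, hw3, smul_add]
            have : (c - c0) • w1 + (d - c0) • w2 = 0 := by
              rw [sub_smul, sub_smul]
              have : c • w1 + d • w2 = c0 • w1 + c0 • w2 := by
                rw [← hm1, ← hm2, hpq, hz2]
              rw [← sub_eq_zero] at this
              calc c • w1 - c0 • w1 + (d • w2 - c0 • w2)
                  = c • w1 + d • w2 - (c0 • w1 + c0 • w2) := by abel
                _ = 0 := this
            have hcc0 : c = c0 := sub_eq_zero.mp (hw _ _ this).1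
            have hg1c : g1 c = 0 := LinearMap.mem_ker.mp hc
            rw [hcc0] at hg1c
            exact hc01 hg1c
        have hsum1 := Submodule.finrank_sup_add_finrank_inf_eq A Bs
        rw [hinfAB, finrank_bot, add_zero] at hsum1
        have hsum2 := Submodule.finrank_sup_add_finrank_inf_eq (A ⊔ Bs) C
        rw [hinfC, finrank_bot, add_zero] at hsum2
        have hrA : finrank F2 A = h - 1 := by
          rw [hAdef, hm1def, hfrmap w1 hw1]; exact hker g1 hg1
        have hrB : finrank F2 Bs = h - 1 := by
          rw [hBdef, hm2def, hfrmap w2 hw2]; exact hker g2 hg2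
        have hrC : finrank F2 C = 1 := finrank_span_singleton hz
        have hmono := Submodule.finrank_mono hWle
        omega
end
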